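/- arXiv:1701.06794 — 10 statements merged into one kernel-verified Lean document; each statement's English description precedes it below -/
import Mathlib

section
/- Let I = a + p^N ℤ_p and I' = a' + p^{N'} ℤ_p be bounded intervals of ℚ_p (a, a' ∈ ℚ_p, N, N' ∈ ℤ), and set v = val(I) and v' = val(I'). Then, with operations taken elementwise on subsets of ℚ_p: I + I' = (a + a') + p^{min(N,N')} ℤ_p; I − I' = (a − a') + p^{min(N,N')} ℤ_p; I × I' = a·a' + p^{min(v+N', N+v')} ℤ_p; and, if 0 ∉ I', I ÷ I' = (a/a') + p^{min(v+N'−2v', N−v')} ℤ_p. -/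
open Pointwise

private lemma padic_norm_eq_of_close {p : ℕ} [Fact p.Prime] {x y : ℚ_[p]}
    (h : ‖x - y‖ < ‖y‖) : ‖x‖ = ‖y‖ := by
  have hx : x = (x - y) + y := by ring
  rw [hx, Padic.add_eq_max_of_ne (ne_of_lt h), max_eq_right h.le]

/-- Arithmetic of bounded intervals of `ℚ_p`: explicit formulas for the elementwise
sum, difference, product and quotient of two closed balls `a + p^N ℤ_p` and
`a' + p^{N'} ℤ_p`, in terms of their valuations `v`, `v'`. -/
theorem stmt5 {p : ℕ} [Fact p.Prime] (a a' : ℚ_[p]) (N N' : ℤ)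
    (I I' : Set ℚ_[p])
    (hI : I = {x : ℚ_[p] | ‖x - a‖ ≤ (p : ℝ) ^ (-N)})
    (hI' : I' = {x : ℚ_[p] | ‖x - a'‖ ≤ (p : ℝ) ^ (-N')})
    (v v' : ℤ)
    (hv0 : (0 : ℚ_[p]) ∈ I → v = N)
    (hv1 : (0 : ℚ_[p]) ∉ I → v = a.valuation)
    (hv'0 : (0 : ℚ_[p]) ∈ I' → v' = N')
    (hv'1 : (0 : ℚ_[p]) ∉ I' → v' = a'.valuation) :
    I + I' = {x : ℚ_[p] | ‖x - (a + a')‖ ≤ (p : ℝ) ^ (-(min N N'))} ∧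
    I - I' = {x : ℚ_[p] | ‖x - (a - a')‖ ≤ (p : ℝ) ^ (-(min N N'))} ∧
    I * I' = {x : ℚ_[p] | ‖x - a * a'‖ ≤ (p : ℝ) ^ (-(min (v + N') (N + v')))} ∧
    ((0 : ℚ_[p]) ∉ I' →
      I / I' = {x : ℚ_[p] | ‖x - a / a'‖ ≤ (p : ℝ) ^ (-(min (v + N' - 2 * v') (N - v')))}) := by
  have hp1 : (1 : ℝ) < (p : ℝ) := by exact_mod_cast (Fact.out : p.Prime).one_lt
  have hppos : (0 : ℝ) < (p : ℝ) := lt_trans one_pos hp1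
  have hpow_pos : ∀ m : ℤ, (0 : ℝ) < (p : ℝ) ^ m := fun m => zpow_pos hppos m
  have hmono : ∀ {m n : ℤ}, m ≤ n → (p : ℝ) ^ m ≤ (p : ℝ) ^ n :=
    fun h => zpow_le_zpow_right₀ hp1.le h
  have hzadd : ∀ m n : ℤ, (p : ℝ) ^ (m + n) = (p : ℝ) ^ m * (p : ℝ) ^ n :=
    fun m n => zpow_add₀ (ne_of_gt hppos) m n
  subst hI; subst hI'
  -- membership of 0 rewritten
  have hmem0 : ∀ (c : ℚ_[p]) (M : ℤ),
      ((0 : ℚ_[p]) ∈ {x : ℚ_[p] | ‖x - c‖ ≤ (p : ℝ) ^ (-M)}) ↔ ‖c‖ ≤ (p : ℝ) ^ (-M) := by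
    intro c M
    simp [Set.mem_setOf_eq, zero_sub, norm_neg]
  have haI : a ∈ {x : ℚ_[p] | ‖x - a‖ ≤ (p : ℝ) ^ (-N)} := by
    simp only [Set.mem_setOf_eq, sub_self, norm_zero]; positivity
  have haI' : a' ∈ {x : ℚ_[p] | ‖x - a'‖ ≤ (p : ℝ) ^ (-N')} := by
    simp only [Set.mem_setOf_eq, sub_self, norm_zero]; positivity
  -- bounds from valuations
  have hvN : v ≤ N := by
    by_cases h0 : (0 : ℚ_[p]) ∈ {x : ℚ_[p] | ‖x - a‖ ≤ (p : ℝ) ^ (-N)}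
    · rw [hv0 h0]
    · have hv := hv1 h0
      have hlt : (p : ℝ) ^ (-N) < ‖a‖ := lt_of_not_ge (fun h => h0 ((hmem0 a N).mpr h))
      have ha0 : a ≠ 0 := by
        intro h; rw [h, norm_zero] at hlt; exact absurd hlt (not_lt_of_ge (hpow_pos _).le)
      rw [Padic.norm_eq_zpow_neg_valuation ha0, ← hv] at hlt
      have := (zpow_lt_zpow_iff_right₀ hp1).mp hlt
      omega
  have hv'N' : v' ≤ N' := by
    by_cases h0 : (0 : ℚ_[p]) ∈ {x : ℚ_[p] | ‖x - a'‖ ≤ (p : ℝ) ^ (-N')}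
    · rw [hv'0 h0]
    · have hv := hv'1 h0
      have hlt : (p : ℝ) ^ (-N') < ‖a'‖ := lt_of_not_ge (fun h => h0 ((hmem0 a' N').mpr h))
      have ha0 : a' ≠ 0 := by
        intro h; rw [h, norm_zero] at hlt; exact absurd hlt (not_lt_of_ge (hpow_pos _).le)
      rw [Padic.norm_eq_zpow_neg_valuation ha0, ← hv] at hlt
      have := (zpow_lt_zpow_iff_right₀ hp1).mp hlt
      omega
  have hb : ∀ x : ℚ_[p], ‖x - a‖ ≤ (p : ℝ) ^ (-N) → ‖x‖ ≤ (p : ℝ) ^ (-v) := by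
    intro x hx
    by_cases h0 : (0 : ℚ_[p]) ∈ {x : ℚ_[p] | ‖x - a‖ ≤ (p : ℝ) ^ (-N)}
    · have hvv := hv0 h0
      have ha : ‖a‖ ≤ (p : ℝ) ^ (-N) := (hmem0 a N).mp h0
      have : x = (x - a) + a := by ring
      rw [this, hvv]
      exact le_trans (Padic.nonarchimedean _ _) (max_le hx ha)
    · have hvv := hv1 h0
      have hlt : (p : ℝ) ^ (-N) < ‖a‖ := lt_of_not_ge (fun h => h0 ((hmem0 a N).mpr h))
      have ha0 : a ≠ 0 := by
        intro h; rw [h, norm_zero] at hlt; exact absurd hlt (not_lt_of_ge (hpow_pos _).le)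
      have heq : ‖x‖ = ‖a‖ := padic_norm_eq_of_close (lt_of_le_of_lt hx hlt)
      rw [heq, Padic.norm_eq_zpow_neg_valuation ha0, ← hvv]
  have hb' : ∀ y : ℚ_[p], ‖y - a'‖ ≤ (p : ℝ) ^ (-N') → ‖y‖ ≤ (p : ℝ) ^ (-v') := by
    intro y hy
    by_cases h0 : (0 : ℚ_[p]) ∈ {x : ℚ_[p] | ‖x - a'‖ ≤ (p : ℝ) ^ (-N')}
    · have hvv := hv'0 h0
      have ha : ‖a'‖ ≤ (p : ℝ) ^ (-N') := (hmem0 a' N').mp h0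
      have : y = (y - a') + a' := by ring
      rw [this, hvv]
      exact le_trans (Padic.nonarchimedean _ _) (max_le hy ha)
    · have hvv := hv'1 h0
      have hlt : (p : ℝ) ^ (-N') < ‖a'‖ := lt_of_not_ge (fun h => h0 ((hmem0 a' N').mpr h))
      have ha0 : a' ≠ 0 := by
        intro h; rw [h, norm_zero] at hlt; exact absurd hlt (not_lt_of_ge (hpow_pos _).le)
      have heq : ‖y‖ = ‖a'‖ := padic_norm_eq_of_close (lt_of_le_of_lt hy hlt)
      rw [heq, Padic.norm_eq_zpow_neg_valuation ha0, ← hvv]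
  -- facts when 0 ∉ I'
  have hI'facts : (0 : ℚ_[p]) ∉ {x : ℚ_[p] | ‖x - a'‖ ≤ (p : ℝ) ^ (-N')} →
      a' ≠ 0 ∧ ‖a'‖ = (p : ℝ) ^ (-v') ∧ v' < N' ∧
      ∀ y : ℚ_[p], ‖y - a'‖ ≤ (p : ℝ) ^ (-N') → ‖y‖ = (p : ℝ) ^ (-v') := by
    intro h0
    have hvv := hv'1 h0
    have hlt : (p : ℝ) ^ (-N') < ‖a'‖ := lt_of_not_ge (fun h => h0 ((hmem0 a' N').mpr h))
    have ha0 : a' ≠ 0 := by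
      intro h; rw [h, norm_zero] at hlt; exact absurd hlt (not_lt_of_ge (hpow_pos _).le)
    have hna : ‖a'‖ = (p : ℝ) ^ (-v') := by rw [Padic.norm_eq_zpow_neg_valuation ha0, ← hvv]
    have hvlt : v' < N' := by
      rw [hna] at hlt
      have := (zpow_lt_zpow_iff_right₀ hp1).mp hlt
      omega
    refine ⟨ha0, hna, hvlt, fun y hy => ?_⟩
    rw [padic_norm_eq_of_close (lt_of_le_of_lt hy hlt), hna]
  have hIfacts : (0 : ℚ_[p]) ∉ {x : ℚ_[p] | ‖x - a‖ ≤ (p : ℝ) ^ (-N)} →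
      a ≠ 0 ∧ ‖a‖ = (p : ℝ) ^ (-v) := by
    intro h0
    have hvv := hv1 h0
    have hlt : (p : ℝ) ^ (-N) < ‖a‖ := lt_of_not_ge (fun h => h0 ((hmem0 a N).mpr h))
    have ha0 : a ≠ 0 := by
      intro h; rw [h, norm_zero] at hlt; exact absurd hlt (not_lt_of_ge (hpow_pos _).le)
    exact ⟨ha0, by rw [Padic.norm_eq_zpow_neg_valuation ha0, ← hvv]⟩
  refine ⟨?_, ?_, ?_, ?_⟩
  -- ADDITION
  · ext x
    simp only [Set.mem_add, Set.mem_setOf_eq]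
    constructor
    · rintro ⟨y, hy, z, hz, rfl⟩
      have he : y + z - (a + a') = (y - a) + (z - a') := by ring
      rw [he]
      refine le_trans (Padic.nonarchimedean _ _) (max_le ?_ ?_)
      · exact le_trans hy (hmono (by omega))
      · exact le_trans hz (hmono (by omega))
    · intro hx
      rcases le_total N N' with h | h
      · refine ⟨x - a', ?_, a', haI', by ring⟩
        have he : x - a' - a = x - (a + a') := by ring
        rw [he]
        exact le_trans hx (hmono (by omega))
      · refine ⟨a, haI, x - a, ?_, by ring⟩
        have he : x - a - a' = x - (a + a') := by ring
        rw [he]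
        exact le_trans hx (hmono (by omega))
  -- SUBTRACTION
  · ext x
    simp only [Set.mem_sub, Set.mem_setOf_eq]
    constructor
    · rintro ⟨y, hy, z, hz, rfl⟩
      have he : y - z - (a - a') = (y - a) - (z - a') := by ring
      rw [he]
      have hna := Padic.nonarchimedean (y - a) (-(z - a'))
      rw [← sub_eq_add_neg, norm_neg] at hna
      exact le_trans hna (max_le (le_trans hy (hmono (by omega)))
        (le_trans hz (hmono (by omega))))
    · intro hx
      rcases le_total N N' with h | h
      · refine ⟨x + a', ?_, a', haI', by ring⟩
        have he : x + a' - a = x - (a - a') := by ring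
        rw [he]
        exact le_trans hx (hmono (by omega))
      · refine ⟨a, haI, a - x, ?_, by ring⟩
        have he : a - x - a' = -(x - (a - a')) := by ring
        rw [he, norm_neg]
        exact le_trans hx (hmono (by omega))
  -- MULTIPLICATION
  · ext x
    simp only [Set.mem_mul, Set.mem_setOf_eq]
    constructor
    · rintro ⟨y, hy, z, hz, rfl⟩
      have he : y * z - a * a' = y * (z - a') + a' * (y - a) := by ring
      rw [he]
      refine le_trans (Padic.nonarchimedean _ _) (max_le ?_ ?_)
      · rw [norm_mul]
        calc ‖y‖ * ‖z - a'‖ ≤ (p : ℝ) ^ (-v) * (p : ℝ) ^ (-N') :=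
              mul_le_mul (hb y hy) hz (norm_nonneg _) (hpow_pos _).le
          _ = (p : ℝ) ^ (-(v + N')) := by rw [← hzadd]; ring_nf
          _ ≤ _ := hmono (by omega)
      · rw [norm_mul]
        calc ‖a'‖ * ‖y - a‖ ≤ (p : ℝ) ^ (-v') * (p : ℝ) ^ (-N) :=
              mul_le_mul (hb' a' (by simpa using haI')) hy (norm_nonneg _) (hpow_pos _).le
          _ = (p : ℝ) ^ (-(N + v')) := by rw [← hzadd]; ring_nf
          _ ≤ _ := hmono (by omega)
    · intro hx
      by_cases hc : v + N' ≤ N + v'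
      · have hminx : ‖x - a * a'‖ ≤ (p : ℝ) ^ (-(v + N')) := by
          refine le_trans hx (hmono (by omega))
        by_cases h0 : (0 : ℚ_[p]) ∈ {x : ℚ_[p] | ‖x - a‖ ≤ (p : ℝ) ^ (-N)}
        · -- 0 ∈ I, so v = N, and necessarily 0 ∈ I' too
          have hvv := hv0 h0
          have h0' : (0 : ℚ_[p]) ∈ {x : ℚ_[p] | ‖x - a'‖ ≤ (p : ℝ) ^ (-N')} := by
            by_contra h0'
            obtain ⟨_, hna, hvlt, _⟩ := hI'facts h0'
            omega
          have hvv' := hv'0 h0'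
          have ha : ‖a‖ ≤ (p : ℝ) ^ (-N) := (hmem0 a N).mp h0
          have ha' : ‖a'‖ ≤ (p : ℝ) ^ (-N') := (hmem0 a' N').mp h0'
          have hpN : ((p : ℚ_[p]) ^ N : ℚ_[p]) ≠ 0 :=
            zpow_ne_zero _ (by exact_mod_cast (Fact.out : p.Prime).ne_zero)
          refine ⟨(p : ℚ_[p]) ^ N, ?_, x / (p : ℚ_[p]) ^ N, ?_, by field_simp⟩
          · have : ‖(p : ℚ_[p]) ^ N - a‖ ≤ max ‖(p : ℚ_[p]) ^ N‖ ‖a‖ := by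
              have := Padic.nonarchimedean ((p : ℚ_[p]) ^ N) (-a)
              simpa [sub_eq_add_neg] using this
            refine le_trans this (max_le ?_ ha)
            rw [Padic.norm_p_zpow]
          · have hxb : ‖x‖ ≤ (p : ℝ) ^ (-(N + N')) := by
              have : x = (x - a * a') + a * a' := by ring
              rw [this]
              refine le_trans (Padic.nonarchimedean _ _) (max_le ?_ ?_)
              · refine le_trans hminx (hmono (by omega))
              · rw [norm_mul]
                calc ‖a‖ * ‖a'‖ ≤ (p : ℝ) ^ (-N) * (p : ℝ) ^ (-N') :=
                    mul_le_mul ha ha' (norm_nonneg _) (hpow_pos _).le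
                  _ = (p : ℝ) ^ (-(N + N')) := by rw [← hzadd]; ring_nf
            have hz : ‖x / (p : ℚ_[p]) ^ N‖ ≤ (p : ℝ) ^ (-N') := by
              rw [norm_div, Padic.norm_p_zpow]
              rw [div_le_iff₀ (hpow_pos _)]
              calc ‖x‖ ≤ (p : ℝ) ^ (-(N + N')) := hxb
                _ = (p : ℝ) ^ (-N') * (p : ℝ) ^ (-N) := by rw [← hzadd]; ring_nf
            have : ‖x / (p : ℚ_[p]) ^ N - a'‖ ≤ max ‖x / (p : ℚ_[p]) ^ N‖ ‖a'‖ := by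
              have := Padic.nonarchimedean (x / (p : ℚ_[p]) ^ N) (-a')
              simpa [sub_eq_add_neg] using this
            exact le_trans this (max_le hz ha')
        · -- 0 ∉ I : take y = a
          obtain ⟨ha0, hna⟩ := hIfacts h0
          refine ⟨a, haI, a' + (x - a * a') / a, ?_, by field_simp; try ring⟩
          have he : a' + (x - a * a') / a - a' = (x - a * a') / a := by ring
          rw [he, norm_div, hna, div_le_iff₀ (hpow_pos _)]
          calc ‖x - a * a'‖ ≤ (p : ℝ) ^ (-(v + N')) := hminx
            _ = (p : ℝ) ^ (-N') * (p : ℝ) ^ (-v) := by rw [← hzadd]; ring_nf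
      · -- min is N + v' and 0 ∉ I'
        have hminx : ‖x - a * a'‖ ≤ (p : ℝ) ^ (-(N + v')) := by
          refine le_trans hx (hmono (by omega))
        have h0' : (0 : ℚ_[p]) ∉ {x : ℚ_[p] | ‖x - a'‖ ≤ (p : ℝ) ^ (-N')} := by
          intro h0'
          have := hv'0 h0'
          omega
        obtain ⟨ha0', hna', hvlt', _⟩ := hI'facts h0'
        refine ⟨a + (x - a * a') / a', ?_, a', haI', by field_simp; try ring⟩
        have he : a + (x - a * a') / a' - a = (x - a * a') / a' := by ring
        rw [he, norm_div, hna', div_le_iff₀ (hpow_pos _)]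
        calc ‖x - a * a'‖ ≤ (p : ℝ) ^ (-(N + v')) := hminx
          _ = (p : ℝ) ^ (-N) * (p : ℝ) ^ (-v') := by rw [← hzadd]; ring_nf
  -- DIVISION
  · intro h0'
    obtain ⟨ha0', hna', hvlt', hnormI'⟩ := hI'facts h0'
    ext x
    simp only [Set.mem_div, Set.mem_setOf_eq]
    constructor
    · rintro ⟨y, hy, z, hz, rfl⟩
      have hz0 : z ≠ 0 := by
        intro h
        have := hnormI' z hz
        rw [h, norm_zero] at this
        exact absurd this.symm (ne_of_gt (hpow_pos _))
      have hnz : ‖z‖ = (p : ℝ) ^ (-v') := hnormI' z hz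
      have he : y / z - a / a' = (a' * (y - a) - a * (z - a')) / (z * a') := by
        field_simp
        ring
      rw [he, norm_div, norm_mul, hnz, hna']
      rw [div_le_iff₀ (by positivity)]
      have hnum : ‖a' * (y - a) - a * (z - a')‖ ≤ (p : ℝ) ^ (-(min (N + v') (v + N'))) := by
        have h1 : ‖a' * (y - a)‖ ≤ (p : ℝ) ^ (-(N + v')) := by
          rw [norm_mul]
          calc ‖a'‖ * ‖y - a‖ ≤ (p : ℝ) ^ (-v') * (p : ℝ) ^ (-N) :=
              mul_le_mul (le_of_eq hna') hy (norm_nonneg _) (hpow_pos _).le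
            _ = (p : ℝ) ^ (-(N + v')) := by rw [← hzadd]; ring_nf
        have h2 : ‖a * (z - a')‖ ≤ (p : ℝ) ^ (-(v + N')) := by
          rw [norm_mul]
          calc ‖a‖ * ‖z - a'‖ ≤ (p : ℝ) ^ (-v) * (p : ℝ) ^ (-N') :=
              mul_le_mul (hb a (by simpa using haI)) hz (norm_nonneg _) (hpow_pos _).le
            _ = (p : ℝ) ^ (-(v + N')) := by rw [← hzadd]; ring_nf
        have := Padic.nonarchimedean (a' * (y - a)) (-(a * (z - a')))
        rw [← sub_eq_add_neg, norm_neg] at this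
        refine le_trans this (max_le (le_trans h1 (hmono (by omega)))
          (le_trans h2 (hmono (by omega))))
      calc ‖a' * (y - a) - a * (z - a')‖ ≤ (p : ℝ) ^ (-(min (N + v') (v + N'))) := hnum
        _ = (p : ℝ) ^ (-min (v + N' - 2 * v') (N - v')) * ((p : ℝ) ^ (-v') * (p : ℝ) ^ (-v')) := by
            rw [← hzadd, ← hzadd]
            congr 1
            omega
    · intro hx
      by_cases hc : N + v' ≤ v + N'
      · -- min = N - v'
        have hminx : ‖x - a / a'‖ ≤ (p : ℝ) ^ (-(N - v')) :=
          le_trans hx (hmono (by omega))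
        refine ⟨a + (x - a / a') * a', ?_, a', haI', by field_simp; try ring⟩
        have he : a + (x - a / a') * a' - a = (x - a / a') * a' := by ring
        rw [he, norm_mul, hna']
        calc ‖x - a / a'‖ * (p : ℝ) ^ (-v') ≤ (p : ℝ) ^ (-(N - v')) * (p : ℝ) ^ (-v') :=
            mul_le_mul_of_nonneg_right hminx (hpow_pos _).le
          _ = (p : ℝ) ^ (-N) := by rw [← hzadd]; ring_nf
      · -- min = v + N' - 2v' and 0 ∉ I
        have hminx : ‖x - a / a'‖ ≤ (p : ℝ) ^ (-(v + N' - 2 * v')) :=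
          le_trans hx (hmono (by omega))
        have h0 : (0 : ℚ_[p]) ∉ {x : ℚ_[p] | ‖x - a‖ ≤ (p : ℝ) ^ (-N)} := by
          intro h0
          have := hv0 h0
          omega
        obtain ⟨ha0, hna⟩ := hIfacts h0
        -- x has the same norm as a / a', in particular x ≠ 0
        have hq : ‖a / a'‖ = (p : ℝ) ^ (v' - v) := by
          rw [norm_div, hna, hna', ← zpow_sub₀ (ne_of_gt hppos)]
          congr 1
          ring
        have hxlt : ‖x - a / a'‖ < ‖a / a'‖ := by
          rw [hq]
          refine lt_of_le_of_lt hminx ?_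
          exact (zpow_lt_zpow_iff_right₀ hp1).mpr (by omega)
        have hnx : ‖x‖ = (p : ℝ) ^ (v' - v) := by
          rw [padic_norm_eq_of_close hxlt, hq]
        have hx0 : x ≠ 0 := by
          intro h
          rw [h, norm_zero] at hnx
          exact absurd hnx.symm (ne_of_gt (hpow_pos _))
        refine ⟨a, haI, a / x, ?_, ?_⟩
        · have he : a / x - a' = (a - a' * x) / x := by field_simp; try ring
          have he2 : a - a' * x = -(a' * (x - a / a')) := by field_simp; try ring
          rw [he, he2, norm_div, norm_neg, norm_mul, hna', hnx,
            div_le_iff₀ (hpow_pos _)]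
          calc (p : ℝ) ^ (-v') * ‖x - a / a'‖
              ≤ (p : ℝ) ^ (-v') * (p : ℝ) ^ (-(v + N' - 2 * v')) :=
                mul_le_mul_of_nonneg_left hminx (hpow_pos _).le
            _ = (p : ℝ) ^ (-N') * (p : ℝ) ^ (v' - v) := by
                rw [← hzadd, ← hzadd]
                congr 1
                ring
        · field_simp
          try ring
end

section
/- Let E be a d-dimensional vector space over ℚ_p equipped with an ultrametric norm ‖·‖_E (satisfying ‖x‖_E = 0 ⟺ x = 0, ‖λx‖_E = |λ|_p·‖x‖_E, and ‖x+y‖_E ≤ max(‖x‖_E, ‖y‖_E)). Then there exists a basis (e_1, …, e_d) of E over ℚ_p such that the closed unit ball B_E(1) = {x ∈ E : ‖x‖_E ≤ 1} is exactly the ℤ_p-module generated by e_1, …, e_d. -/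
/-- In a `d`-dimensional normed (ultrametric) `ℚ_p`-vector space, there is a basis
whose `ℤ_p`-span is exactly the closed unit ball. -/
theorem stmt10 {p : ℕ} [Fact p.Prime] (d : ℕ) (E : Type*)
    [AddCommGroup E] [Module ℚ_[p] E] [FiniteDimensional ℚ_[p] E]
    (hdim : Module.finrank ℚ_[p] E = d)
    (ν : E → ℝ) (hnonneg : ∀ x : E, 0 ≤ ν x)
    (hzero : ∀ x : E, ν x = 0 ↔ x = 0)
    (hsmul : ∀ (c : ℚ_[p]) (x : E), ν (c • x) = ‖c‖ * ν x)
    (hadd : ∀ x y : E, ν (x + y) ≤ max (ν x) (ν y)) :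
    ∃ b : Module.Basis (Fin d) ℚ_[p] E,
      {x : E | ν x ≤ 1} =
        {x : E | ∃ c : Fin d → ℤ_[p], x = ∑ i, ((c i : ℚ_[p]) • b i)} := by
  classical
  have hp1 : (1 : ℝ) < p := Nat.one_lt_cast.mpr (Fact.out : p.Prime).one_lt
  have hpQ : (p : ℚ_[p]) ≠ 0 := Nat.cast_ne_zero.mpr (Fact.out : p.Prime).ne_zero
  -- put the norm structure on `E`
  letI : NormedAddCommGroup E := AddGroupNorm.toNormedAddCommGroup
    { toFun := ν
      map_zero' := (hzero 0).mpr rfl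
      add_le' := fun x y => (hadd x y).trans
        (max_le (le_add_of_nonneg_right (hnonneg y)) (le_add_of_nonneg_left (hnonneg x)))
      neg' := fun x => by
        have := hsmul (-1) x
        simpa using this
      eq_zero_of_map_eq_zero' := fun x h => (hzero x).mp h }
  letI : NormedSpace ℚ_[p] E := ⟨fun c x => le_of_eq (hsmul c x)⟩
  have hnorm : ∀ x : E, ‖x‖ = ν x := fun _ => rfl
  -- `ℤ_p`-module structure on `E`
  letI : Module ℤ_[p] E := Module.compHom E (algebraMap ℤ_[p] ℚ_[p])
  have hzsmul : ∀ (c : ℤ_[p]) (x : E), c • x = (c : ℚ_[p]) • x := fun _ _ => rfl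
  haveI : IsScalarTower ℤ_[p] ℚ_[p] E :=
    ⟨fun c q x => by
      rw [Algebra.smul_def, hzsmul, mul_smul]; rfl⟩
  -- the unit ball as a `ℤ_p`-submodule
  let B : Submodule ℤ_[p] E :=
    { carrier := {x | ν x ≤ 1}
      add_mem' := fun {x y} hx hy => (hadd x y).trans (max_le hx hy)
      zero_mem' := by
        show ν 0 ≤ 1
        rw [(hzero 0).mpr rfl]; exact zero_le_one
      smul_mem' := fun c x hx => by
        show ν ((c : ℚ_[p]) • x) ≤ 1
        rw [hsmul]
        exact mul_le_one₀ c.norm_le_one (hnonneg x) hx }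
  -- reference basis
  let b₀ : Module.Basis (Fin d) ℚ_[p] E := Module.finBasisOfFinrankEq ℚ_[p] E hdim
  -- the coordinate map is continuous, hence bounded
  let f : E →L[ℚ_[p]] (Fin d → ℚ_[p]) :=
    LinearMap.toContinuousLinearMap b₀.equivFun.toLinearMap
  obtain ⟨N, hN⟩ : ∃ N : ℕ, ‖f‖ ≤ (p : ℝ) ^ N := by
    obtain ⟨N, hN⟩ := pow_unbounded_of_one_lt ‖f‖ hp1
    exact ⟨N, hN.le⟩
  -- the enlarged lattice `L`
  let u : ℚ_[p] := (p : ℚ_[p]) ^ N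
  have hu : u ≠ 0 := pow_ne_zero _ hpQ
  have hun : ‖u‖ = ((p : ℝ) ^ N)⁻¹ := by
    simp [u, norm_pow, Padic.norm_p]
  let b₁ : Module.Basis (Fin d) ℚ_[p] E := b₀.isUnitSMul
    (fun _ => (isUnit_iff_ne_zero.mpr (inv_ne_zero hu)))
  have hb₁ : ∀ i, b₁ i = u⁻¹ • b₀ i := fun i => Module.Basis.isUnitSMul_apply _ i
  have hb₁li : LinearIndependent ℤ_[p] (b₁ : Fin d → E) :=
    (LinearIndependent.iff_fractionRing ℤ_[p] ℚ_[p]).mpr b₁.linearIndependent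
  -- B is contained in the span of b₁
  have hBL : B ≤ Submodule.span ℤ_[p] (Set.range (b₁ : Fin d → E)) := by
    intro x hx
    have hx' : ν x ≤ 1 := hx
    have hrep : x = ∑ i, (u * b₀.repr x i) • b₁ i := by
      conv_lhs => rw [← b₀.sum_repr x]
      refine Finset.sum_congr rfl fun i _ => ?_
      rw [hb₁, smul_smul, mul_comm u, mul_assoc, mul_inv_cancel₀ hu, mul_one]
    have hcoef : ∀ i, ‖u * b₀.repr x i‖ ≤ 1 := by
      intro i
      have h1 : ‖b₀.repr x i‖ ≤ ‖f‖ := by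
        have h2 : ‖f x‖ ≤ ‖f‖ * ‖x‖ := f.le_opNorm x
        have h3 : ‖(f x) i‖ ≤ ‖f x‖ := norm_le_pi_norm (f x) i
        have h4 : ‖f‖ * ‖x‖ ≤ ‖f‖ * 1 := by
          exact mul_le_mul_of_nonneg_left (by rw [hnorm]; exact hx') (norm_nonneg f)
        have : (f x) i = b₀.repr x i := rfl
        rw [this] at h3
        linarith
      rw [norm_mul, hun]
      calc ((p : ℝ) ^ N)⁻¹ * ‖b₀.repr x i‖ ≤ ((p : ℝ) ^ N)⁻¹ * ((p : ℝ) ^ N) := by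
            apply mul_le_mul_of_nonneg_left (h1.trans hN)
            positivity
        _ = 1 := inv_mul_cancel₀ (by positivity)
    rw [hrep]
    refine Submodule.sum_mem _ fun i _ => ?_
    have hmem := Submodule.smul_mem (Submodule.span ℤ_[p] (Set.range (b₁ : Fin d → E)))
      (⟨u * b₀.repr x i, hcoef i⟩ : ℤ_[p]) (Submodule.subset_span ⟨i, rfl⟩)
    change (u * b₀.repr x i) • b₁ i ∈ _ at hmem
    exact hmem
  -- basis of B over ℤ_p
  obtain ⟨n, c⟩ := Submodule.basisOfPidOfLESpan hb₁li hBL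
  let v : Fin n → E := fun i => (c i : E)
  have hvli : LinearIndependent ℚ_[p] v := by
    have h1 : LinearIndependent ℤ_[p] v :=
      c.linearIndependent.map' B.subtype (Submodule.ker_subtype B)
    exact (LinearIndependent.iff_fractionRing ℤ_[p] ℚ_[p]).mp h1
  -- span of v over ℤ_p is B
  have hspanB : Submodule.span ℤ_[p] (Set.range v) = B := by
    have := c.span_eq
    have h2 : Submodule.map B.subtype (Submodule.span ℤ_[p] (Set.range c)) =
        Submodule.map B.subtype ⊤ := by rw [this]
    rwa [Submodule.map_span, Submodule.map_subtype_top, ← Set.range_comp] at h2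
  -- v spans E over ℚ_p
  have hvspan : ⊤ ≤ Submodule.span ℚ_[p] (Set.range v) := by
    rw [← b₀.span_eq]
    rw [Submodule.span_le]
    rintro _ ⟨i, rfl⟩
    obtain ⟨M, hM⟩ : ∃ M : ℕ, ν (b₀ i) ≤ (p : ℝ) ^ M := by
      obtain ⟨M, hM⟩ := pow_unbounded_of_one_lt (ν (b₀ i)) hp1
      exact ⟨M, hM.le⟩
    have hmem : (p : ℚ_[p]) ^ M • b₀ i ∈ B := by
      show ν _ ≤ 1
      rw [hsmul]
      have : ‖(p : ℚ_[p]) ^ M‖ = ((p : ℝ) ^ M)⁻¹ := by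
        simp [norm_pow, Padic.norm_p]
      rw [this]
      calc ((p : ℝ) ^ M)⁻¹ * ν (b₀ i) ≤ ((p : ℝ) ^ M)⁻¹ * ((p : ℝ) ^ M) :=
            mul_le_mul_of_nonneg_left hM (by positivity)
        _ = 1 := inv_mul_cancel₀ (by positivity)
    rw [← hspanB] at hmem
    have hmem' : (p : ℚ_[p]) ^ M • b₀ i ∈ Submodule.span ℚ_[p] (Set.range v) :=
      Submodule.span_subset_span ℤ_[p] ℚ_[p] _ hmem
    have : b₀ i = ((p : ℚ_[p]) ^ M)⁻¹ • ((p : ℚ_[p]) ^ M • b₀ i) := by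
      rw [smul_smul, inv_mul_cancel₀ (pow_ne_zero _ hpQ), one_smul]
    rw [this]
    exact Submodule.smul_mem _ _ hmem'
  -- n = d
  have hnd : n = d := by
    let e : Module.Basis (Fin n) ℚ_[p] E := Module.Basis.mk hvli hvspan
    have := Module.finrank_eq_card_basis e
    rw [hdim, Fintype.card_fin] at this
    omega
  subst hnd
  let b : Module.Basis (Fin n) ℚ_[p] E := Module.Basis.mk hvli hvspan
  have hb : ∀ i, b i = v i := fun i => Module.Basis.mk_apply hvli hvspan i
  refine ⟨b, ?_⟩
  ext x
  simp only [Set.mem_setOf_eq]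
  constructor
  · intro hx
    refine ⟨fun i => c.repr ⟨x, hx⟩ i, ?_⟩
    have hrep := c.sum_repr ⟨x, hx⟩
    calc x = ((⟨x, hx⟩ : B) : E) := rfl
      _ = ((∑ i, c.repr ⟨x, hx⟩ i • c i : B) : E) := by rw [hrep]
      _ = ∑ i, ((c.repr ⟨x, hx⟩ i : ℚ_[p]) • b i) := by
          rw [AddSubmonoidClass.coe_finset_sum]
          refine Finset.sum_congr rfl fun i _ => ?_
          rw [hb]
          rfl
  · rintro ⟨cf, rfl⟩
    have : (∑ i, ((cf i : ℚ_[p]) • b i)) ∈ B := by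
      refine Submodule.sum_mem _ fun i _ => ?_
      rw [← hzsmul]
      refine Submodule.smul_mem _ _ ?_
      rw [hb]
      exact (c i).2
    exact this
end

section
/- (p-adic Hermite normal form.) Any invertible matrix M ∈ GL_d(ℚ_p) can be written uniquely as a product M = U·A where: U ∈ GL_d(ℤ_p) (i.e., U has entries in ℤ_p and is invertible over ℤ_p), and A is upper triangular with diagonal entries p^{n_1}, …, p^{n_d} for relative integers n_1, …, n_d, and for i < j the entry a_{i,j} of A is a rational number of the form a_{i,j} = b_{i,j}/p^{v_{i,j}} with b_{i,j}, v_{i,j} integers satisfying 0 ≤ b_{i,j} < p^{n_j + v_{i,j}} (equivalently, a_{i,j} ∈ ℤ[1/p] and 0 ≤ a_{i,j} < p^{n_j}). -/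
open Matrix Finset

variable {p : ℕ} [hp : Fact p.Prime]

/-- `x` is a reduced representative mod `p^n ℤ_p`. -/
def IsRed (p : ℕ) [Fact p.Prime] (n : ℤ) (x : ℚ_[p]) : Prop :=
  ∃ b v : ℤ, 0 ≤ b ∧ (b : ℚ) < (p : ℚ) ^ (n + v) ∧ x = (b : ℚ_[p]) / (p : ℚ_[p]) ^ v

lemma pq_ne_zero : (p : ℚ_[p]) ≠ 0 := Nat.cast_ne_zero.mpr hp.out.ne_zero

lemma pR_pos : (0:ℝ) < (p:ℝ) := by exact_mod_cast hp.out.pos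

/-- Division with reduced remainder. -/
lemma exists_red (n : ℤ) (x : ℚ_[p]) :
    ∃ (t : ℤ_[p]) (y : ℚ_[p]), IsRed p n y ∧ x = (p : ℚ_[p]) ^ n * t + y := by
  set y := x / (p : ℚ_[p]) ^ n with hy
  obtain ⟨m, hm⟩ := pow_unbounded_of_one_lt (‖y‖) (by exact_mod_cast hp.out.one_lt : (1:ℝ) < p)
  have hnorm : ‖(p : ℚ_[p]) ^ (m:ℕ) * y‖ ≤ 1 := by
    rw [norm_mul, Padic.norm_p_pow]
    calc (p:ℝ) ^ (-(m:ℤ)) * ‖y‖ ≤ (p:ℝ) ^ (-(m:ℤ)) * (p:ℝ)^(m:ℕ) :=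
          mul_le_mul_of_nonneg_left hm.le (zpow_nonneg pR_pos.le _)
      _ = 1 := by
          rw [← zpow_natCast (p:ℝ) m, ← zpow_add₀ pR_pos.ne']
          simp
  set z : ℤ_[p] := ⟨(p : ℚ_[p]) ^ (m:ℕ) * y, hnorm⟩ with hz
  obtain ⟨t, ht⟩ := Ideal.mem_span_singleton'.mp (PadicInt.appr_spec m z)
  refine ⟨t, ((z.appr m : ℤ) : ℚ_[p]) / (p : ℚ_[p]) ^ ((m : ℤ) - n),
    ⟨z.appr m, (m:ℤ) - n, Int.ofNat_nonneg _, ?_, rfl⟩, ?_⟩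
  · have h2 : ((z.appr m : ℤ) : ℚ) < ((p:ℚ))^(m:ℕ) := by exact_mod_cast PadicInt.appr_lt z m
    rw [show (n + ((m:ℤ) - n)) = (m:ℤ) by ring, zpow_natCast]
    exact h2
  · have ht' : (t : ℚ_[p]) * (p : ℚ_[p]) ^ (m:ℕ) = (z : ℚ_[p]) - ((z.appr m : ℤ) : ℚ_[p]) := by
      exact_mod_cast congrArg (fun a : ℤ_[p] => (a : ℚ_[p])) ht
    have hzy : ((z : ℚ_[p])) = (p : ℚ_[p]) ^ (m:ℕ) * y := rfl
    rw [hzy] at ht'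
    have hyy : (p : ℚ_[p]) ^ ((m:ℤ)) * y
        = ((z.appr m : ℤ) : ℚ_[p]) + (t : ℚ_[p]) * (p : ℚ_[p]) ^ ((m:ℤ)) := by
      rw [zpow_natCast]
      rw [eq_add_of_sub_eq' ht'.symm]
    have hx : x = (p : ℚ_[p]) ^ (n : ℤ) * y := by
      rw [hy, mul_div_cancel₀ _ (zpow_ne_zero _ pq_ne_zero)]
    apply mul_right_cancel₀ (zpow_ne_zero ((m:ℤ)) pq_ne_zero)
    calc x * (p:ℚ_[p])^((m:ℤ))
        = (p:ℚ_[p])^n * ((p:ℚ_[p])^((m:ℤ)) * y) := by rw [hx]; ring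
      _ = (p:ℚ_[p])^n * (((z.appr m : ℤ) : ℚ_[p]) + (t : ℚ_[p]) * (p : ℚ_[p]) ^ ((m:ℤ))) := by
          rw [hyy]
      _ = (p:ℚ_[p])^n * (t : ℚ_[p]) * (p:ℚ_[p])^((m:ℤ))
          + ((z.appr m : ℤ) : ℚ_[p]) * ((p:ℚ_[p])^((m:ℤ)) / (p:ℚ_[p])^((m:ℤ) - n)) := by
          rw [← zpow_sub₀ pq_ne_zero, show ((m:ℤ) - ((m:ℤ) - n)) = n by ring]; ring
      _ = ((p:ℚ_[p])^n * (t : ℚ_[p])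
          + ((z.appr m : ℤ) : ℚ_[p]) / (p:ℚ_[p])^((m:ℤ) - n)) * (p:ℚ_[p])^((m:ℤ)) := by
          ring

/-- A reduced representation can be raised to any larger denominator exponent. -/
lemma red_raise {n b v : ℤ} (hb : 0 ≤ b) (hbv : (b : ℚ) < (p : ℚ) ^ (n + v)) {v' : ℤ}
    (hv : v ≤ v') :
    ∃ b' : ℤ, 0 ≤ b' ∧ (b' : ℚ) < (p : ℚ) ^ (n + v') ∧
      ((b' : ℚ_[p]) / (p : ℚ_[p]) ^ v' = (b : ℚ_[p]) / (p : ℚ_[p]) ^ v) := by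
  have hpQ : (0:ℚ) < (p:ℚ) := by exact_mod_cast hp.out.pos
  refine ⟨b * p ^ (v' - v).toNat, by positivity, ?_, ?_⟩
  · have hcast : ((b * p ^ (v' - v).toNat : ℤ) : ℚ) = (b:ℚ) * (p:ℚ) ^ ((v' - v) : ℤ) := by
      push_cast
      rw [← zpow_natCast (p:ℚ), Int.toNat_of_nonneg (by omega)]
    rw [hcast, show n + v' = (n + v) + (v' - v) by ring, zpow_add₀ hpQ.ne']
    exact mul_lt_mul_of_pos_right hbv (zpow_pos hpQ _)
  · have hcast : ((b * p ^ (v' - v).toNat : ℤ) : ℚ_[p]) = (b:ℚ_[p]) * (p:ℚ_[p]) ^ ((v' - v) : ℤ) := by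
      push_cast
      rw [← zpow_natCast (p:ℚ_[p]), Int.toNat_of_nonneg (by omega)]
    rw [hcast, div_eq_div_iff (zpow_ne_zero _ pq_ne_zero) (zpow_ne_zero _ pq_ne_zero),
      mul_assoc, ← zpow_add₀ pq_ne_zero, show (v' - v) + v = v' by ring]

/-- Two reduced representatives which differ by an element of `p^n ℤ_p` are equal. -/
lemma red_unique {n : ℤ} {x₁ x₂ : ℚ_[p]} (h₁ : IsRed p n x₁) (h₂ : IsRed p n x₂)
    (w : ℤ_[p]) (hw : x₁ - x₂ = (p : ℚ_[p]) ^ n * w) : x₁ = x₂ := by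
  obtain ⟨b₁, v₁, hb₁, hbv₁, rfl⟩ := h₁
  obtain ⟨b₂, v₂, hb₂, hbv₂, rfl⟩ := h₂
  set V : ℤ := max v₁ (max v₂ (-n)) with hV
  obtain ⟨c₁, hc₁, hcv₁, he₁⟩ := red_raise hb₁ hbv₁ (le_max_left v₁ _ : v₁ ≤ V)
  obtain ⟨c₂, hc₂, hcv₂, he₂⟩ := red_raise hb₂ hbv₂ (le_trans (le_max_left v₂ _) (le_max_right _ _) : v₂ ≤ V)
  rw [← he₁, ← he₂] at hw ⊢
  have hnV : 0 ≤ n + V := by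
    have : -n ≤ V := le_trans (le_max_right v₂ _) (le_max_right _ _)
    omega
  set k : ℕ := (n + V).toNat with hk
  have hkk : (k : ℤ) = n + V := Int.toNat_of_nonneg hnV
  have key : ((c₁ - c₂ : ℤ) : ℚ_[p]) = (p:ℚ_[p])^(n+V) * w := by
    rw [show ((n:ℤ)+V) = n + V by ring, zpow_add₀ pq_ne_zero]
    push_cast
    have h := congrArg (· * (p:ℚ_[p])^V) hw
    simp only [sub_mul] at h
    rw [div_mul_cancel₀ _ (zpow_ne_zero _ pq_ne_zero),
      div_mul_cancel₀ _ (zpow_ne_zero _ pq_ne_zero)] at h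
    rw [h]; ring
  have hnorm : ‖((c₁ - c₂ : ℤ) : ℚ_[p])‖ ≤ (p:ℝ) ^ (-(k:ℤ)) := by
    rw [key, norm_mul, ← hkk, zpow_natCast, Padic.norm_p_pow]
    calc (p:ℝ)^(-(k:ℤ)) * ‖(w : ℚ_[p])‖ ≤ (p:ℝ)^(-(k:ℤ)) * 1 :=
      mul_le_mul_of_nonneg_left w.2 (zpow_nonneg pR_pos.le _)
    _ = (p:ℝ)^(-(k:ℤ)) := mul_one _
  have hdvd : ((p:ℤ) ^ k) ∣ (c₁ - c₂) := (Padic.norm_int_le_pow_iff_dvd _ _).mp hnorm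
  have hlt : |c₁ - c₂| < (p:ℤ) ^ k := by
    have h1 : (c₁ : ℚ) < ((p:ℚ))^k := by rw [← zpow_natCast (p:ℚ), hkk]; exact hcv₁
    have h2 : (c₂ : ℚ) < ((p:ℚ))^k := by rw [← zpow_natCast (p:ℚ), hkk]; exact hcv₂
    have h1' : c₁ < (p:ℤ)^k := by exact_mod_cast h1
    have h2' : c₂ < (p:ℤ)^k := by exact_mod_cast h2
    rw [abs_lt]; omega
  have : c₁ - c₂ = 0 := Int.eq_zero_of_abs_lt_dvd hdvd hlt
  have : c₁ = c₂ := by omega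
  rw [this]

/-- A nonzero vector over `ℚ_p` is `p^n` times a vector over `ℤ_p` with some unit coordinate. -/
lemma exists_primitive {d : ℕ} (c : Fin d → ℚ_[p]) (hc : c ≠ 0) :
    ∃ (nn : ℤ) (u : Fin d → ℤ_[p]) (k : Fin d), IsUnit (u k) ∧
      ∀ i, c i = (p : ℚ_[p]) ^ nn * (u i : ℚ_[p]) := by
  obtain ⟨i₀, hi₀⟩ := Function.ne_iff.mp hc
  obtain ⟨k, -, hk⟩ := Finset.exists_max_image Finset.univ (fun i => ‖c i‖) ⟨i₀, Finset.mem_univ _⟩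
  have hck : c k ≠ 0 := by
    intro h
    have := hk i₀ (Finset.mem_univ _)
    rw [h, norm_zero] at this
    exact hi₀ (norm_le_zero_iff.mp this)
  set nn := (c k).valuation with hnn
  have hnorm : ‖c k‖ = (p:ℝ) ^ (-nn) := Padic.norm_eq_zpow_neg_valuation hck
  have hple : ∀ i, ‖c i / (p:ℚ_[p]) ^ nn‖ ≤ 1 := by
    intro i
    rw [norm_div, Padic.norm_p_zpow, div_le_one (zpow_pos pR_pos _)]
    calc ‖c i‖ ≤ ‖c k‖ := hk i (Finset.mem_univ _)
      _ = (p:ℝ) ^ (-nn) := hnorm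
  refine ⟨nn, fun i => ⟨c i / (p:ℚ_[p]) ^ nn, hple i⟩, k, ?_, ?_⟩
  · refine PadicInt.isUnit_iff.mpr ?_
    show ‖c k / (p:ℚ_[p]) ^ nn‖ = 1
    rw [norm_div, Padic.norm_p_zpow, hnorm, div_self (zpow_pos pR_pos _).ne']
  · intro i
    show c i = (p:ℚ_[p]) ^ nn * (c i / (p:ℚ_[p]) ^ nn)
    rw [mul_div_cancel₀ _ (zpow_ne_zero _ pq_ne_zero)]

/-- A vector with a unit coordinate is the first column of an invertible matrix over `ℤ_p`. -/
lemma exists_completion {e : ℕ} (u : Fin (e+1) → ℤ_[p]) (k : Fin (e+1)) (hk : IsUnit (u k)) :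
    ∃ U : Matrix (Fin (e+1)) (Fin (e+1)) ℤ_[p], IsUnit U.det ∧ ∀ i, U i 0 = u i := by
  refine ⟨(Matrix.updateCol 1 k u).submatrix id (Equiv.swap 0 k), ?_, ?_⟩
  · rw [Matrix.det_permute']
    have hdet : (Matrix.updateCol 1 k u).det = u k := by
      rw [← Matrix.cramer_apply, Matrix.cramer_one]
      rfl
    rw [hdet]
    rcases Int.units_eq_one_or (Equiv.Perm.sign (Equiv.swap (0 : Fin (e+1)) k)) with h | h <;>
      rw [h]
    · simpa using hk
    · simpa using hk.neg
  · intro i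
    simp [Matrix.submatrix_apply, Equiv.swap_apply_left, Matrix.updateCol_self]

/-- Row reduction against an upper triangular matrix with diagonal `p^{n_j}`. -/
lemma exists_row_red {e : ℕ} (n : Fin e → ℤ) (A : Matrix (Fin e) (Fin e) ℚ_[p])
    (hdiag : ∀ i, A i i = (p:ℚ_[p]) ^ n i) (hlow : ∀ i j, j < i → A i j = 0)
    (r : Fin e → ℚ_[p]) :
    ∃ (s : Fin e → ℤ_[p]) (y : Fin e → ℚ_[p]),
      (∀ j, IsRed p (n j) (y j)) ∧
      (∀ j, r j = y j + ∑ k, (s k : ℚ_[p]) * A k j) := by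
  induction e with
  | zero => exact ⟨fun i => i.elim0, fun i => i.elim0, fun j => j.elim0, fun j => j.elim0⟩
  | succ e ih =>
    obtain ⟨t, y₀, hy₀, ht⟩ := exists_red (n 0) (r 0)
    obtain ⟨s', y', hy', hs'⟩ := ih (n ∘ Fin.succ) (A.submatrix Fin.succ Fin.succ)
      (fun i => hdiag i.succ)
      (fun i j h => hlow i.succ j.succ (by simpa using h))
      (fun j => r j.succ - (t : ℚ_[p]) * A 0 j.succ)
    refine ⟨Fin.cons t s', Fin.cons y₀ y', ?_, ?_⟩
    · intro j
      refine Fin.cases ?_ (fun j' => ?_) j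
      · simpa using hy₀
      · simpa using hy' j'
    · intro j
      refine Fin.cases ?_ (fun j' => ?_) j
      · rw [Fin.sum_univ_succ]
        simp only [Fin.cons_zero, Fin.cons_succ]
        have hz : ∀ k' : Fin e, A k'.succ 0 = 0 := fun k' => hlow k'.succ 0 (Fin.succ_pos k')
        rw [Finset.sum_eq_zero (fun k' _ => by rw [hz k', mul_zero]), hdiag 0, ht]
        ring
      · have := hs' j'
        rw [Fin.sum_univ_succ]
        simp only [Fin.cons_zero, Fin.cons_succ, Matrix.submatrix_apply] at this ⊢
        linear_combination this

lemma det_col0 {R : Type*} [CommRing R] {e : ℕ} (B : Matrix (Fin (e+1)) (Fin (e+1)) R)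
    (h : ∀ i' : Fin e, B i'.succ 0 = 0) :
    B.det = B 0 0 * (B.submatrix Fin.succ Fin.succ).det := by
  rw [Matrix.det_succ_column_zero, Finset.sum_eq_single 0]
  · simp
  · intro i _ hi
    obtain ⟨i', rfl⟩ := Fin.exists_succ_eq.mpr hi
    rw [h i']; ring
  · simp

lemma coe_fun_eq_ringHom :
    (fun u : ℤ_[p] => (u : ℚ_[p])) = ⇑(PadicInt.Coe.ringHom (p := p)) := rfl

/-- Existence of the `p`-adic Hermite normal form. -/
lemma exists_hnf : ∀ (d : ℕ) (M : Matrix (Fin d) (Fin d) ℚ_[p]), IsUnit M.det →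
    ∃ (U : Matrix (Fin d) (Fin d) ℤ_[p]) (A : Matrix (Fin d) (Fin d) ℚ_[p]) (n : Fin d → ℤ),
      IsUnit U.det ∧ M = U.map (fun u => (u : ℚ_[p])) * A ∧
      (∀ i, A i i = (p:ℚ_[p]) ^ n i) ∧ (∀ i j, j < i → A i j = 0) ∧
      (∀ i j, i < j → IsRed p (n j) (A i j)) := by
  intro d
  induction d with
  | zero =>
    intro M _
    exact ⟨1, M, fun i => i.elim0, by rw [Matrix.det_one]; exact isUnit_one, by
      rw [coe_fun_eq_ringHom, Matrix.map_one _ (map_zero _) (map_one _), one_mul],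
      fun i => i.elim0, fun i => i.elim0, fun i => i.elim0⟩
  | succ e ih =>
    intro M hM
    have hMdet : M.det ≠ 0 := hM.ne_zero
    have hcol : (fun i => M i 0) ≠ 0 := by
      intro h
      exact hMdet (Matrix.det_eq_zero_of_column_eq_zero 0 (fun i => congrFun h i))
    obtain ⟨nn, u, k, hku, hcu⟩ := exists_primitive _ hcol
    obtain ⟨U₀, hU₀, hU₀col⟩ := exists_completion u k hku
    set φ := ⇑(PadicInt.Coe.ringHom (p := p)) with hφ
    set B : Matrix (Fin (e+1)) (Fin (e+1)) ℚ_[p] := U₀⁻¹.map φ * M with hB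
    have hmap1 : (1 : Matrix (Fin (e+1)) (Fin (e+1)) ℤ_[p]).map φ = 1 :=
      Matrix.map_one _ (map_zero _) (map_one _)
    have hUB : M = U₀.map φ * B := by
      rw [hB, ← Matrix.mul_assoc, ← Matrix.map_mul, Matrix.mul_nonsing_inv _ hU₀, hmap1, one_mul]
    have hVU' : U₀⁻¹.map φ * U₀.map φ = 1 := by
      rw [← Matrix.map_mul, Matrix.nonsing_inv_mul _ hU₀, hmap1]
    have hB0 : ∀ i, B i 0 = (p:ℚ_[p])^nn * (1 : Matrix (Fin (e+1)) (Fin (e+1)) ℚ_[p]) i 0 := by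
      intro i
      rw [← hVU', Matrix.mul_apply, hB, Matrix.mul_apply, Finset.mul_sum]
      refine Finset.sum_congr rfl (fun k' _ => ?_)
      rw [Matrix.map_apply, Matrix.map_apply, hU₀col k', hcu k']
      show φ (U₀⁻¹ i k') * ((p:ℚ_[p])^nn * φ (u k')) = (p:ℚ_[p])^nn * (φ (U₀⁻¹ i k') * φ (u k'))
      ring
    have hB00 : B 0 0 = (p:ℚ_[p])^nn := by rw [hB0, Matrix.one_apply_eq, mul_one]
    have hB0s : ∀ i' : Fin e, B i'.succ 0 = 0 := by
      intro i'
      rw [hB0, Matrix.one_apply_ne (Fin.succ_ne_zero i'), mul_zero]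
    have hBdet : B.det ≠ 0 := by
      intro h
      rw [hUB, Matrix.det_mul, h, mul_zero] at hMdet
      exact hMdet rfl
    set M' := B.submatrix Fin.succ Fin.succ with hM'
    have hdetB : B.det = (p:ℚ_[p])^nn * M'.det := by
      rw [det_col0 B hB0s, hB00]
    have hM'det : IsUnit M'.det := by
      rw [isUnit_iff_ne_zero]
      intro h
      rw [hdetB, h, mul_zero] at hBdet
      exact hBdet rfl
    obtain ⟨U'', A'', n'', hU'', hM'eq, hdiag'', hlow'', hred''⟩ := ih M' hM'det
    obtain ⟨s, y, hy, hr⟩ := exists_row_red n'' A'' hdiag'' hlow'' (fun j => B 0 j.succ)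
    set C : Matrix (Fin (e+1)) (Fin (e+1)) ℤ_[p] :=
      Matrix.of (fun i => Fin.cases (Fin.cons 1 s) (fun i' => Fin.cons 0 (U'' i')) i) with hC
    set A : Matrix (Fin (e+1)) (Fin (e+1)) ℚ_[p] :=
      Matrix.of (fun i => Fin.cases (Fin.cons ((p:ℚ_[p])^nn) y) (fun i' => Fin.cons 0 (A'' i')) i)
      with hA
    have hφ1 : φ 1 = 1 := rfl
    have hφ0 : φ 0 = 0 := rfl
    have hBCA : B = C.map φ * A := by
      ext i j
      rw [Matrix.mul_apply, Fin.sum_univ_succ]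
      refine Fin.cases ?_ (fun i' => ?_) i <;> refine Fin.cases ?_ (fun j' => ?_) j <;>
        simp only [hC, hA, Matrix.map_apply, Matrix.of_apply, Fin.cases_zero, Fin.cases_succ,
          Fin.cons_zero, Fin.cons_succ, hφ1, hφ0, one_mul, zero_mul, mul_zero, zero_add,
          Finset.sum_const_zero, add_zero]
      · exact hB00
      · exact hr j'
      · exact hB0s i'
      · show M' i' j' = ∑ x, φ (U'' i' x) * A'' x j'
        rw [hM'eq, Matrix.mul_apply]
        rfl
    have hCdet : IsUnit C.det := by
      have h0 : ∀ i' : Fin e, C i'.succ 0 = 0 := fun i' => by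
        simp only [hC, Matrix.of_apply, Fin.cases_succ, Fin.cons_zero]
      have hsub : C.submatrix Fin.succ Fin.succ = U'' := by
        ext i' j'
        simp only [Matrix.submatrix_apply, hC, Matrix.of_apply, Fin.cases_succ, Fin.cons_succ]
      rw [det_col0 C h0, hsub]
      have : C 0 0 = 1 := by simp only [hC, Matrix.of_apply, Fin.cases_zero, Fin.cons_zero]
      rw [this, one_mul]
      exact hU''
    refine ⟨U₀ * C, A, Fin.cons nn n'', by rw [Matrix.det_mul]; exact hU₀.mul hCdet, ?_, ?_, ?_, ?_⟩
    · rw [coe_fun_eq_ringHom, ← hφ, Matrix.map_mul, Matrix.mul_assoc, ← hBCA, hUB]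
    · intro i
      refine Fin.cases ?_ (fun i' => ?_) i <;>
        simp only [hA, Matrix.of_apply, Fin.cases_zero, Fin.cases_succ, Fin.cons_zero,
          Fin.cons_succ]
      · exact hdiag'' i'
    · intro i j hji
      rcases Fin.eq_zero_or_eq_succ i with rfl | ⟨i', rfl⟩
      · exact absurd hji (Fin.not_lt_zero _)
      rcases Fin.eq_zero_or_eq_succ j with rfl | ⟨j', rfl⟩
      · simp only [hA, Matrix.of_apply, Fin.cases_succ, Fin.cons_zero]
      · simp only [hA, Matrix.of_apply, Fin.cases_succ, Fin.cons_succ]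
        exact hlow'' i' j' (by simpa [Fin.succ_lt_succ_iff] using hji)
    · intro i j hij
      rcases Fin.eq_zero_or_eq_succ j with rfl | ⟨j', rfl⟩
      · exact absurd hij (Fin.not_lt_zero _)
      rcases Fin.eq_zero_or_eq_succ i with rfl | ⟨i', rfl⟩
      · simp only [hA, Matrix.of_apply, Fin.cases_zero, Fin.cases_succ, Fin.cons_zero,
          Fin.cons_succ]
        exact hy j'
      · simp only [hA, Matrix.of_apply, Fin.cases_succ, Fin.cons_succ, Fin.cons_zero]
        exact hred'' i' j' (by simpa [Fin.succ_lt_succ_iff] using hij)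

section Uniqueness

variable {d : ℕ}

/-- If `W.map coe * A₁ = A₂` with both `Aᵢ` triangular (diag `p^{nᵢ}`), then `W` is
upper triangular. -/
lemma hnf_low (W : Matrix (Fin d) (Fin d) ℤ_[p]) (A₁ A₂ : Matrix (Fin d) (Fin d) ℚ_[p])
    (n₁ : Fin d → ℤ) (hd₁ : ∀ i, A₁ i i = (p:ℚ_[p]) ^ n₁ i)
    (hl₁ : ∀ i j, j < i → A₁ i j = 0) (hl₂ : ∀ i j, j < i → A₂ i j = 0)
    (hWA : W.map (fun u => (u:ℚ_[p])) * A₁ = A₂) :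
    ∀ j i, j < i → W i j = 0 := by
  have key : ∀ m : ℕ, ∀ j : Fin d, (j:ℕ) = m → ∀ i, j < i → W i j = 0 := by
    intro m
    induction m using Nat.strong_induction_on with
    | _ m ihm =>
      intro j hj i hij
      have h0 : (0:ℚ_[p]) = (W i j : ℚ_[p]) * A₁ j j := by
        rw [← hl₂ i j hij, ← hWA, Matrix.mul_apply, Finset.sum_eq_single j]
        · rfl
        · intro k _ hk
          rcases lt_or_gt_of_ne hk with hlt | hgt
          · have hkm : (k:ℕ) < m := by rw [← hj]; exact hlt
            have : W i k = 0 := ihm (k:ℕ) hkm k rfl i (lt_trans hlt hij)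
            rw [Matrix.map_apply, this]
            show ((0:ℤ_[p]):ℚ_[p]) * _ = 0
            rw [PadicInt.coe_zero, zero_mul]
          · rw [hl₁ k j hgt, mul_zero]
        · intro h; exact absurd (Finset.mem_univ j) h
      rw [hd₁ j] at h0
      have : (W i j : ℚ_[p]) = 0 := by
        rcases mul_eq_zero.mp h0.symm with h | h
        · exact h
        · exact absurd h (zpow_ne_zero _ pq_ne_zero)
      exact PadicInt.coe_eq_zero.mp this
  exact fun j i hij => key (j:ℕ) j rfl i hij

/-- Under the same hypotheses, the diagonal relation. -/
lemma hnf_diag (W : Matrix (Fin d) (Fin d) ℤ_[p]) (A₁ A₂ : Matrix (Fin d) (Fin d) ℚ_[p])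
    (n₁ n₂ : Fin d → ℤ) (hd₁ : ∀ i, A₁ i i = (p:ℚ_[p]) ^ n₁ i)
    (hd₂ : ∀ i, A₂ i i = (p:ℚ_[p]) ^ n₂ i)
    (hl₁ : ∀ i j, j < i → A₁ i j = 0) (hl₂ : ∀ i j, j < i → A₂ i j = 0)
    (hWA : W.map (fun u => (u:ℚ_[p])) * A₁ = A₂) :
    ∀ i, (W i i : ℚ_[p]) * (p:ℚ_[p]) ^ (n₁ i) = (p:ℚ_[p]) ^ (n₂ i) := by
  intro i
  have hlow := hnf_low W A₁ A₂ n₁ hd₁ hl₁ hl₂ hWA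
  have : A₂ i i = (W i i : ℚ_[p]) * A₁ i i := by
    rw [← hWA, Matrix.mul_apply, Finset.sum_eq_single i]
    · rfl
    · intro k _ hk
      rcases lt_or_gt_of_ne hk with hlt | hgt
      · rw [Matrix.map_apply, hlow k i hlt]
        show ((0:ℤ_[p]):ℚ_[p]) * _ = 0
        rw [PadicInt.coe_zero, zero_mul]
      · rw [hl₁ k i hgt, mul_zero]
    · intro h; exact absurd (Finset.mem_univ i) h
  rw [hd₂ i, hd₁ i] at this
  exact this.symm

/-- Comparison of the diagonal exponents of two Hermite forms of the same matrix. -/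
lemma hnf_le (U₁ U₂ : Matrix (Fin d) (Fin d) ℤ_[p]) (A₁ A₂ : Matrix (Fin d) (Fin d) ℚ_[p])
    (n₁ n₂ : Fin d → ℤ) (hU₂ : IsUnit U₂.det)
    (hd₁ : ∀ i, A₁ i i = (p:ℚ_[p]) ^ n₁ i) (hd₂ : ∀ i, A₂ i i = (p:ℚ_[p]) ^ n₂ i)
    (hl₁ : ∀ i j, j < i → A₁ i j = 0) (hl₂ : ∀ i j, j < i → A₂ i j = 0)
    (hEq : U₁.map (fun u => (u:ℚ_[p])) * A₁ = U₂.map (fun u => (u:ℚ_[p])) * A₂) :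
    ∀ i, n₁ i ≤ n₂ i := by
  intro i
  set W : Matrix (Fin d) (Fin d) ℤ_[p] := U₂⁻¹ * U₁ with hW
  have hmap1 : (1 : Matrix (Fin d) (Fin d) ℤ_[p]).map (fun u : ℤ_[p] => (u:ℚ_[p])) = 1 := by
    rw [coe_fun_eq_ringHom]; exact Matrix.map_one _ (map_zero _) (map_one _)
  have hWA : W.map (fun u => (u:ℚ_[p])) * A₁ = A₂ := by
    rw [hW, coe_fun_eq_ringHom, Matrix.map_mul, Matrix.mul_assoc, ← coe_fun_eq_ringHom, hEq,
      coe_fun_eq_ringHom, ← Matrix.mul_assoc, ← Matrix.map_mul,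
      Matrix.nonsing_inv_mul _ hU₂, ← coe_fun_eq_ringHom, hmap1, one_mul]
  have hdiag := hnf_diag W A₁ A₂ n₁ n₂ hd₁ hd₂ hl₁ hl₂ hWA i
  have hnorm : ‖(W i i : ℚ_[p])‖ ≤ 1 := PadicInt.padic_norm_e_of_padicInt (W i i) ▸
    PadicInt.norm_le_one (W i i)
  have hWval : (W i i : ℚ_[p]) = (p:ℚ_[p]) ^ (n₂ i - n₁ i) := by
    rw [zpow_sub₀ pq_ne_zero, eq_div_iff (zpow_ne_zero _ pq_ne_zero)]
    exact hdiag
  rw [hWval, Padic.norm_p_zpow] at hnorm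
  have hple : (1:ℝ) < (p:ℝ) := by exact_mod_cast hp.out.one_lt
  have h2 : (p:ℝ) ^ (-(n₂ i - n₁ i)) ≤ (p:ℝ) ^ (0:ℤ) := by
    rw [zpow_zero]; exact hnorm
  have := ((zpow_right_strictMono₀ hple).le_iff_le).mp h2
  omega

/-- Uniqueness of the `p`-adic Hermite normal form. -/
lemma hnf_unique (U₁ U₂ : Matrix (Fin d) (Fin d) ℤ_[p]) (A₁ A₂ : Matrix (Fin d) (Fin d) ℚ_[p])
    (n₁ n₂ : Fin d → ℤ) (hU₁ : IsUnit U₁.det) (hU₂ : IsUnit U₂.det)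
    (hd₁ : ∀ i, A₁ i i = (p:ℚ_[p]) ^ n₁ i) (hd₂ : ∀ i, A₂ i i = (p:ℚ_[p]) ^ n₂ i)
    (hl₁ : ∀ i j, j < i → A₁ i j = 0) (hl₂ : ∀ i j, j < i → A₂ i j = 0)
    (hr₁ : ∀ i j, i < j → IsRed p (n₁ j) (A₁ i j)) (hr₂ : ∀ i j, i < j → IsRed p (n₂ j) (A₂ i j))
    (hEq : U₁.map (fun u => (u:ℚ_[p])) * A₁ = U₂.map (fun u => (u:ℚ_[p])) * A₂) :
    U₁ = U₂ ∧ A₁ = A₂ := by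
  have hn : n₁ = n₂ := funext fun i => le_antisymm
    (hnf_le U₁ U₂ A₁ A₂ n₁ n₂ hU₂ hd₁ hd₂ hl₁ hl₂ hEq i)
    (hnf_le U₂ U₁ A₂ A₁ n₂ n₁ hU₁ hd₂ hd₁ hl₂ hl₁ hEq.symm i)
  subst hn
  set W : Matrix (Fin d) (Fin d) ℤ_[p] := U₂⁻¹ * U₁ with hW
  have hmap1 : (1 : Matrix (Fin d) (Fin d) ℤ_[p]).map (fun u : ℤ_[p] => (u:ℚ_[p])) = 1 := by
    rw [coe_fun_eq_ringHom]; exact Matrix.map_one _ (map_zero _) (map_one _)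
  have hWA : W.map (fun u => (u:ℚ_[p])) * A₁ = A₂ := by
    rw [hW, coe_fun_eq_ringHom, Matrix.map_mul, Matrix.mul_assoc, ← coe_fun_eq_ringHom, hEq,
      coe_fun_eq_ringHom, ← Matrix.mul_assoc, ← Matrix.map_mul,
      Matrix.nonsing_inv_mul _ hU₂, ← coe_fun_eq_ringHom, hmap1, one_mul]
  have hlow := hnf_low W A₁ A₂ n₁ hd₁ hl₁ hl₂ hWA
  have hdiagW : ∀ i, (W i i : ℚ_[p]) = 1 := by
    intro i
    have h := hnf_diag W A₁ A₂ n₁ n₁ hd₁ hd₂ hl₁ hl₂ hWA i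
    exact mul_right_cancel₀ (zpow_ne_zero _ pq_ne_zero) (h.trans (one_mul _).symm)
  have hup : ∀ m : ℕ, ∀ j : Fin d, (j:ℕ) = m → ∀ i, i < j → W i j = 0 := by
    intro m
    induction m using Nat.strong_induction_on with
    | _ m ihm =>
      intro j hj i hij
      have hij' : i ≠ j := ne_of_lt hij
      have hsum : A₂ i j = (W i i : ℚ_[p]) * A₁ i j + (W i j : ℚ_[p]) * A₁ j j := by
        rw [← hWA, Matrix.mul_apply,
          ← Finset.sum_subset (Finset.subset_univ ({i, j} : Finset (Fin d)))]
        · rw [Finset.sum_pair hij']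
          rfl
        · intro k _ hk
          simp only [Finset.mem_insert, Finset.mem_singleton, not_or] at hk
          obtain ⟨hki, hkj⟩ := hk
          rcases lt_trichotomy k j with hlt | heq | hgt
          · rcases lt_trichotomy k i with hlt2 | heq2 | hgt2
            · rw [Matrix.map_apply, hlow k i hlt2, PadicInt.coe_zero, zero_mul]
            · exact absurd heq2 hki
            · have hkm : (k:ℕ) < m := by rw [← hj]; exact hlt
              have : W i k = 0 := ihm (k:ℕ) hkm k rfl i hgt2
              rw [Matrix.map_apply, this, PadicInt.coe_zero, zero_mul]
          · exact absurd heq hkj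
          · rw [hl₁ k j hgt, mul_zero]
      rw [hdiagW i, one_mul, hd₁ j] at hsum
      have hred : A₂ i j = A₁ i j :=
        red_unique (hr₂ i j hij) (hr₁ i j hij) (W i j) (by rw [hsum]; ring)
      have hzero : (W i j : ℚ_[p]) * (p:ℚ_[p]) ^ (n₁ j) = 0 := by
        rw [hred] at hsum
        exact left_eq_add.mp hsum
      rcases mul_eq_zero.mp hzero with h | h
      · exact PadicInt.coe_eq_zero.mp h
      · exact absurd h (zpow_ne_zero _ pq_ne_zero)
  have hW1 : W = 1 := by
    ext i j
    rcases lt_trichotomy i j with h | h | h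
    · rw [hup (j:ℕ) j rfl i h, Matrix.one_apply_ne (ne_of_lt h)]
    · subst h
      rw [Matrix.one_apply_eq]
      have h1 : (W i i : ℚ_[p]) = ((1:ℤ_[p]) : ℚ_[p]) := by rw [PadicInt.coe_one]; exact hdiagW i
      exact Subtype.coe_injective h1
    · rw [hlow j i h, Matrix.one_apply_ne (ne_of_gt h)]
  constructor
  · have hU : U₂ * W = U₁ := by
      rw [hW, ← Matrix.mul_assoc, Matrix.mul_nonsing_inv _ hU₂, one_mul]
    rw [hW1, mul_one] at hU
    exact hU.symm
  · rw [← hWA, hW1, hmap1, one_mul]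

end Uniqueness

/-- `p`-adic Hermite normal form: any `M ∈ GL_d(ℚ_p)` factors uniquely as `M = U·A`
with `U ∈ GL_d(ℤ_p)` and `A` upper triangular with diagonal entries `p^{n_i}` and,
for `i < j`, entries `a_{i,j} = b_{i,j}/p^{v_{i,j}}` with `0 ≤ b_{i,j} < p^{n_j + v_{i,j}}`. -/
theorem stmt11 {p : ℕ} [Fact p.Prime] (d : ℕ)
    (M : Matrix (Fin d) (Fin d) ℚ_[p]) (hM : IsUnit M.det) :
    ∃! UA : Matrix (Fin d) (Fin d) ℤ_[p] × Matrix (Fin d) (Fin d) ℚ_[p],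
      IsUnit UA.1.det ∧
      M = UA.1.map (fun u => (u : ℚ_[p])) * UA.2 ∧
      ∃ n : Fin d → ℤ,
        (∀ i, UA.2 i i = (p : ℚ_[p]) ^ n i) ∧
        (∀ i j, j < i → UA.2 i j = 0) ∧
        (∀ i j, i < j → ∃ b v : ℤ, 0 ≤ b ∧ (b : ℚ) < (p : ℚ) ^ (n j + v) ∧
          UA.2 i j = (b : ℚ_[p]) / (p : ℚ_[p]) ^ v) := by
  obtain ⟨U, A, n, hU, hMeq, hdiag, hlow, hred⟩ := exists_hnf d M hM
  refine ⟨(U, A), ⟨hU, hMeq, n, hdiag, hlow, fun i j hij => hred i j hij⟩, ?_⟩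
  rintro ⟨U', A'⟩ ⟨hU', hMeq', n', hdiag', hlow', hred'⟩
  have hEq : U'.map (fun u => (u:ℚ_[p])) * A' = U.map (fun u => (u:ℚ_[p])) * A := by
    rw [← hMeq, ← hMeq']
  obtain ⟨h1, h2⟩ := hnf_unique U' U A' A n' n hU' hU hdiag' hdiag hlow' hlow
    (fun i j h => hred' i j h) (fun i j h => hred i j h) hEq
  exact Prod.ext h1 h2
end

section
/- (Precision Lemma.) Let E and F be finite-dimensional ℚ_p-vector spaces equipped with ultrametric norms, let U ⊆ E be open, and let f : U → F. Let v ∈ U and suppose that f is strictly differentiable at v with differential df_v : E → F, in the sense that for every ε > 0 there is a neighborhood of v on which ‖f(y) − f(x) − df_v(y−x)‖_F ≤ ε·‖y−x‖_E for all x, y in that neighborhood; suppose moreover that df_v is surjective. Then for every ρ ∈ (0,1] there exists δ > 0 such that for every r ∈ (0,δ) and every ℤ_p-submodule H of E satisfying B_E(ρr) ⊆ H ⊆ B_E(r), one has v + H ⊆ U and f(v + H) = f(v) + df_v(H) (equality of subsets of F). -/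
/-- The precision Lemma: if `f` is strictly differentiable at `v` with surjective
differential `df_v`, then for every `ρ ∈ (0,1]` there is `δ > 0` such that every
`ℤ_p`-lattice `H` with `B_E(ρr) ⊆ H ⊆ B_E(r)` (for some `0 < r < δ`) satisfies
`f(v + H) = f(v) + df_v(H)`. -/
theorem stmt12 {p : ℕ} [Fact p.Prime]
    (E F : Type*) [AddCommGroup E] [Module ℚ_[p] E] [Module ℤ_[p] E]
    [IsScalarTower ℤ_[p] ℚ_[p] E] [AddCommGroup F] [Module ℚ_[p] F]
    [FiniteDimensional ℚ_[p] E] [FiniteDimensional ℚ_[p] F]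
    (νE : E → ℝ) (νF : F → ℝ)
    (hEnn : ∀ x : E, 0 ≤ νE x) (hE0 : ∀ x : E, νE x = 0 ↔ x = 0)
    (hEs : ∀ (c : ℚ_[p]) (x : E), νE (c • x) = ‖c‖ * νE x)
    (hEa : ∀ x y : E, νE (x + y) ≤ max (νE x) (νE y))
    (hFnn : ∀ x : F, 0 ≤ νF x) (hF0 : ∀ x : F, νF x = 0 ↔ x = 0)
    (hFs : ∀ (c : ℚ_[p]) (x : F), νF (c • x) = ‖c‖ * νF x)
    (hFa : ∀ x y : F, νF (x + y) ≤ max (νF x) (νF y))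
    (U : Set E) (hUopen : ∀ x ∈ U, ∃ ε > (0 : ℝ), ∀ y : E, νE (y - x) ≤ ε → y ∈ U)
    (f : E → F) (v : E) (hv : v ∈ U)
    (dfv : E →ₗ[ℚ_[p]] F)
    (hdiff : ∀ ε > (0 : ℝ), ∃ η > (0 : ℝ), ∀ x y : E,
      νE (x - v) ≤ η → νE (y - v) ≤ η →
        νF (f y - f x - dfv (y - x)) ≤ ε * νE (y - x))
    (hsurj : Function.Surjective dfv) :
    ∀ ρ : ℝ, 0 < ρ → ρ ≤ 1 → ∃ δ > (0 : ℝ), ∀ r : ℝ, 0 < r → r < δ →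
      ∀ H : Submodule ℤ_[p] E,
        {x : E | νE x ≤ ρ * r} ⊆ (H : Set E) →
        (H : Set E) ⊆ {x : E | νE x ≤ r} →
        (∀ h ∈ H, v + h ∈ U) ∧
        {y : F | ∃ h ∈ H, y = f (v + h)} = {y : F | ∃ h ∈ H, y = f v + dfv h} := by
  intro ρ hρ0 hρ1
  -- Equip `E` and `F` with normed space structures coming from `νE`, `νF`.
  letI : NormedAddCommGroup E := AddGroupNorm.toNormedAddCommGroup
    { toFun := νE
      map_zero' := (hE0 0).mpr rfl
      add_le' := fun x y => (hEa x y).trans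
        (max_le (le_add_of_nonneg_right (hEnn y)) (le_add_of_nonneg_left (hEnn x)))
      neg' := fun x => by simpa using hEs (-1) x
      eq_zero_of_map_eq_zero' := fun x h => (hE0 x).mp h }
  letI : NormedSpace ℚ_[p] E := { norm_smul_le := fun c x => le_of_eq (hEs c x) }
  letI : NormedAddCommGroup F := AddGroupNorm.toNormedAddCommGroup
    { toFun := νF
      map_zero' := (hF0 0).mpr rfl
      add_le' := fun x y => (hFa x y).trans
        (max_le (le_add_of_nonneg_right (hFnn y)) (le_add_of_nonneg_left (hFnn x)))
      neg' := fun x => by simpa using hFs (-1) x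
      eq_zero_of_map_eq_zero' := fun x h => (hF0 x).mp h }
  letI : NormedSpace ℚ_[p] F := { norm_smul_le := fun c x => le_of_eq (hFs c x) }
  haveI : CompleteSpace E := FiniteDimensional.complete ℚ_[p] E
  have hnE : ∀ x : E, ‖x‖ = νE x := fun _ => rfl
  have hnF : ∀ x : F, ‖x‖ = νF x := fun _ => rfl
  -- a linear section of `dfv`
  obtain ⟨g, hg⟩ := dfv.exists_rightInverse_of_surjective (LinearMap.range_eq_top.mpr hsurj)
  have hginv : ∀ w : F, dfv (g w) = w := fun w => congrArg (fun T => T w) hg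
  -- bounds for `g` and `dfv`
  obtain ⟨C, hC1, hCb⟩ : ∃ C : ℝ, 1 ≤ C ∧ ∀ w : F, ‖g w‖ ≤ C * ‖w‖ := by
    refine ⟨max ‖g.toContinuousLinearMap‖ 1, le_max_right _ _, fun w => ?_⟩
    calc ‖g w‖ = ‖g.toContinuousLinearMap w‖ := rfl
      _ ≤ ‖g.toContinuousLinearMap‖ * ‖w‖ := g.toContinuousLinearMap.le_opNorm w
      _ ≤ max ‖g.toContinuousLinearMap‖ 1 * ‖w‖ :=
          mul_le_mul_of_nonneg_right (le_max_left _ _) (norm_nonneg w)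
  obtain ⟨L, hL0, hLb⟩ : ∃ L : ℝ, 0 ≤ L ∧ ∀ x : E, ‖dfv x‖ ≤ L * ‖x‖ :=
    ⟨‖dfv.toContinuousLinearMap‖, norm_nonneg _,
      fun x => dfv.toContinuousLinearMap.le_opNorm x⟩
  have hC0 : (0:ℝ) < C := lt_of_lt_of_le one_pos hC1
  set ε : ℝ := ρ / (2 * C) with hεdef
  have hε : 0 < ε := div_pos hρ0 (by positivity)
  have hCε : C * ε = ρ / 2 := by
    rw [hεdef]; field_simp
  have hCε' : C * ε ≤ ρ := by rw [hCε]; linarith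
  have hCεhalf : C * ε ≤ 1 / 2 := by rw [hCε]; linarith
  obtain ⟨η, hη, hdiff'⟩ := hdiff ε hε
  obtain ⟨εU, hεU, hU⟩ := hUopen v hv
  refine ⟨min η εU, lt_min hη hεU, ?_⟩
  intro r hr hrδ H hHl hHu
  have hrη : r ≤ η := le_of_lt (lt_of_lt_of_le hrδ (min_le_left _ _))
  have hrU : r ≤ εU := le_of_lt (lt_of_lt_of_le hrδ (min_le_right _ _))
  have hHr : ∀ x ∈ H, νE x ≤ r := fun x hx => hHu hx
  have hmemU : ∀ h ∈ H, v + h ∈ U := by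
    intro h hh
    apply hU
    rw [add_sub_cancel_left]
    exact (hHr h hh).trans hrU
  refine ⟨hmemU, ?_⟩
  -- the basic error estimate, for elements of the ball of radius `r`
  have key : ∀ x y : E, νE x ≤ r → νE y ≤ r →
      ‖f (v + y) - f (v + x) - dfv (y - x)‖ ≤ ε * ‖y - x‖ := by
    intro x y hx hy
    have h1 : νE (v + x - v) ≤ η := by rw [add_sub_cancel_left]; exact hx.trans hrη
    have h2 : νE (v + y - v) ≤ η := by rw [add_sub_cancel_left]; exact hy.trans hrη
    have := hdiff' (v + x) (v + y) h1 h2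
    rw [hnF, hnE]
    simpa [add_sub_add_left_eq_sub] using this
  have h0r : νE (0 : E) ≤ r := by rw [(hE0 0).mpr rfl]; exact le_of_lt hr
  ext y
  simp only [Set.mem_setOf_eq]
  constructor
  · -- f(v+H) ⊆ f(v) + dfv(H)
    rintro ⟨h, hh, rfl⟩
    have hhr : νE h ≤ r := hHr h hh
    have herr : ‖f (v + h) - f v - dfv h‖ ≤ ε * ‖h‖ := by
      have := key 0 h h0r hhr
      simpa using this
    have hun : νE (g (f (v + h) - f v - dfv h)) ≤ ρ * r := by
      rw [← hnE]
      calc ‖g (f (v + h) - f v - dfv h)‖ ≤ C * ‖f (v + h) - f v - dfv h‖ := hCb _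
        _ ≤ C * (ε * ‖h‖) := mul_le_mul_of_nonneg_left herr (le_of_lt hC0)
        _ = C * ε * ‖h‖ := by ring
        _ ≤ ρ * ‖h‖ := mul_le_mul_of_nonneg_right hCε' (norm_nonneg _)
        _ ≤ ρ * r := mul_le_mul_of_nonneg_left hhr (le_of_lt hρ0)
    have huH : g (f (v + h) - f v - dfv h) ∈ H := hHl hun
    refine ⟨h + g (f (v + h) - f v - dfv h), H.add_mem hh huH, ?_⟩
    have hdfv : dfv (h + g (f (v + h) - f v - dfv h))
        = dfv h + (f (v + h) - f v - dfv h) := by rw [map_add, hginv]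
    rw [hdfv]; abel
  · -- f(v) + dfv(H) ⊆ f(v+H) : Newton iteration
    rintro ⟨h, hh, rfl⟩
    set seq : ℕ → E := fun n => Nat.rec h (fun _ x => x + g (f v + dfv h - f (v + x))) n
      with hseq
    have hseqS : ∀ n, seq (n + 1) = seq n + g (f v + dfv h - f (v + seq n)) := fun n => rfl
    have halfpow : ∀ n : ℕ, (0:ℝ) < (1/2:ℝ) ^ n := fun n => by positivity
    have halfpow1 : ∀ n : ℕ, ((1:ℝ)/2) ^ n ≤ 1 :=
      fun n => pow_le_one₀ (by norm_num) (by norm_num)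
    -- one Newton step
    have step : ∀ (x : E), x ∈ H → ∀ n : ℕ,
        ‖f v + dfv h - f (v + x)‖ ≤ ε * r * (1/2) ^ n →
        x + g (f v + dfv h - f (v + x)) ∈ H ∧
        ‖f v + dfv h - f (v + (x + g (f v + dfv h - f (v + x))))‖
          ≤ ε * r * (1/2) ^ (n + 1) := by
      intro x hxH n hxb
      have hdb : ‖g (f v + dfv h - f (v + x))‖ ≤ C * (ε * r * (1/2) ^ n) :=
        (hCb _).trans (mul_le_mul_of_nonneg_left hxb (le_of_lt hC0))
      have hdρ : νE (g (f v + dfv h - f (v + x))) ≤ ρ * r := by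
        rw [← hnE]
        refine hdb.trans ?_
        calc C * (ε * r * (1/2:ℝ) ^ n) = (C * ε) * r * (1/2) ^ n := by ring
          _ ≤ ρ * r * (1/2) ^ n := by
              refine mul_le_mul_of_nonneg_right
                (mul_le_mul_of_nonneg_right hCε' (le_of_lt hr)) (le_of_lt (halfpow n))
          _ ≤ ρ * r * 1 := mul_le_mul_of_nonneg_left (halfpow1 n) (by positivity)
          _ = ρ * r := mul_one _
      have hdH : g (f v + dfv h - f (v + x)) ∈ H := hHl hdρ
      have hxdH : x + g (f v + dfv h - f (v + x)) ∈ H := H.add_mem hxH hdH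
      refine ⟨hxdH, ?_⟩
      have hkey := key x (x + g (f v + dfv h - f (v + x))) (hHr _ hxH) (hHr _ hxdH)
      have harg : x + g (f v + dfv h - f (v + x)) - x = g (f v + dfv h - f (v + x)) := by
        abel
      rw [harg, hginv] at hkey
      have heq : f v + dfv h - f (v + (x + g (f v + dfv h - f (v + x))))
          = -(f (v + (x + g (f v + dfv h - f (v + x)))) - f (v + x)
              - (f v + dfv h - f (v + x))) := by abel
      rw [heq, norm_neg]
      refine hkey.trans ?_
      calc ε * ‖g (f v + dfv h - f (v + x))‖ ≤ ε * (C * (ε * r * (1/2) ^ n)) :=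
          mul_le_mul_of_nonneg_left hdb (le_of_lt hε)
        _ = (C * ε) * (ε * r * (1/2) ^ n) := by ring
        _ ≤ (1/2) * (ε * r * (1/2) ^ n) :=
            mul_le_mul_of_nonneg_right hCεhalf (by positivity)
        _ = ε * r * (1/2) ^ (n + 1) := by ring
    -- the invariant
    have inv : ∀ n, seq n ∈ H ∧
        ‖f v + dfv h - f (v + seq n)‖ ≤ ε * r * (1/2) ^ n := by
      intro n
      induction n with
      | zero =>
        refine ⟨hh, ?_⟩
        show ‖f v + dfv h - f (v + h)‖ ≤ ε * r * (1/2) ^ 0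
        have h1 := key 0 h h0r (hHr h hh)
        simp only [sub_zero, add_zero] at h1
        have heq : f v + dfv h - f (v + h) = -(f (v + h) - f v - dfv h) := by abel
        rw [heq, norm_neg, pow_zero, mul_one]
        exact h1.trans (mul_le_mul_of_nonneg_left (hHr h hh) (le_of_lt hε))
      | succ n ih =>
        obtain ⟨hm, hb⟩ := step (seq n) ih.1 n ih.2
        rw [hseqS n]
        exact ⟨hm, hb⟩
    -- the sequence is Cauchy with geometric rate
    have hdist : ∀ n, dist (seq n) (seq (n + 1)) ≤ (ρ * r / 2) * (1/2) ^ n := by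
      intro n
      rw [dist_eq_norm, hseqS n]
      have heq : seq n - (seq n + g (f v + dfv h - f (v + seq n)))
          = -(g (f v + dfv h - f (v + seq n))) := by abel
      rw [heq, norm_neg]
      have h1 : ‖g (f v + dfv h - f (v + seq n))‖ ≤ C * (ε * r * (1/2) ^ n) :=
        (hCb _).trans (mul_le_mul_of_nonneg_left (inv n).2 (le_of_lt hC0))
      have h2 : C * (ε * r * (1/2:ℝ) ^ n) = (ρ * r / 2) * (1/2) ^ n := by
        rw [show C * (ε * r * (1/2:ℝ) ^ n) = (C * ε) * r * (1/2) ^ n from by ring, hCε]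
        ring
      exact le_of_le_of_eq h1 h2
    have hcauchy : CauchySeq seq :=
      cauchySeq_of_le_geometric (1/2) (ρ * r / 2) (by norm_num) hdist
    obtain ⟨h', hlim⟩ := cauchySeq_tendsto_of_complete hcauchy
    have hdistlim : ∀ n, dist (seq n) h' ≤ ρ * r * (1/2) ^ n := by
      intro n
      have h1 := dist_le_of_le_geometric_of_tendsto (1/2) (ρ * r / 2)
        (by norm_num) hdist hlim n
      refine h1.trans (le_of_eq ?_)
      have h2 : (1:ℝ) - 1/2 = 1/2 := by norm_num
      rw [h2]
      field_simp
    -- the limit lies in H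
    have hh'H : h' ∈ H := by
      have hd0 : νE (h' - h) ≤ ρ * r := by
        rw [← hnE]
        have := hdistlim 0
        rw [pow_zero, mul_one] at this
        calc ‖h' - h‖ = dist h' (seq 0) := (dist_eq_norm _ _).symm
          _ = dist (seq 0) h' := dist_comm _ _
          _ ≤ ρ * r := this
      have := H.add_mem hh (hHl hd0)
      simpa using this
    -- and f(v + h') = f v + dfv h
    have hbnd : ∀ n : ℕ, ‖f v + dfv h - f (v + h')‖
        ≤ (ε * r + ε * (ρ * r) + L * (ρ * r)) * (1/2) ^ n := by
      intro n
      obtain ⟨hxH, hxb⟩ := inv n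
      have hk := key h' (seq n) (hHr h' hh'H) (hHr _ hxH)
      have hd : ‖seq n - h'‖ ≤ ρ * r * (1/2) ^ n := by
        rw [← dist_eq_norm]; exact hdistlim n
      have hεd : ‖f (v + seq n) - f (v + h') - dfv (seq n - h')‖
          ≤ ε * (ρ * r * (1/2) ^ n) :=
        hk.trans (mul_le_mul_of_nonneg_left hd (le_of_lt hε))
      have hLd : ‖dfv (seq n - h')‖ ≤ L * (ρ * r * (1/2) ^ n) :=
        (hLb _).trans (mul_le_mul_of_nonneg_left hd hL0)
      have h2 : ‖f (v + seq n) - f (v + h')‖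
          ≤ ε * (ρ * r * (1/2) ^ n) + L * (ρ * r * (1/2) ^ n) := by
        have heq : f (v + seq n) - f (v + h')
            = (f (v + seq n) - f (v + h') - dfv (seq n - h')) + dfv (seq n - h') := by
          abel
        rw [heq]
        exact (norm_add_le _ _).trans (add_le_add hεd hLd)
      have heq2 : f v + dfv h - f (v + h')
          = (f v + dfv h - f (v + seq n)) + (f (v + seq n) - f (v + h')) := by abel
      rw [heq2]
      refine (norm_add_le _ _).trans ?_
      calc ‖f v + dfv h - f (v + seq n)‖ + ‖f (v + seq n) - f (v + h')‖
          ≤ ε * r * (1/2) ^ n + (ε * (ρ * r * (1/2) ^ n) + L * (ρ * r * (1/2) ^ n)) :=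
            add_le_add hxb h2
        _ = (ε * r + ε * (ρ * r) + L * (ρ * r)) * (1/2) ^ n := by ring
    have hzero : ‖f v + dfv h - f (v + h')‖ ≤ 0 := by
      have htend : Filter.Tendsto
          (fun n : ℕ => (ε * r + ε * (ρ * r) + L * (ρ * r)) * (1/2:ℝ) ^ n)
          Filter.atTop (nhds 0) := by
        have := tendsto_pow_atTop_nhds_zero_of_lt_one
          (by norm_num : (0:ℝ) ≤ 1/2) (by norm_num : (1/2:ℝ) < 1)
        simpa using this.const_mul (ε * r + ε * (ρ * r) + L * (ρ * r))
      exact ge_of_tendsto' htend hbnd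
    have hfeq : f v + dfv h = f (v + h') := by
      have : f v + dfv h - f (v + h') = 0 :=
        norm_eq_zero.mp (le_antisymm hzero (norm_nonneg _))
      exact sub_eq_zero.mp this
    exact ⟨h', hh'H, hfeq⟩
end

section
/- Let f : ℚ_p^n → ℚ_p^m be a map whose m coordinate functions are all multivariate polynomials with coefficients in ℤ_p. Let v ∈ ℤ_p^n be such that the differential df_v : ℚ_p^n → ℚ_p^m (given by the Jacobian matrix of partial derivatives at v) is surjective. Let H be a ℤ_p-submodule of ℚ_p^n and r > 0 a real number such that H ⊆ B(r) = {x : ‖x‖_∞ ≤ r} and B_{ℚ_p^m}(p·r²) ⊆ df_v(H). Then f(v + H) = f(v) + df_v(H) (equality of subsets of ℚ_p^m). -/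
open MvPolynomial Finset Filter

namespace Stmt13Aux

variable {p : ℕ} [Fact p.Prime]

lemma ultra_sum {ι : Type*} (s : Finset ι) (f : ι → ℚ_[p]) {C : ℝ} (hC : 0 ≤ C)
    (h : ∀ i ∈ s, ‖f i‖ ≤ C) : ‖∑ i ∈ s, f i‖ ≤ C := by
  classical
  induction s using Finset.induction_on with
  | empty => simpa using hC
  | insert _ _ hx ih =>
      rw [Finset.sum_insert hx]
      exact le_trans (Padic.nonarchimedean _ _)
        (max_le (h _ (Finset.mem_insert_self _ _))
          (ih fun i hi => h i (Finset.mem_insert_of_mem hi)))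

lemma aeval_norm_le_one {n : ℕ} {x : Fin n → ℚ_[p]} (hx : ∀ i, ‖x i‖ ≤ 1)
    (Q : MvPolynomial (Fin n) ℤ_[p]) : ‖aeval x Q‖ ≤ 1 := by
  induction Q using MvPolynomial.induction_on with
  | C a =>
      rw [aeval_C, PadicInt.algebraMap_apply]
      exact a.2
  | add q r hq hr =>
      rw [map_add]
      exact le_trans (Padic.nonarchimedean _ _) (max_le hq hr)
  | mul_X q i hq =>
      rw [map_mul, aeval_X, norm_mul]
      exact mul_le_one₀ hq (norm_nonneg _) (hx i)

lemma lin_bound {n : ℕ} {x u : Fin n → ℚ_[p]} {s : ℝ} (hx : ∀ i, ‖x i‖ ≤ 1)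
    (hu : ∀ i, ‖u i‖ ≤ s) (hs0 : 0 ≤ s)
    (D : Fin n → MvPolynomial (Fin n) ℤ_[p]) :
    ‖∑ i, aeval x (D i) * u i‖ ≤ s := by
  refine ultra_sum _ _ hs0 fun i _ => ?_
  rw [norm_mul]
  calc ‖aeval x (D i)‖ * ‖u i‖ ≤ 1 * s :=
        mul_le_mul (aeval_norm_le_one hx _) (hu i) (norm_nonneg _) zero_le_one
    _ = s := one_mul s

lemma taylor_bound {n : ℕ} {w u : Fin n → ℚ_[p]} {s : ℝ}
    (hw : ∀ i, ‖w i‖ ≤ 1) (hu : ∀ i, ‖u i‖ ≤ s) (hs0 : 0 ≤ s) (hs1 : s ≤ 1)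
    (Q : MvPolynomial (Fin n) ℤ_[p]) :
    ‖aeval (w + u) Q - aeval w Q - ∑ i, aeval w (pderiv i Q) * u i‖ ≤ s ^ 2 := by
  have hs2 : (0:ℝ) ≤ s ^ 2 := sq_nonneg s
  induction Q using MvPolynomial.induction_on with
  | C a => simp [aeval_C, pderiv_C, hs2]
  | add q r hq hr =>
      have : aeval (w + u) (q + r) - aeval w (q + r)
            - ∑ i, aeval w (pderiv i (q + r)) * u i
          = (aeval (w + u) q - aeval w q - ∑ i, aeval w (pderiv i q) * u i)
            + (aeval (w + u) r - aeval w r - ∑ i, aeval w (pderiv i r) * u i) := by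
        simp only [map_add, add_mul, Finset.sum_add_distrib]
        ring
      rw [this]
      exact le_trans (Padic.nonarchimedean _ _) (max_le hq hr)
  | mul_X q i hq =>
      have hL : ‖∑ j, aeval w (pderiv j q) * u j‖ ≤ s := lin_bound hw hu hs0 _
      have key : aeval (w + u) (q * X i) - aeval w (q * X i)
            - ∑ j, aeval w (pderiv j (q * X i)) * u j
          = (aeval (w + u) q - aeval w q - ∑ j, aeval w (pderiv j q) * u j) * w i
            + ((∑ j, aeval w (pderiv j q) * u j)
              + (aeval (w + u) q - aeval w q - ∑ j, aeval w (pderiv j q) * u j)) * u i := by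
        have hder : ∀ j, aeval w (pderiv j (q * X i))
            = aeval w (pderiv j q) * w i + aeval w q * (if j = i then 1 else 0) := by
          intro j
          rw [pderiv_mul, map_add, map_mul, map_mul, aeval_X, pderiv_X]
          by_cases h : j = i <;> simp [h, Pi.single_apply]
        have hsum : ∑ j, aeval w (pderiv j (q * X i)) * u j
            = (∑ j, aeval w (pderiv j q) * u j) * w i + aeval w q * u i := by
          simp only [hder, add_mul]
          rw [Finset.sum_add_distrib]
          congr 1
          · rw [Finset.sum_mul]
            exact Finset.sum_congr rfl fun _ _ => by ring
          · rw [Finset.sum_eq_single i] <;> simp +contextual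
        rw [hsum, map_mul, map_mul, aeval_X, aeval_X]
        have : (w + u) i = w i + u i := rfl
        rw [this]
        ring
      rw [key]
      refine le_trans (Padic.nonarchimedean _ _) (max_le ?_ ?_)
      · rw [norm_mul]
        calc ‖_‖ * ‖w i‖ ≤ s ^ 2 * 1 := mul_le_mul hq (hw i) (norm_nonneg _) hs2
          _ = s ^ 2 := mul_one _
      · rw [norm_mul]
        have h1 : ‖(∑ j, aeval w (pderiv j q) * u j)
            + (aeval (w + u) q - aeval w q - ∑ j, aeval w (pderiv j q) * u j)‖ ≤ s := by
          refine le_trans (Padic.nonarchimedean _ _) (max_le hL (le_trans hq ?_))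
          calc s ^ 2 = s * s := sq s
            _ ≤ 1 * s := mul_le_mul_of_nonneg_right hs1 hs0
            _ = s := one_mul s
        calc ‖_‖ * ‖u i‖ ≤ s * s := mul_le_mul h1 (hu i) (norm_nonneg _) hs0
          _ = s ^ 2 := (sq s).symm

lemma diff_bound {n : ℕ} {w u : Fin n → ℚ_[p]} {s : ℝ}
    (hw : ∀ i, ‖w i‖ ≤ 1) (hu : ∀ i, ‖u i‖ ≤ s) (hs0 : 0 ≤ s) (hs1 : s ≤ 1)
    (Q : MvPolynomial (Fin n) ℤ_[p]) :
    ‖aeval (w + u) Q - aeval w Q‖ ≤ s := by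
  have h1 := taylor_bound hw hu hs0 hs1 Q
  have h2 : ‖∑ i, aeval w (pderiv i Q) * u i‖ ≤ s := lin_bound hw hu hs0 _
  have : aeval (w + u) Q - aeval w Q
      = (aeval (w + u) Q - aeval w Q - ∑ i, aeval w (pderiv i Q) * u i)
        + ∑ i, aeval w (pderiv i Q) * u i := by ring
  rw [this]
  refine le_trans (Padic.nonarchimedean _ _) (max_le (le_trans h1 ?_) h2)
  calc s ^ 2 = s * s := sq s
    _ ≤ 1 * s := mul_le_mul_of_nonneg_right hs1 hs0
    _ = s := one_mul s

end Stmt13Aux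

/-- Effective precision Lemma for polynomial maps with `ℤ_p`-coefficients:
if `df_v` is surjective, `H ⊆ B(r)` and `B(p·r²) ⊆ df_v(H)`, then
`f(v + H) = f(v) + df_v(H)`. -/
theorem stmt13 {p : ℕ} [Fact p.Prime] (n m : ℕ)
    (P : Fin m → MvPolynomial (Fin n) ℤ_[p])
    (v : Fin n → ℤ_[p])
    (J : (Fin n → ℚ_[p]) → (Fin m → ℚ_[p]))
    (hJ : ∀ (h : Fin n → ℚ_[p]) (j : Fin m),
      J h j = ∑ i, MvPolynomial.aeval (fun k => (v k : ℚ_[p]))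
        (MvPolynomial.pderiv i (P j)) * h i)
    (hsurj : Function.Surjective J)
    (H : Submodule ℤ_[p] (Fin n → ℚ_[p])) (r : ℝ) (hr : 0 < r)
    (hH1 : (H : Set (Fin n → ℚ_[p])) ⊆ {x : Fin n → ℚ_[p] | ‖x‖ ≤ r})
    (hH2 : {y : Fin m → ℚ_[p] | ‖y‖ ≤ (p : ℝ) * r ^ 2} ⊆ J '' (H : Set (Fin n → ℚ_[p]))) :
    {y : Fin m → ℚ_[p] | ∃ h ∈ H,
        y = fun j => MvPolynomial.aeval (fun k => (v k : ℚ_[p]) + h k) (P j)}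
      = {y : Fin m → ℚ_[p] | ∃ h ∈ H,
        y = (fun j => MvPolynomial.aeval (fun k => (v k : ℚ_[p])) (P j)) + J h} := by
  classical
  rcases Nat.eq_zero_or_pos m with hm | hm
  · subst hm
    ext y
    simp only [Set.mem_setOf_eq]
    constructor
    · rintro ⟨h, hh, -⟩
      exact ⟨h, hh, funext fun j => j.elim0⟩
    · rintro ⟨h, hh, -⟩
      exact ⟨h, hh, funext fun j => j.elim0⟩
  haveI : Nonempty (Fin m) := ⟨⟨0, hm⟩⟩
  set vv : Fin n → ℚ_[p] := fun k => (v k : ℚ_[p]) with hvv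
  set Fm : (Fin n → ℚ_[p]) → (Fin m → ℚ_[p]) := fun x j => aeval x (P j) with hFm
  have hp1 : (1:ℝ) < p := by exact_mod_cast (Fact.out : p.Prime).one_lt
  have hp0 : (0:ℝ) < p := lt_trans zero_lt_one hp1
  have hv1 : ∀ i, ‖vv i‖ ≤ 1 := fun i => (v i).2
  have zsmul_def : ∀ (z : ℤ_[p]) (q : ℚ_[p]), z • q = (z : ℚ_[p]) * q := fun z q => by
    rw [Algebra.smul_def, PadicInt.algebraMap_apply]
  -- linearity of J
  have Jadd : ∀ x y, J (x + y) = J x + J y := by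
    intro x y; funext j
    simp only [hJ, Pi.add_apply, mul_add, Finset.sum_add_distrib]
  have Jsmul : ∀ (c : ℚ_[p]) x, J (c • x) = c • J x := by
    intro c x; funext j
    simp only [hJ, Pi.smul_apply, smul_eq_mul, Finset.mul_sum]
    exact Finset.sum_congr rfl fun i _ => by ring
  have V1 : ∀ u, ‖J u‖ ≤ ‖u‖ := by
    intro u
    rw [pi_norm_le_iff_of_nonneg (norm_nonneg u)]
    intro j
    rw [hJ]
    exact Stmt13Aux.lin_bound hv1 (fun i => norm_le_pi_norm u i) (norm_nonneg u) _
  -- r ≤ 1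
  have hr1 : r ≤ 1 := by
    by_contra hcon
    push_neg at hcon
    obtain ⟨k, hk1, hk2⟩ := exists_mem_Ico_zpow hr hp1
    have hmem : (fun _ : Fin m => (p : ℚ_[p]) ^ (-(k+1) : ℤ)) ∈
        {y : Fin m → ℚ_[p] | ‖y‖ ≤ (p:ℝ) * r^2} := by
      rw [Set.mem_setOf_eq, pi_norm_const, Padic.norm_p_zpow, neg_neg,
        zpow_add₀ (ne_of_gt hp0), zpow_one]
      calc (p:ℝ)^k * p ≤ r * p := mul_le_mul_of_nonneg_right hk1 hp0.le
        _ = p * (r * 1) := by ring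
        _ ≤ p * (r * r) := by
            refine mul_le_mul_of_nonneg_left (mul_le_mul_of_nonneg_left ?_ hr.le) hp0.le
            exact le_of_lt hcon
        _ = p * r^2 := by ring
    obtain ⟨u, huH, huJ⟩ := hH2 hmem
    have hle : (p:ℝ)^(k+1:ℤ) ≤ r := by
      calc (p:ℝ)^(k+1:ℤ) = ‖(fun _ : Fin m => (p : ℚ_[p]) ^ (-(k+1) : ℤ))‖ := by
            rw [pi_norm_const, Padic.norm_p_zpow, neg_neg]
        _ = ‖J u‖ := by rw [huJ]
        _ ≤ ‖u‖ := V1 u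
        _ ≤ r := hH1 huH
    exact absurd (lt_of_lt_of_le hk2 hle) (lt_irrefl r)
  -- vector ultrametric helper
  have vnon : ∀ (x y : Fin m → ℚ_[p]), ‖x + y‖ ≤ max ‖x‖ ‖y‖ := by
    intro x y
    rw [pi_norm_le_iff_of_nonneg (le_max_of_le_left (norm_nonneg x))]
    intro i
    exact le_trans (Padic.nonarchimedean _ _)
      (max_le_max (norm_le_pi_norm x i) (norm_le_pi_norm y i))
  -- key Taylor estimate
  have key : ∀ a u : Fin n → ℚ_[p], (∀ i, ‖a i‖ ≤ r) → ‖u‖ ≤ r →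
      ‖Fm (vv + a + u) - Fm (vv + a) - J u‖ ≤ r * ‖u‖ := by
    intro a u ha hu
    have hu0 : (0:ℝ) ≤ ‖u‖ := norm_nonneg u
    have hw1 : ∀ i, ‖(vv + a) i‖ ≤ 1 := by
      intro i
      exact le_trans (Padic.nonarchimedean _ _) (max_le (hv1 i) (le_trans (ha i) hr1))
    have hui : ∀ i, ‖u i‖ ≤ ‖u‖ := fun i => norm_le_pi_norm u i
    rw [pi_norm_le_iff_of_nonneg (mul_nonneg hr.le hu0)]
    intro j
    have expand : (Fm (vv + a + u) - Fm (vv + a) - J u) j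
        = (aeval ((vv+a) + u) (P j) - aeval (vv+a) (P j)
            - ∑ i, aeval (vv+a) (pderiv i (P j)) * u i)
          + ∑ i, (aeval (vv+a) (pderiv i (P j)) - aeval vv (pderiv i (P j))) * u i := by
      simp only [hFm, Pi.sub_apply, hJ, sub_mul, Finset.sum_sub_distrib]
      ring
    rw [expand]
    refine le_trans (Padic.nonarchimedean _ _) (max_le ?_ ?_)
    · refine le_trans (Stmt13Aux.taylor_bound hw1 hui hu0 (le_trans hu hr1) (P j)) ?_
      calc ‖u‖^2 = ‖u‖ * ‖u‖ := sq ‖u‖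
        _ ≤ r * ‖u‖ := mul_le_mul_of_nonneg_right hu hu0
    · refine Stmt13Aux.ultra_sum _ _ (mul_nonneg hr.le hu0) fun i _ => ?_
      rw [norm_mul]
      exact mul_le_mul (Stmt13Aux.diff_bound hv1 ha hr.le hr1 _) (hui i) (norm_nonneg _) hr.le
  -- Lipschitz estimate
  have Lip : ∀ a u : Fin n → ℚ_[p], (∀ i, ‖a i‖ ≤ r) → ‖u‖ ≤ r →
      ‖Fm (vv + a + u) - Fm (vv + a)‖ ≤ ‖u‖ := by
    intro a u ha hu
    have h1 : Fm (vv+a+u) - Fm (vv+a) = (Fm (vv+a+u) - Fm (vv+a) - J u) + J u := by abel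
    rw [h1]
    refine le_trans (vnon _ _) (max_le (le_trans (key a u ha hu) ?_) (V1 u))
    calc r * ‖u‖ ≤ 1 * ‖u‖ := mul_le_mul_of_nonneg_right hr1 (norm_nonneg u)
      _ = ‖u‖ := one_mul _
  -- scaled preimages
  have S : ∀ (t : ℕ) (E : Fin m → ℚ_[p]), ‖E‖ ≤ (p:ℝ)^(1-(t:ℤ)) * r^2 →
      ∃ u, u ∈ H ∧ J u = E ∧ ‖u‖ ≤ (p:ℝ)^(-(t:ℤ)) * r := by
    intro t E hE
    have hc0 : ((p:ℚ_[p]))^t ≠ 0 :=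
      pow_ne_zero _ (Nat.cast_ne_zero.mpr (Fact.out : p.Prime).ne_zero)
    have hcn : ‖((p:ℚ_[p]))^t‖ = (p:ℝ)^(-(t:ℤ)) := Padic.norm_p_pow t
    have hmem : ((p:ℚ_[p])^t)⁻¹ • E ∈ {y : Fin m → ℚ_[p] | ‖y‖ ≤ (p:ℝ)*r^2} := by
      rw [Set.mem_setOf_eq, norm_smul, norm_inv, hcn, ← zpow_neg, neg_neg]
      calc (p:ℝ)^(t:ℤ) * ‖E‖ ≤ (p:ℝ)^(t:ℤ) * ((p:ℝ)^(1-(t:ℤ)) * r^2) :=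
            mul_le_mul_of_nonneg_left hE (zpow_nonneg hp0.le _)
        _ = (p:ℝ)^((t:ℤ) + (1-(t:ℤ))) * r^2 := by rw [← mul_assoc, ← zpow_add₀ (ne_of_gt hp0)]
        _ = (p:ℝ) * r^2 := by norm_num
    obtain ⟨u', hu'H, hu'⟩ := hH2 hmem
    refine ⟨((p:ℚ_[p])^t) • u', ?_, ?_, ?_⟩
    · have heq : ((p:ℚ_[p])^t) • u' = ((p:ℤ_[p])^t) • u' := by
        funext i
        rw [Pi.smul_apply, Pi.smul_apply, zsmul_def, smul_eq_mul]
        push_cast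
        ring
      rw [heq]; exact H.smul_mem _ hu'H
    · rw [Jsmul, hu', smul_inv_smul₀ hc0]
    · rw [norm_smul, hcn]
      exact mul_le_mul_of_nonneg_left (hH1 hu'H) (zpow_nonneg hp0.le _)
  -- H is closed
  have Hfg : H.FG := by
    have hHM : H ≤ Submodule.span ℤ_[p]
        (Set.range (fun i : Fin n => (Pi.single i 1 : Fin n → ℚ_[p]))) := by
      intro x hx
      rw [Submodule.mem_span_range_iff_exists_fun ℤ_[p]]
      have hx1 : ∀ i, ‖x i‖ ≤ 1 :=
        fun i => le_trans (norm_le_pi_norm x i) (le_trans (hH1 hx) hr1)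
      set c : Fin n → ℤ_[p] := fun i => ⟨x i, hx1 i⟩ with hc
      refine ⟨c, ?_⟩
      funext j
      rw [Finset.sum_apply, Finset.sum_eq_single j]
      · rw [Pi.smul_apply, zsmul_def, Pi.single_eq_same, mul_one]
      · intro i _ hij
        rw [Pi.smul_apply, zsmul_def, Pi.single_eq_of_ne (Ne.symm hij) _, mul_zero]
      · intro hj; exact absurd (Finset.mem_univ j) hj
    have hMfg : (Submodule.span ℤ_[p]
        (Set.range (fun i : Fin n => (Pi.single i 1 : Fin n → ℚ_[p])))).FG :=
      Submodule.fg_span (Set.finite_range _)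
    haveI := isNoetherian_of_fg_of_noetherian _ hMfg
    have hfg2 := IsNoetherian.noetherian (Submodule.comap (Submodule.span ℤ_[p]
        (Set.range (fun i : Fin n => (Pi.single i 1 : Fin n → ℚ_[p])))).subtype H)
    have hmap := hfg2.map (Submodule.span ℤ_[p]
        (Set.range (fun i : Fin n => (Pi.single i 1 : Fin n → ℚ_[p])))).subtype
    rwa [Submodule.map_comap_subtype, inf_eq_right.mpr hHM] at hmap
  have Hclosed : IsClosed (H : Set (Fin n → ℚ_[p])) := by
    obtain ⟨s, hs⟩ := Hfg
    have hiso : Isometry ((↑) : ℤ_[p] → ℚ_[p]) := Isometry.of_dist_eq fun a b => rfl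
    have hrange : (H : Set (Fin n → ℚ_[p]))
        = Set.range (fun c : (↥s → ℤ_[p]) => ∑ i, c i • (i : Fin n → ℚ_[p])) := by
      ext x
      rw [Set.mem_range]
      have hsp : x ∈ Submodule.span ℤ_[p]
          (Set.range (fun i : ↥s => (i : Fin n → ℚ_[p]))) ↔ x ∈ H := by
        rw [show (Set.range (fun i : ↥s => (i : Fin n → ℚ_[p]))) = (↑s : Set _) from
          Subtype.range_coe, hs]
      constructor
      · intro hx
        exact Submodule.mem_span_range_iff_exists_fun ℤ_[p] |>.mp (hsp.mpr hx)
      · rintro ⟨c, rfl⟩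
        exact hsp.mp (Submodule.mem_span_range_iff_exists_fun ℤ_[p] |>.mpr ⟨c, rfl⟩)
    rw [hrange]
    have hcont : Continuous (fun c : (↥s → ℤ_[p]) => ∑ i, c i • (i : Fin n → ℚ_[p])) := by
      apply continuous_finset_sum
      intro i _
      have heq : (fun c : (↥s → ℤ_[p]) => c i • (i : Fin n → ℚ_[p]))
          = fun c => (fun j => ((c i : ℚ_[p])) * (i : Fin n → ℚ_[p]) j) := by
        funext c j
        rw [Pi.smul_apply, zsmul_def]
      rw [heq]
      apply continuous_pi
      intro j
      exact ((hiso.continuous.comp (continuous_apply i)).mul continuous_const)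
    exact (isCompact_range hcont).isClosed
  -- main set equality
  ext y
  simp only [Set.mem_setOf_eq]
  constructor
  · rintro ⟨h, hh, rfl⟩
    have h0r : ∀ i, ‖(0 : Fin n → ℚ_[p]) i‖ ≤ r := by
      intro i; simp [hr.le]
    have hE := key 0 h h0r (hH1 hh)
    rw [add_zero] at hE
    have hEmem : Fm (vv + h) - Fm vv - J h ∈ {y : Fin m → ℚ_[p] | ‖y‖ ≤ (p:ℝ)*r^2} := by
      rw [Set.mem_setOf_eq]
      calc ‖Fm (vv + h) - Fm vv - J h‖ ≤ r * ‖h‖ := hE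
        _ ≤ r * r := mul_le_mul_of_nonneg_left (hH1 hh) hr.le
        _ = 1 * r^2 := by ring
        _ ≤ p * r^2 := mul_le_mul_of_nonneg_right (le_of_lt hp1) (sq_nonneg r)
    obtain ⟨h₂, hh₂, hJh₂⟩ := hH2 hEmem
    refine ⟨h + h₂, H.add_mem hh hh₂, ?_⟩
    have hpt : (fun j => aeval (fun k => vv k + h k) (P j)) = Fm (vv + h) := rfl
    have hpt2 : (fun j => aeval vv (P j)) = Fm vv := rfl
    rw [hpt, hpt2, Jadd, hJh₂]
    abel
  · rintro ⟨h, hh, rfl⟩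
    set y : Fin m → ℚ_[p] := (fun j => aeval vv (P j)) + J h with hy
    have hyFm : y = Fm vv + J h := rfl
    have h0r : ∀ i, ‖(0 : Fin n → ℚ_[p]) i‖ ≤ r := by
      intro i; simp [hr.le]
    have hhr : ∀ i, ‖h i‖ ≤ r := fun i => le_trans (norm_le_pi_norm h i) (hH1 hh)
    -- Newton iteration step
    have step : ∀ (k : ℕ) (a : Fin n → ℚ_[p]), a ∈ H →
        ‖y - Fm (vv + a)‖ ≤ (p:ℝ)^(-(k:ℤ)) * r^2 →
        ∃ b, (b ∈ H ∧ ‖y - Fm (vv + b)‖ ≤ (p:ℝ)^(-((k:ℤ)+1)) * r^2)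
          ∧ ‖b - a‖ ≤ (p:ℝ)^(-((k:ℤ)+1)) * r := by
      intro k a haH haE
      obtain ⟨u, huH, huJ, hun⟩ := S (k+1) (y - Fm (vv + a)) (by
        have : (1 - ((k+1:ℕ):ℤ)) = -(k:ℤ) := by push_cast; ring
        rw [this]; exact haE)
      have hpk1 : (p:ℝ)^(-((k:ℤ)+1)) ≤ 1 := by
        apply zpow_le_one_of_nonpos₀ (le_of_lt hp1)
        omega
      have hun' : ‖u‖ ≤ (p:ℝ)^(-((k:ℤ)+1)) * r := by
        have : -((k+1:ℕ):ℤ) = -((k:ℤ)+1) := by push_cast; ring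
        rwa [this] at hun
      have hur : ‖u‖ ≤ r := by
        refine le_trans hun' ?_
        calc (p:ℝ)^(-((k:ℤ)+1)) * r ≤ 1 * r := mul_le_mul_of_nonneg_right hpk1 hr.le
          _ = r := one_mul r
      refine ⟨a + u, ⟨H.add_mem haH huH, ?_⟩, ?_⟩
      · have h2 := key a u (fun i => le_trans (norm_le_pi_norm a i) (hH1 haH)) hur
        have heq : y - Fm (vv + (a+u)) = -(Fm (vv + a + u) - Fm (vv + a) - J u) := by
          rw [huJ]
          have hassoc : vv + (a + u) = vv + a + u := by rw [add_assoc]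
          rw [hassoc]; abel
        rw [heq, norm_neg]
        calc ‖Fm (vv + a + u) - Fm (vv + a) - J u‖ ≤ r * ‖u‖ := h2
          _ ≤ r * ((p:ℝ)^(-((k:ℤ)+1)) * r) := mul_le_mul_of_nonneg_left hun' hr.le
          _ = (p:ℝ)^(-((k:ℤ)+1)) * r^2 := by ring
      · simpa [add_sub_cancel_left] using hun'
    choose! next hnext using step
    set seq : ℕ → (Fin n → ℚ_[p]) := fun k => Nat.rec h (fun k a => next k a) k with hseqdef
    have hseqS : ∀ k : ℕ, seq (k+1) = next k (seq k) := fun k => rfl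
    have hbase : ‖y - Fm (vv + h)‖ ≤ (p:ℝ)^(-((0:ℕ):ℤ)) * r^2 := by
      have hE := key 0 h h0r (hH1 hh)
      rw [add_zero] at hE
      have heq : y - Fm (vv + h) = -(Fm (vv + h) - Fm vv - J h) := by
        rw [hyFm]; abel
      rw [heq, norm_neg]
      calc ‖Fm (vv + h) - Fm vv - J h‖ ≤ r * ‖h‖ := hE
        _ ≤ r * r := mul_le_mul_of_nonneg_left (hH1 hh) hr.le
        _ = (p:ℝ)^(-((0:ℕ):ℤ)) * r^2 := by norm_num; ring
    have hinv : ∀ k : ℕ, seq k ∈ H ∧ ‖y - Fm (vv + seq k)‖ ≤ (p:ℝ)^(-(k:ℤ)) * r^2 := by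
      intro k
      induction k with
      | zero => exact ⟨hh, hbase⟩
      | succ k ih =>
          rw [hseqS]
          have := hnext k (seq k) ih.1 ih.2
          refine ⟨this.1.1, ?_⟩
          have hc : (-((k+1:ℕ):ℤ)) = -((k:ℤ)+1) := by push_cast; ring
          rw [hc]
          exact this.1.2
    have hdist : ∀ k : ℕ, ‖seq (k+1) - seq k‖ ≤ (p:ℝ)^(-((k:ℤ)+1)) * r := by
      intro k
      rw [hseqS]
      exact (hnext k (seq k) (hinv k).1 (hinv k).2).2
    have hcauchy : CauchySeq seq := by
      apply cauchySeq_of_le_geometric ((p:ℝ)⁻¹) r (inv_lt_one_of_one_lt₀ hp1)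
      intro k
      rw [dist_eq_norm']
      refine le_trans (hdist k) ?_
      have h1 : (p:ℝ)^(-((k:ℤ)+1)) = ((p:ℝ)⁻¹)^(k+1) := by
        rw [inv_pow, ← zpow_natCast, ← zpow_neg]
        push_cast; ring_nf
      rw [h1]
      calc ((p:ℝ)⁻¹)^(k+1) * r ≤ ((p:ℝ)⁻¹)^k * r := by
            refine mul_le_mul_of_nonneg_right ?_ hr.le
            exact pow_le_pow_of_le_one (inv_nonneg.2 hp0.le) (by rw [inv_le_one₀ hp0]; exact hp1.le) (Nat.le_succ k)
        _ = r * ((p:ℝ)⁻¹)^k := mul_comm _ _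
    obtain ⟨alim, halim⟩ := cauchySeq_tendsto_of_complete hcauchy
    have halimH : alim ∈ H :=
      Hclosed.mem_of_tendsto halim (Filter.Eventually.of_forall fun k => (hinv k).1)
    refine ⟨alim, halimH, ?_⟩
    show y = fun j => aeval (fun k => vv k + alim k) (P j)
    have hgoal : (fun j => aeval (fun k => vv k + alim k) (P j)) = Fm (vv + alim) := rfl
    rw [hgoal]
    have hbound : ∀ k : ℕ, ‖y - Fm (vv + alim)‖ ≤ (p:ℝ)^(-(k:ℤ))*r^2 + ‖alim - seq k‖ := by
      intro k
      have h1 : y - Fm (vv+alim) = (y - Fm (vv + seq k)) + (Fm (vv + seq k) - Fm (vv + alim)) := by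
        abel
      have hd : alim - seq k ∈ H := H.sub_mem halimH (hinv k).1
      have h2 : ‖Fm (vv + seq k) - Fm (vv + alim)‖ ≤ ‖alim - seq k‖ := by
        have hl := Lip (seq k) (alim - seq k)
          (fun i => le_trans (norm_le_pi_norm (seq k) i) (hH1 (hinv k).1)) (hH1 hd)
        have heq : vv + seq k + (alim - seq k) = vv + alim := by abel
        rw [heq] at hl
        rw [norm_sub_rev]
        exact hl
      rw [h1]
      exact le_trans (norm_add_le _ _) (add_le_add (hinv k).2 h2)
    have hlim : Filter.Tendsto (fun k : ℕ => (p:ℝ)^(-(k:ℤ))*r^2 + ‖alim - seq k‖)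
        Filter.atTop (nhds 0) := by
      have t1 : Filter.Tendsto (fun k : ℕ => (p:ℝ)^(-(k:ℤ))*r^2) Filter.atTop (nhds 0) := by
        have tp : Filter.Tendsto (fun k : ℕ => ((p:ℝ)⁻¹)^k) Filter.atTop (nhds 0) :=
          tendsto_pow_atTop_nhds_zero_of_lt_one (inv_nonneg.2 hp0.le) (inv_lt_one_of_one_lt₀ hp1)
        have heq : (fun k : ℕ => (p:ℝ)^(-(k:ℤ))*r^2) = fun k : ℕ => ((p:ℝ)⁻¹)^k * r^2 := by
          funext k
          rw [inv_pow, ← zpow_natCast (p:ℝ), ← zpow_neg]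
        rw [heq]
        simpa using tp.mul_const (r^2)
      have t2 : Filter.Tendsto (fun k : ℕ => ‖alim - seq k‖) Filter.atTop (nhds 0) := by
        have heq : (fun k : ℕ => ‖alim - seq k‖) = fun k : ℕ => ‖seq k - alim‖ := by
          funext k
          rw [norm_sub_rev]
        rw [heq]
        have := (tendsto_sub_nhds_zero_iff.mpr halim).norm
        rwa [norm_zero] at this
      simpa using t1.add t2
    have hle0 : ‖y - Fm (vv + alim)‖ ≤ 0 := ge_of_tendsto' hlim hbound
    have hz : y - Fm (vv + alim) = 0 := by
      rw [← norm_le_zero_iff]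
      exact hle0
    exact sub_eq_zero.mp hz
end

section
/- Let g : ℚ_p^n → ℚ_p^m be a map whose coordinate functions are all multivariate polynomials with coefficients in ℤ_p, and let dg_0 denote its differential at the origin (the linear part of g, given by the Jacobian at 0). Then for all a, b ∈ ℤ_p^n: ‖g(b) − g(a) − dg_0(b − a)‖_∞ ≤ max(‖a‖_∞, ‖b‖_∞) · ‖b − a‖_∞. -/
open MvPolynomial

namespace Stmt14Aux

variable {p : ℕ} [Fact p.Prime]

lemma pow_diff {u v : ℚ_[p]} {C δ : ℝ} (hu : ‖u‖ ≤ C) (hv : ‖v‖ ≤ C)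
    (hd : ‖u - v‖ ≤ δ) : ∀ k : ℕ, ‖u ^ (k + 1) - v ^ (k + 1)‖ ≤ C ^ k * δ := by
  have h0C : 0 ≤ C := le_trans (norm_nonneg u) hu
  have h0δ : 0 ≤ δ := le_trans (norm_nonneg _) hd
  intro k
  induction k with
  | zero => simpa using hd
  | succ k ih =>
      have key : u ^ (k + 1 + 1) - v ^ (k + 1 + 1)
          = u * (u ^ (k + 1) - v ^ (k + 1)) + (u - v) * v ^ (k + 1) := by ring
      rw [key]
      refine le_trans (Padic.nonarchimedean _ _) (max_le ?_ ?_)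
      · rw [norm_mul]
        calc ‖u‖ * ‖u ^ (k + 1) - v ^ (k + 1)‖ ≤ C * (C ^ k * δ) :=
              mul_le_mul hu ih (norm_nonneg _) h0C
          _ = C ^ (k + 1) * δ := by ring
      · rw [norm_mul, norm_pow]
        calc ‖u - v‖ * ‖v‖ ^ (k + 1) ≤ δ * C ^ (k + 1) :=
              mul_le_mul hd (pow_le_pow_left₀ (norm_nonneg _) hv _) (by positivity) h0δ
          _ = C ^ (k + 1) * δ := by ring

lemma prod_norm_le {σ : Type*} {v : σ → ℚ_[p]} {C : ℝ} (hC : 0 ≤ C)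
    (hv : ∀ i, ‖v i‖ ≤ C) (α : σ →₀ ℕ) :
    ‖α.prod fun i k => v i ^ k‖ ≤ C ^ (α.sum fun _ k => k) := by
  induction α using Finsupp.induction with
  | zero => simp
  | single_add a b f ha hb ih =>
      rw [Finsupp.prod_add_index' (by simp) (fun a b₁ b₂ => pow_add _ _ _),
        Finsupp.sum_add_index' (by simp) (fun a b₁ b₂ => rfl),
        Finsupp.prod_single_index (by simp), Finsupp.sum_single_index rfl,
        norm_mul, norm_pow, pow_add]
      exact mul_le_mul (pow_le_pow_left₀ (norm_nonneg _) (hv a) _) ih (norm_nonneg _)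
        (by positivity)

lemma deg_pos {σ : Type*} {f : σ →₀ ℕ} (hf : f ≠ 0) : 1 ≤ f.sum fun _ k => k := by
  by_contra h
  push_neg at h
  have h0 : (f.sum fun _ k => k) = 0 := Nat.lt_one_iff.mp h
  apply hf
  ext j
  by_cases hj : j ∈ f.support
  · exact absurd h0 (by
      have : f j ≤ f.sum fun _ k => k := Finset.single_le_sum (fun _ _ => Nat.zero_le _) hj
      have := Finsupp.mem_support_iff.mp hj
      omega)
  · simpa using Finsupp.notMem_support_iff.mp hj

lemma prod_diff {σ : Type*} [DecidableEq σ] {u v : σ → ℚ_[p]} {C δ : ℝ}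
    (hC : 0 ≤ C) (hδ : 0 ≤ δ)
    (hu : ∀ i, ‖u i‖ ≤ C) (hv : ∀ i, ‖v i‖ ≤ C) (hd : ∀ i, ‖u i - v i‖ ≤ δ) :
    ∀ α : σ →₀ ℕ, α ≠ 0 →
      ‖(α.prod fun i k => u i ^ k) - α.prod fun i k => v i ^ k‖
        ≤ C ^ ((α.sum fun _ k => k) - 1) * δ := by
  intro α
  induction α using Finsupp.induction with
  | zero => intro h; exact absurd rfl h
  | single_add a b f haf hb ih =>
      intro _
      obtain ⟨b', rfl⟩ := Nat.exists_eq_succ_of_ne_zero hb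
      rw [Finsupp.prod_add_index' (by simp) (fun a b₁ b₂ => pow_add _ _ _),
        Finsupp.prod_add_index' (by simp) (fun a b₁ b₂ => pow_add _ _ _),
        Finsupp.sum_add_index' (by simp) (fun a b₁ b₂ => rfl),
        Finsupp.prod_single_index (by simp), Finsupp.prod_single_index (by simp),
        Finsupp.sum_single_index rfl]
      by_cases hf : f = 0
      · subst hf
        simpa using pow_diff (hu a) (hv a) (hd a) b'
      · have hdeg : 1 ≤ f.sum fun _ k => k := deg_pos hf
        have key : u a ^ (b' + 1) * (f.prod fun i k => u i ^ k)
              - v a ^ (b' + 1) * (f.prod fun i k => v i ^ k)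
            = u a ^ (b' + 1) * ((f.prod fun i k => u i ^ k) - f.prod fun i k => v i ^ k)
              + (u a ^ (b' + 1) - v a ^ (b' + 1)) * f.prod fun i k => v i ^ k := by ring
        rw [key]
        refine le_trans (Padic.nonarchimedean _ _) (max_le ?_ ?_)
        · rw [norm_mul, norm_pow]
          calc ‖u a‖ ^ (b' + 1) * ‖(f.prod fun i k => u i ^ k) - f.prod fun i k => v i ^ k‖
              ≤ C ^ (b' + 1) * (C ^ ((f.sum fun _ k => k) - 1) * δ) :=
                mul_le_mul (pow_le_pow_left₀ (norm_nonneg _) (hu a) _) (ih hf)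
                  (norm_nonneg _) (by positivity)
            _ = C ^ (b' + 1 + ((f.sum fun _ k => k) - 1)) * δ := by rw [pow_add]; ring
            _ = C ^ (b' + 1 + f.sum (fun _ k => k) - 1) * δ := by congr 2; omega
        · rw [norm_mul]
          calc ‖u a ^ (b' + 1) - v a ^ (b' + 1)‖ * ‖f.prod fun i k => v i ^ k‖
              ≤ C ^ b' * δ * C ^ (f.sum fun _ k => k) :=
                mul_le_mul (pow_diff (hu a) (hv a) (hd a) b') (prod_norm_le hC hv f)
                  (norm_nonneg _) (by positivity)
            _ = C ^ (b' + f.sum fun _ k => k) * δ := by rw [pow_add]; ring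
            _ = C ^ (b' + 1 + f.sum (fun _ k => k) - 1) * δ := by congr 2; omega

lemma tri {σ : Type*} [DecidableEq σ] (α : σ →₀ ℕ) :
    α = 0 ∨ (∃ i, α = Finsupp.single i 1) ∨ 2 ≤ α.sum fun _ k => k := by
  rcases Nat.lt_or_ge (α.sum fun _ k => k) 2 with h | h
  · have hcard : Multiset.card (Finsupp.toMultiset α) = α.sum fun _ k => k :=
      Finsupp.card_toMultiset α
    interval_cases hd : (α.sum fun _ k => k)
    · left
      have h0 : Finsupp.toMultiset α = 0 := Multiset.card_eq_zero.mp hcard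
      have := Finsupp.toMultiset_toFinsupp α
      rw [h0] at this
      simpa using this.symm
    · right; left
      obtain ⟨i, hi⟩ := Multiset.card_eq_one.mp hcard
      refine ⟨i, ?_⟩
      have h1 : Finsupp.toMultiset α = Finsupp.toMultiset (Finsupp.single i 1) := by
        rw [hi, Finsupp.toMultiset_single, one_nsmul]
      have := congrArg Multiset.toFinsupp h1
      rwa [Finsupp.toMultiset_toFinsupp, Finsupp.toMultiset_toFinsupp] at this
  · right; right; exact h

end Stmt14Aux

/-- For a polynomial map `g : ℚ_p^n → ℚ_p^m` with coefficients in `ℤ_p` and its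
linear part `dg_0` at the origin:
`‖g(b) − g(a) − dg_0(b − a)‖ ≤ max(‖a‖, ‖b‖) · ‖b − a‖` for all `a, b ∈ ℤ_p^n`. -/
theorem stmt14 {p : ℕ} [Fact p.Prime] (n m : ℕ)
    (P : Fin m → MvPolynomial (Fin n) ℤ_[p])
    (a b : Fin n → ℤ_[p]) :
    ‖(fun j => MvPolynomial.aeval (fun k => (b k : ℚ_[p])) (P j))
        - (fun j => MvPolynomial.aeval (fun k => (a k : ℚ_[p])) (P j))
        - (fun j => ∑ i, MvPolynomial.aeval (fun _ : Fin n => (0 : ℚ_[p]))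
            (MvPolynomial.pderiv i (P j)) * ((b i : ℚ_[p]) - (a i : ℚ_[p])))‖
      ≤ max ‖(fun k => (a k : ℚ_[p]))‖ ‖(fun k => (b k : ℚ_[p]))‖ *
          ‖(fun k => (b k : ℚ_[p]) - (a k : ℚ_[p]))‖ := by
  set a' : Fin n → ℚ_[p] := fun k => (a k : ℚ_[p]) with ha'
  set b' : Fin n → ℚ_[p] := fun k => (b k : ℚ_[p]) with hb'
  set C : ℝ := max ‖a'‖ ‖b'‖ with hC
  set δ : ℝ := ‖(fun k => b' k - a' k)‖ with hδ
  have h0C : 0 ≤ C := le_trans (norm_nonneg _) (le_max_left _ _)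
  have h0δ : 0 ≤ δ := norm_nonneg _
  have hCδ : 0 ≤ C * δ := mul_nonneg h0C h0δ
  have hC1 : C ≤ 1 := by
    apply max_le <;>
    · rw [pi_norm_le_iff_of_nonneg zero_le_one]
      intro k
      rw [← PadicInt.norm_def]
      exact PadicInt.norm_le_one _
  have hua : ∀ i, ‖a' i‖ ≤ C := fun i => le_trans (norm_le_pi_norm a' i) (le_max_left _ _)
  have hub : ∀ i, ‖b' i‖ ≤ C := fun i => le_trans (norm_le_pi_norm b' i) (le_max_right _ _)
  have hd : ∀ i, ‖b' i - a' i‖ ≤ δ := fun i => norm_le_pi_norm (fun k => b' k - a' k) i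
  rw [pi_norm_le_iff_of_nonneg hCδ]
  intro j
  simp only [Pi.sub_apply]
  induction (P j) using MvPolynomial.induction_on' with
  | add q r hq hr =>
      have key : (MvPolynomial.aeval b') (q + r) - (MvPolynomial.aeval a') (q + r)
            - ∑ i, (MvPolynomial.aeval fun _ : Fin n => (0 : ℚ_[p]))
                ((MvPolynomial.pderiv i) (q + r)) * (b' i - a' i)
          = ((MvPolynomial.aeval b') q - (MvPolynomial.aeval a') q
              - ∑ i, (MvPolynomial.aeval fun _ : Fin n => (0 : ℚ_[p]))
                  ((MvPolynomial.pderiv i) q) * (b' i - a' i))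
            + ((MvPolynomial.aeval b') r - (MvPolynomial.aeval a') r
              - ∑ i, (MvPolynomial.aeval fun _ : Fin n => (0 : ℚ_[p]))
                  ((MvPolynomial.pderiv i) r) * (b' i - a' i)) := by
        simp only [map_add, add_mul, Finset.sum_add_distrib]
        ring
      rw [key]
      exact le_trans (Padic.nonarchimedean _ _) (max_le hq hr)
  | monomial u c =>
      rcases Stmt14Aux.tri u with hu0 | ⟨i₀, rfl⟩ | hu2
      · subst hu0
        simpa [MvPolynomial.pderiv_monomial, MvPolynomial.aeval_monomial] using hCδ
      · have hsum : ∑ i, (MvPolynomial.aeval fun _ : Fin n => (0 : ℚ_[p]))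
              ((MvPolynomial.pderiv i) (MvPolynomial.monomial (Finsupp.single i₀ 1) c))
                * (b' i - a' i)
            = algebraMap ℤ_[p] ℚ_[p] c * (b' i₀ - a' i₀) := by
          rw [Finset.sum_eq_single i₀]
          · simp [MvPolynomial.pderiv_monomial]
          · intro i _ hi
            simp [MvPolynomial.pderiv_monomial, Finsupp.single_apply, (Ne.symm hi : ¬ i₀ = i)]
          · simp
        rw [hsum]
        have e : ∀ x : Fin n → ℚ_[p],
            (MvPolynomial.aeval x) (MvPolynomial.monomial (Finsupp.single i₀ 1) c)
              = algebraMap ℤ_[p] ℚ_[p] c * x i₀ := by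
          intro x
          rw [MvPolynomial.aeval_monomial,
            Finsupp.prod_single_index (h := fun i k => x i ^ k) (pow_zero _), pow_one]
        have : (MvPolynomial.aeval b') (MvPolynomial.monomial (Finsupp.single i₀ 1) c)
              - (MvPolynomial.aeval a') (MvPolynomial.monomial (Finsupp.single i₀ 1) c)
              - algebraMap ℤ_[p] ℚ_[p] c * (b' i₀ - a' i₀) = 0 := by
          rw [e, e]; ring
        rw [this, norm_zero]
        exact hCδ
      · have hsum : ∑ i, (MvPolynomial.aeval fun _ : Fin n => (0 : ℚ_[p]))
              ((MvPolynomial.pderiv i) (MvPolynomial.monomial u c)) * (b' i - a' i) = 0 := by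
          refine Finset.sum_eq_zero fun i _ => ?_
          rw [MvPolynomial.pderiv_monomial]
          by_cases hui : u i = 0
          · simp [hui]
          · have hne : u - Finsupp.single i 1 ≠ 0 := by
              intro h0
              have hle : ∀ j, j ≠ i → u j = 0 := by
                intro j hj
                have := congrFun (congrArg (fun f : Fin n →₀ ℕ => (f : Fin n → ℕ)) h0) j
                simpa [Finsupp.tsub_apply, Finsupp.single_apply, (Ne.symm hj : ¬ i = j)]
                  using this
              have hui1 : u i ≤ 1 := by
                have := congrFun (congrArg (fun f : Fin n →₀ ℕ => (f : Fin n → ℕ)) h0) i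
                simp [Finsupp.tsub_apply, Finsupp.single_apply] at this
                omega
              have hueq : u = Finsupp.single i (u i) := by
                ext j
                rcases eq_or_ne j i with rfl | hj
                · simp
                · simp [Finsupp.single_apply, (Ne.symm hj : ¬ i = j), hle j hj]
              rw [hueq, Finsupp.sum_single_index rfl] at hu2
              omega
            rw [MvPolynomial.aeval_zero', MvPolynomial.constantCoeff_monomial, if_neg hne,
              map_zero, zero_mul]
        rw [hsum, sub_zero]
        have hmon : ∀ x : Fin n → ℚ_[p],
            (MvPolynomial.aeval x) (MvPolynomial.monomial u c)
              = algebraMap ℤ_[p] ℚ_[p] c * u.prod fun i k => x i ^ k := fun x =>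
          MvPolynomial.aeval_monomial _ _ _
        rw [hmon, hmon, ← mul_sub, norm_mul]
        have hc1 : ‖algebraMap ℤ_[p] ℚ_[p] c‖ ≤ 1 := by
          rw [PadicInt.algebraMap_apply, ← PadicInt.norm_def]
          exact PadicInt.norm_le_one _
        have hu0 : u ≠ 0 := by
          intro h; rw [h] at hu2; simp [Finsupp.sum_zero_index] at hu2
        have hprod := Stmt14Aux.prod_diff h0C h0δ hub hua hd u hu0
        calc ‖algebraMap ℤ_[p] ℚ_[p] c‖ * ‖(u.prod fun i k => b' i ^ k)
                - u.prod fun i k => a' i ^ k‖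
            ≤ 1 * (C ^ ((u.sum fun _ k => k) - 1) * δ) :=
              mul_le_mul hc1 hprod (norm_nonneg _) zero_le_one
          _ = C ^ ((u.sum fun _ k => k) - 1) * δ := one_mul _
          _ ≤ C * δ := by
              apply mul_le_mul_of_nonneg_right _ h0δ
              calc C ^ ((u.sum fun _ k => k) - 1) ≤ C ^ 1 :=
                    pow_le_pow_of_le_one h0C hC1 (by omega)
                _ = C := pow_one C
end

section
/- Let d ≥ 0 and let a_0, a_1, …, a_d ∈ ℤ_p. Then val_p(∏_{0 ≤ i < j ≤ d} (a_i − a_j)) ≥ val_p(1! · 2! ⋯ d!), where the inequality is understood in ℤ ∪ {+∞} (with val_p(0) = +∞). -/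
set_option synthInstance.maxHeartbeats 400000
set_option maxHeartbeats 1000000

open Finset Polynomial

/-- `j!` divides `x (x-1) ⋯ (x-j+1)` in `ℤ_p`. -/
theorem PadicInt.factorial_dvd_prod_sub {p : ℕ} [hp : Fact p.Prime] (j : ℕ) (x : ℤ_[p]) :
    ((j.factorial : ℤ_[p])) ∣ ∏ l ∈ range j, (x - l) := by
  set v := (j.factorial).factorization p with hv
  have hfac : j.factorial = p ^ v * (j.factorial / p ^ v) :=
    (Nat.ordProj_mul_ordCompl_eq_self _ _).symm
  have hndvd : ¬ p ∣ (j.factorial / p ^ v) := Nat.not_dvd_ordCompl hp.out j.factorial_pos.ne'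
  have hunit : IsUnit ((j.factorial / p ^ v : ℕ) : ℤ_[p]) := by
    rw [PadicInt.isUnit_iff]
    set m := j.factorial / p ^ v with hm
    have h1 : ((m : ℤ) : ℤ_[p]) = (m : ℤ_[p]) := by push_cast; rfl
    rw [← h1, PadicInt.norm_intCast_eq_padic_norm]
    refine le_antisymm (Padic.norm_int_le_one _) (not_lt.1 fun hlt => hndvd ?_)
    have := (Padic.norm_intCast_lt_one_iff (k := (m : ℤ))).1 hlt
    exact_mod_cast this
  -- reduce to p^v ∣ product
  have key : ((p : ℤ_[p]) ^ v) ∣ ∏ l ∈ range j, (x - l) := by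
    set n : ℕ := x.appr v + j * p ^ v with hn
    have hjn : j ≤ n := by
      have : 1 ≤ p ^ v := Nat.one_le_pow _ _ hp.out.pos
      calc j = j * 1 := (mul_one j).symm
        _ ≤ j * p ^ v := Nat.mul_le_mul_left j this
        _ ≤ n := Nat.le_add_left _ _
    have hxn : x - (n : ℤ_[p]) ∈ (Ideal.span {(p : ℤ_[p]) ^ v} : Ideal ℤ_[p]) := by
      have h1 := PadicInt.appr_spec v x
      have : x - (n : ℤ_[p]) = (x - x.appr v) - (j : ℤ_[p]) * (p : ℤ_[p]) ^ v := by
        push_cast [hn]; ring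
      rw [this]
      exact Ideal.sub_mem _ h1 (Ideal.mul_mem_left _ _
        (Ideal.subset_span (Set.mem_singleton _)))
    have hcong : (∏ l ∈ range j, (x - l)) - (∏ l ∈ range j, ((n : ℤ_[p]) - l))
        ∈ (Ideal.span {(p : ℤ_[p]) ^ v} : Ideal ℤ_[p]) := by
      rw [← Ideal.Quotient.eq]
      rw [map_prod, map_prod]
      have hq : (Ideal.Quotient.mk (Ideal.span {(p : ℤ_[p]) ^ v})) x
          = (Ideal.Quotient.mk _) ((n : ℤ_[p])) := Ideal.Quotient.eq.2 hxn
      exact Finset.prod_congr rfl fun l _ => by rw [map_sub, map_sub, hq]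
    have hdesc : (∏ l ∈ range j, ((n : ℤ_[p]) - l)) = ((n.descFactorial j : ℕ) : ℤ_[p]) := by
      rw [Nat.descFactorial_eq_prod_range, Nat.cast_prod]
      refine Finset.prod_congr rfl fun l hl => ?_
      have : l ≤ n := le_trans (le_of_lt (mem_range.1 hl)) hjn
      push_cast [Nat.cast_sub this]
      ring
    have hdvd2 : ((p : ℤ_[p]) ^ v) ∣ ((n.descFactorial j : ℕ) : ℤ_[p]) := by
      have : p ^ v ∣ n.descFactorial j :=
        dvd_trans (Nat.ordProj_dvd _ _) (Nat.factorial_dvd_descFactorial n j)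
      exact_mod_cast Nat.cast_dvd_cast this
    have := Ideal.mem_span_singleton.1 hcong
    obtain ⟨c, hc⟩ := this
    obtain ⟨c', hc'⟩ := hdvd2
    exact ⟨c + c', by rw [mul_add, ← hc, ← hc', hdesc]; ring⟩
  calc ((j.factorial : ℤ_[p])) = ((j.factorial / p ^ v : ℕ) : ℤ_[p]) * (p : ℤ_[p]) ^ v := by
        conv_lhs => rw [hfac]
        push_cast; ring
    _ ∣ ∏ l ∈ range j, (x - l) := (IsUnit.mul_left_dvd hunit).2 key

/-- The superfactorial `0! 1! ⋯ d!` divides the Vandermonde determinant in `ℤ_p`. -/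
theorem superfact_dvd_vandermonde {p : ℕ} [hp : Fact p.Prime] (d : ℕ)
    (a : Fin (d + 1) → ℤ_[p]) :
    (∏ k ∈ range (d + 1), (Nat.factorial k : ℤ_[p])) ∣ (Matrix.vandermonde a).det := by
  set P : Fin (d+1) → ℤ_[p][X] := fun j => ∏ l ∈ range j.val, (X - C (l : ℤ_[p])) with hP
  have h_monic : ∀ j, (P j).Monic := fun j =>
    monic_prod_of_monic _ _ fun l _ => monic_X_sub_C _
  have h_deg : ∀ j, (P j).natDegree = j.val := fun j => by
    rw [hP, natDegree_prod_of_monic _ _ fun l _ => monic_X_sub_C _]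
    simp only [natDegree_X_sub_C]
    simp
  rw [Matrix.det_eval_matrixOfPolynomials_eq_det_vandermonde a P h_deg h_monic,
    Matrix.det_apply]
  refine Finset.dvd_sum fun σ _ => ?_
  rw [Units.smul_def, zsmul_eq_mul]
  refine Dvd.dvd.mul_left ?_ _
  have : (∏ k ∈ range (d+1), (Nat.factorial k : ℤ_[p]))
      = ∏ i : Fin (d+1), ((i.val).factorial : ℤ_[p]) := by
    rw [Fin.prod_univ_eq_prod_range (fun k => ((Nat.factorial k : ℤ_[p])))]
  rw [this]
  refine Finset.prod_dvd_prod_of_dvd _ _ fun i _ => ?_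
  have : (Matrix.of fun i j => (P j).eval (a i)) (σ i) i
      = ∏ l ∈ range i.val, (a (σ i) - l) := by
    simp [hP, eval_prod]
  rw [this]
  exact PadicInt.factorial_dvd_prod_sub _ _

theorem superfact_dvd_filter_prod {p : ℕ} [hp : Fact p.Prime] (d : ℕ)
    (a : Fin (d + 1) → ℤ_[p]) :
    (∏ k ∈ range (d + 1), (Nat.factorial k : ℤ_[p])) ∣
      ∏ ij ∈ Finset.univ.filter (fun ij : Fin (d + 1) × Fin (d + 1) => ij.1 < ij.2),
        (a ij.1 - a ij.2) := by
  have h1 : (∏ ij ∈ Finset.univ.filter (fun ij : Fin (d + 1) × Fin (d + 1) => ij.1 < ij.2),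
        (a ij.1 - a ij.2))
      = ∏ i : Fin (d + 1), ∏ j ∈ Ioi i, (a i - a j) := by
    rw [Finset.prod_filter, Fintype.prod_prod_type]
    refine Finset.prod_congr rfl fun i _ => ?_
    have : Finset.Ioi i = Finset.univ.filter (fun j => i < j) := by ext; simp
    rw [this, ← Finset.prod_filter]
  have h2 : (∏ i : Fin (d + 1), ∏ j ∈ Ioi i, (a i - a j))
      = (∏ i : Fin (d + 1), (-1 : ℤ_[p]) ^ (Ioi i).card) * (Matrix.vandermonde a).det := by
    rw [Matrix.det_vandermonde, ← Finset.prod_mul_distrib]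
    refine Finset.prod_congr rfl fun i _ => ?_
    calc ∏ j ∈ Ioi i, (a i - a j) = ∏ j ∈ Ioi i, (-1 : ℤ_[p]) * (a j - a i) := by
          refine Finset.prod_congr rfl fun j _ => by ring
      _ = (-1 : ℤ_[p]) ^ (Ioi i).card * ∏ j ∈ Ioi i, (a j - a i) := by
          rw [Finset.prod_mul_distrib, Finset.prod_const]
  rw [h1, h2]
  exact Dvd.dvd.mul_left (superfact_dvd_vandermonde d a) _

theorem PadicInt.valuation_le_of_dvd' {p : ℕ} [hp : Fact p.Prime] {x y : ℤ_[p]} (hx : x ≠ 0)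
    (hy : y ≠ 0) (h : x ∣ y) : x.valuation ≤ y.valuation := by
  obtain ⟨c, rfl⟩ := h
  have hnorm : ‖x * c‖ ≤ ‖x‖ := by
    rw [norm_mul]
    exact mul_le_of_le_one_right (norm_nonneg _) (PadicInt.norm_le_one c)
  rw [PadicInt.norm_eq_zpow_neg_valuation hx, PadicInt.norm_eq_zpow_neg_valuation hy] at hnorm
  have hp1 : (1 : ℝ) < p := by exact_mod_cast hp.out.one_lt
  have := (zpow_le_zpow_iff_right₀ hp1).1 hnorm
  linarith

open scoped Classical in
/-- The `p`-adic valuation on `ℤ_p` with values in `ℤ ∪ {+∞}` (with `val(0) = +∞`). -/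
noncomputable def padicIntValWithTop (p : ℕ) [Fact p.Prime] (x : ℤ_[p]) : WithTop ℤ :=
  if x = 0 then ⊤ else (x.valuation : WithTop ℤ)

/-- For `a_0, …, a_d ∈ ℤ_p`,
`val_p(∏_{i<j} (a_i − a_j)) ≥ val_p(1!·2!⋯d!)` in `ℤ ∪ {+∞}`. -/
theorem stmt15 {p : ℕ} [Fact p.Prime] (d : ℕ) (a : Fin (d + 1) → ℤ_[p]) :
    padicIntValWithTop p (∏ k ∈ Finset.range (d + 1), (Nat.factorial k : ℤ_[p]))
      ≤ padicIntValWithTop p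
          (∏ ij ∈ Finset.univ.filter (fun ij : Fin (d + 1) × Fin (d + 1) => ij.1 < ij.2),
            (a ij.1 - a ij.2)) := by
  set F := ∏ k ∈ Finset.range (d + 1), (Nat.factorial k : ℤ_[p]) with hF
  set V := ∏ ij ∈ Finset.univ.filter (fun ij : Fin (d + 1) × Fin (d + 1) => ij.1 < ij.2),
      (a ij.1 - a ij.2) with hV
  have hF0 : F ≠ 0 := by
    rw [hF]
    exact Finset.prod_ne_zero_iff.2 fun k _ => by
      exact_mod_cast Nat.cast_ne_zero.2 (Nat.factorial_ne_zero k)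
  by_cases hV0 : V = 0
  · simp only [padicIntValWithTop]
    rw [if_pos hV0]
    exact le_top
  · simp only [padicIntValWithTop]
    rw [if_neg hF0, if_neg hV0]
    exact_mod_cast PadicInt.valuation_le_of_dvd' hF0 hV0 (superfact_dvd_filter_prod d a)
end

section
/- Let E and F be finite-dimensional ℚ_p-vector spaces with ultrametric norms. Let f : B_E(1) → F be a function, df : B_E(1) → 𝓛(E,F) a map to continuous linear maps, and C > 0 a constant such that for all x, y ∈ B_E(1): ‖f(y) − f(x) − df_x(y−x)‖_F ≤ C·‖y−x‖_E² and ‖df_y − df_x‖_{𝓛(E,F)} ≤ C·‖y−x‖_E. Let v ∈ B_E(1) be such that df_v is invertible and ‖f(v)‖_F · ‖df_v^{−1}‖_{𝓛(F,E)}² < C^{−1} ≤ ‖df_v^{−1}‖_{𝓛(F,E)}. Set r = (C·‖df_v^{−1}‖_{𝓛(F,E)})^{−1} and let V = {x ∈ E : ‖x − v‖_E < r}. Then for every x ∈ V: (1) df_x is invertible and ‖df_x^{−1}‖_{𝓛(F,E)} = ‖df_v^{−1}‖_{𝓛(F,E)}; (2) the Newton iterate 𝓝(x) = x − df_x^{−1}(f(x))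 lies in V; and (3) ‖f(𝓝(x))‖_F ≤ C·‖df_v^{−1}‖_{𝓛(F,E)}²·‖f(x)‖_F². -/
/-!
Write `K = ‖df_v⁻¹‖` and `r = (C K)⁻¹`. For `x ∈ V` the Lipschitz bound on `df` gives
`K ‖df_x - df_v‖ < 1`, so `df_x = df_v ∘ (df_v⁻¹ ∘ df_x)` is invertible by the Neumann series.
In an ultrametric space the decomposition `z = T₀ (A z) - T₀ ((A - A₀) z)` forces
`‖z‖ ≤ ‖T₀‖ ‖A z‖` whenever `‖T₀‖ ‖A - A₀‖ < 1`, so a small perturbation cannot increase the norm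
of the inverse, and by symmetry it cannot decrease it either. Then
`𝓝(x) - v = S (f v - f x - df_x (v - x)) - S (f v)` with `‖S‖ = K` puts `𝓝(x)` in `V`, and the
Taylor bound at `x` in direction `𝓝(x) - x = -S (f x)` is exactly the quadratic estimate, since
its linear term cancels `f x`.
-/

open ContinuousLinearMap IsUltrametricDist

section Perturbation

variable {𝕜 E F : Type*} [NontriviallyNormedField 𝕜]
  [NormedAddCommGroup E] [NormedSpace 𝕜 E] [NormedAddCommGroup F] [NormedSpace 𝕜 F]

theorem IsUltrametricDist.norm_sub_le_max [IsUltrametricDist E] (x y : E) :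
    ‖x - y‖ ≤ max ‖x‖ ‖y‖ := by
  simpa [sub_eq_add_neg] using norm_add_le_max x (-y)

theorem ContinuousLinearMap.exists_inverse_of_norm_mul_norm_sub_lt_one [CompleteSpace E]
    {A A₀ : E →L[𝕜] F} {T₀ : F →L[𝕜] E} (hl : T₀ ∘L A₀ = .id 𝕜 E) (hr : A₀ ∘L T₀ = .id 𝕜 F)
    (h : ‖T₀‖ * ‖A - A₀‖ < 1) : ∃ T : F →L[𝕜] E, T ∘L A = .id 𝕜 E ∧ A ∘L T = .id 𝕜 F := by
  have hsmall : ‖T₀ ∘L (A₀ - A)‖ < 1 :=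
    (opNorm_comp_le _ _).trans_lt (by rwa [norm_sub_rev])
  obtain ⟨U, hU⟩ := isUnit_one_sub_of_norm_lt_one hsmall
  have hUA : (U : E →L[𝕜] E) = T₀ ∘L A := by
    rw [hU, comp_sub, hl, one_def, sub_sub_cancel]
  have hAU : A = A₀ ∘L (U : E →L[𝕜] E) := by
    rw [hUA, ← comp_assoc, hr, id_comp]
  refine ⟨(↑U⁻¹ : E →L[𝕜] E) ∘L T₀, ?_, ?_⟩
  · rw [comp_assoc, ← hUA, ← mul_def, U.inv_mul, one_def]
  · rw [hAU, comp_assoc, ← comp_assoc _ _ T₀, ← mul_def, U.mul_inv, one_def, id_comp, hr]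

section Ultrametric

variable [IsUltrametricDist E]

theorem ContinuousLinearMap.norm_le_mul_norm_apply_of_norm_mul_norm_sub_lt_one
    {A A₀ : E →L[𝕜] F} {T₀ : F →L[𝕜] E} (hl : T₀ ∘L A₀ = .id 𝕜 E)
    (h : ‖T₀‖ * ‖A - A₀‖ < 1) (z : E) : ‖z‖ ≤ ‖T₀‖ * ‖A z‖ := by
  by_contra! hz
  have hz0 : 0 < ‖z‖ := (by positivity : 0 ≤ ‖T₀‖ * ‖A z‖).trans_lt hz
  have hdecomp : z = T₀ (A z) - T₀ ((A - A₀) z) := by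
    simpa using congr($hl z).symm
  have hsmall : ‖T₀ ((A - A₀) z)‖ < ‖z‖ :=
    calc ‖T₀ ((A - A₀) z)‖ ≤ ‖T₀‖ * (‖A - A₀‖ * ‖z‖) :=
          (T₀.le_opNorm _).trans (by gcongr; exact (A - A₀).le_opNorm z)
      _ = (‖T₀‖ * ‖A - A₀‖) * ‖z‖ := by ring
      _ < ‖z‖ := mul_lt_of_lt_one_left hz0 h
  have hmax : ‖z‖ ≤ max ‖T₀ (A z)‖ ‖T₀ ((A - A₀) z)‖ := by
    conv_lhs => rw [hdecomp]
    exact norm_sub_le_max _ _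
  exact hmax.not_gt (max_lt ((T₀.le_opNorm _).trans_lt hz) hsmall)

theorem ContinuousLinearMap.opNorm_le_of_norm_mul_norm_sub_lt_one
    {A A₀ : E →L[𝕜] F} {T T₀ : F →L[𝕜] E} (hl : T₀ ∘L A₀ = .id 𝕜 E) (hAT : A ∘L T = .id 𝕜 F)
    (h : ‖T₀‖ * ‖A - A₀‖ < 1) : ‖T‖ ≤ ‖T₀‖ :=
  opNorm_le_bound _ (norm_nonneg _) fun y => by
    simpa [← comp_apply, hAT] using norm_le_mul_norm_apply_of_norm_mul_norm_sub_lt_one hl h (T y)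

theorem ContinuousLinearMap.opNorm_eq_of_norm_mul_norm_sub_lt_one
    {A A₀ : E →L[𝕜] F} {T T₀ : F →L[𝕜] E} (hl : T₀ ∘L A₀ = .id 𝕜 E) (hr : A₀ ∘L T₀ = .id 𝕜 F)
    (hTA : T ∘L A = .id 𝕜 E) (hAT : A ∘L T = .id 𝕜 F) (h : ‖T₀‖ * ‖A - A₀‖ < 1) :
    ‖T‖ = ‖T₀‖ := by
  have hle := opNorm_le_of_norm_mul_norm_sub_lt_one hl hAT h
  refine hle.antisymm (opNorm_le_of_norm_mul_norm_sub_lt_one hTA hr ?_)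
  rw [norm_sub_rev]
  exact (mul_le_mul_of_nonneg_right hle (norm_nonneg _)).trans_lt h

theorem IsUltrametricDist.norm_le_of_norm_sub_le {x v : E} {R : ℝ} (hxv : ‖x - v‖ ≤ R)
    (hv : ‖v‖ ≤ R) : ‖x‖ ≤ R := by
  simpa using (norm_add_le_max (x - v) v).trans (max_le hxv hv)

theorem norm_newton_sub_le {f : E → F} {A : E →L[𝕜] F} {S : F →L[𝕜] E} {x v : E} {C : ℝ}
    (hS : S ∘L A = .id 𝕜 E) (hf : ‖f v - f x - A (v - x)‖ ≤ C * ‖v - x‖ ^ 2) :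
    ‖x - S (f x) - v‖ ≤ ‖S‖ * max (C * ‖x - v‖ ^ 2) ‖f v‖ := by
  have hdecomp : x - S (f x) - v = S (f v - f x - A (v - x)) - S (f v) := by
    have := congr($hS (v - x))
    simp only [comp_apply, id_apply] at this
    rw [map_sub, map_sub, this]
    abel
  rw [norm_sub_rev v x] at hf
  rw [hdecomp, mul_max_of_nonneg _ _ (norm_nonneg S)]
  exact (norm_sub_le_max _ _).trans (max_le_max ((S.le_opNorm _).trans (by gcongr))
    (S.le_opNorm _))

end Ultrametric

theorem norm_apply_newton_le {f : E → F} {A : E →L[𝕜] F} {S : F →L[𝕜] E} {x : E} {C : ℝ}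
    (hC : 0 ≤ C) (hS : A ∘L S = .id 𝕜 F)
    (hf : ‖f (x - S (f x)) - f x - A (x - S (f x) - x)‖ ≤ C * ‖x - S (f x) - x‖ ^ 2) :
    ‖f (x - S (f x))‖ ≤ C * ‖S‖ ^ 2 * ‖f x‖ ^ 2 := by
  have hlin : A (x - S (f x) - x) = -f x := by
    simpa using congr($hS (f x))
  rw [hlin, sub_neg_eq_add, sub_add_cancel, sub_sub_cancel_left, norm_neg] at hf
  calc ‖f (x - S (f x))‖ ≤ C * ‖S (f x)‖ ^ 2 := hf
    _ ≤ C * (‖S‖ * ‖f x‖) ^ 2 := by gcongr; exact S.le_opNorm _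
    _ = C * ‖S‖ ^ 2 * ‖f x‖ ^ 2 := by ring

end Perturbation

theorem stmt16_general {p : ℕ} [Fact p.Prime]
    {E F : Type*} [NormedAddCommGroup E] [NormedSpace ℚ_[p] E] [FiniteDimensional ℚ_[p] E]
    [NormedAddCommGroup F] [NormedSpace ℚ_[p] F]
    (hEult : ∀ x y : E, ‖x + y‖ ≤ max ‖x‖ ‖y‖)
    (f : E → F) (df : E → (E →L[ℚ_[p]] F)) (C : ℝ) (hC : 0 < C)
    (hf1 : ∀ x y : E, ‖x‖ ≤ 1 → ‖y‖ ≤ 1 → ‖f y - f x - df x (y - x)‖ ≤ C * ‖y - x‖ ^ 2)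
    (hf2 : ∀ x y : E, ‖x‖ ≤ 1 → ‖y‖ ≤ 1 → ‖df y - df x‖ ≤ C * ‖y - x‖)
    (v : E) (hv : ‖v‖ ≤ 1)
    (T₀ : F →L[ℚ_[p]] E)
    (hT₀l : T₀.comp (df v) = ContinuousLinearMap.id ℚ_[p] E)
    (hT₀r : (df v).comp T₀ = ContinuousLinearMap.id ℚ_[p] F)
    (hmain : ‖f v‖ * ‖T₀‖ ^ 2 < C⁻¹) (hmain' : C⁻¹ ≤ ‖T₀‖) :
    ∀ x : E, ‖x - v‖ < (C * ‖T₀‖)⁻¹ →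
      (∃ T : F →L[ℚ_[p]] E, T.comp (df x) = ContinuousLinearMap.id ℚ_[p] E ∧
        (df x).comp T = ContinuousLinearMap.id ℚ_[p] F ∧ ‖T‖ = ‖T₀‖) ∧
      (∀ T : F →L[ℚ_[p]] E,
        T.comp (df x) = ContinuousLinearMap.id ℚ_[p] E →
        (df x).comp T = ContinuousLinearMap.id ℚ_[p] F →
        ‖x - T (f x) - v‖ < (C * ‖T₀‖)⁻¹ ∧
        ‖f (x - T (f x))‖ ≤ C * ‖T₀‖ ^ 2 * ‖f x‖ ^ 2) := by
  intro x hx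
  have := FiniteDimensional.complete ℚ_[p] E
  have : IsUltrametricDist E := isUltrametricDist_of_forall_norm_add_le_max_norm hEult
  have hK : 0 < ‖T₀‖ := (inv_pos.2 hC).trans_le hmain'
  have hr : (C * ‖T₀‖)⁻¹ ≤ 1 := inv_le_one_of_one_le₀ (by rwa [← inv_le_iff_one_le_mul₀' hC])
  have hx1 : ‖x‖ ≤ 1 := norm_le_of_norm_sub_le (hx.le.trans hr) hv
  have hclose : ‖T₀‖ * ‖df x - df v‖ < 1 :=
    calc ‖T₀‖ * ‖df x - df v‖ ≤ ‖T₀‖ * (C * ‖x - v‖) := by gcongr; exact hf2 v x hv hx1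
      _ < ‖T₀‖ * (C * (C * ‖T₀‖)⁻¹) := by gcongr
      _ = 1 := by field_simp
  have hnorm : ∀ T : F →L[ℚ_[p]] E, T ∘L df x = .id ℚ_[p] E → df x ∘L T = .id ℚ_[p] F →
      ‖T‖ = ‖T₀‖ := fun T hl hr => opNorm_eq_of_norm_mul_norm_sub_lt_one hT₀l hT₀r hl hr hclose
  obtain ⟨T, hTl, hTr⟩ := exists_inverse_of_norm_mul_norm_sub_lt_one hT₀l hT₀r hclose
  refine ⟨⟨T, hTl, hTr, hnorm T hTl hTr⟩, fun S hSl hSr => ?_⟩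
  have hNv : ‖x - S (f x) - v‖ < (C * ‖T₀‖)⁻¹ := by
    refine (norm_newton_sub_le hSl (hf1 x v hx1 hv)).trans_lt ?_
    rw [hnorm S hSl hSr, mul_max_of_nonneg _ _ hK.le]
    refine max_lt ?_ ?_
    · calc ‖T₀‖ * (C * ‖x - v‖ ^ 2) < ‖T₀‖ * (C * (C * ‖T₀‖)⁻¹ ^ 2) := by gcongr
        _ = (C * ‖T₀‖)⁻¹ := by field_simp
    · rw [mul_inv, ← div_eq_mul_inv, lt_div_iff₀ hK]
      linarith
  have hN1 : ‖x - S (f x)‖ ≤ 1 := norm_le_of_norm_sub_le (hNv.le.trans hr) hv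
  refine ⟨hNv, ?_⟩
  simpa only [hnorm S hSl hSr] using norm_apply_newton_le hC.le hSr (hf1 x _ hx1 hN1)

/-- Newton iteration step lemma for functions of class `C²` on the unit ball of a
finite-dimensional ultrametric `ℚ_p`-vector space: on the ball `V` of centre `v` and
radius `r = (C‖df_v⁻¹‖)⁻¹`, the differential stays invertible with constant operator
norm, and the Newton iterate stays in `V` with quadratically small image. -/
theorem stmt16 {p : ℕ} [Fact p.Prime]
    {E F : Type*} [NormedAddCommGroup E] [NormedSpace ℚ_[p] E] [FiniteDimensional ℚ_[p] E]
    [NormedAddCommGroup F] [NormedSpace ℚ_[p] F] [FiniteDimensional ℚ_[p] F]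
    (hEult : ∀ x y : E, ‖x + y‖ ≤ max ‖x‖ ‖y‖)
    (hFult : ∀ x y : F, ‖x + y‖ ≤ max ‖x‖ ‖y‖)
    (hEhom : ∀ (c : ℚ_[p]) (x : E), ‖c • x‖ = ‖c‖ * ‖x‖)
    (hFhom : ∀ (c : ℚ_[p]) (x : F), ‖c • x‖ = ‖c‖ * ‖x‖)
    (f : E → F) (df : E → (E →L[ℚ_[p]] F)) (C : ℝ) (hC : 0 < C)
    (hf1 : ∀ x y : E, ‖x‖ ≤ 1 → ‖y‖ ≤ 1 → ‖f y - f x - df x (y - x)‖ ≤ C * ‖y - x‖ ^ 2)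
    (hf2 : ∀ x y : E, ‖x‖ ≤ 1 → ‖y‖ ≤ 1 → ‖df y - df x‖ ≤ C * ‖y - x‖)
    (v : E) (hv : ‖v‖ ≤ 1)
    (T₀ : F →L[ℚ_[p]] E)
    (hT₀l : T₀.comp (df v) = ContinuousLinearMap.id ℚ_[p] E)
    (hT₀r : (df v).comp T₀ = ContinuousLinearMap.id ℚ_[p] F)
    (hmain : ‖f v‖ * ‖T₀‖ ^ 2 < C⁻¹) (hmain' : C⁻¹ ≤ ‖T₀‖) :
    ∀ x : E, ‖x - v‖ < (C * ‖T₀‖)⁻¹ →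
      (∃ T : F →L[ℚ_[p]] E, T.comp (df x) = ContinuousLinearMap.id ℚ_[p] E ∧
        (df x).comp T = ContinuousLinearMap.id ℚ_[p] F ∧ ‖T‖ = ‖T₀‖) ∧
      (∀ T : F →L[ℚ_[p]] E,
        T.comp (df x) = ContinuousLinearMap.id ℚ_[p] E →
        (df x).comp T = ContinuousLinearMap.id ℚ_[p] F →
        ‖x - T (f x) - v‖ < (C * ‖T₀‖)⁻¹ ∧
        ‖f (x - T (f x))‖ ≤ C * ‖T₀‖ ^ 2 * ‖f x‖ ^ 2) :=
  stmt16_general hEult f df C hC hf1 hf2 v hv T₀ hT₀l hT₀r hmain hmain'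
end

section
/- (Hensel's Lemma for functions of class C².) Let E and F be finite-dimensional ℚ_p-vector spaces with ultrametric norms. Let f : B_E(1) → F, df : B_E(1) → 𝓛(E,F) and C > 0 satisfy, for all x, y ∈ B_E(1): ‖f(y) − f(x) − df_x(y−x)‖_F ≤ C·‖y−x‖_E² and ‖df_y − df_x‖_{𝓛(E,F)} ≤ C·‖y−x‖_E. Let v ∈ B_E(1) be such that df_v is invertible and ‖f(v)‖_F·‖df_v^{−1}‖² < C^{−1} ≤ ‖df_v^{−1}‖, where ‖df_v^{−1}‖ = ‖df_v^{−1}‖_{𝓛(F,E)}. Set r = (C·‖df_v^{−1}‖)^{−1}, V = {x : ‖x−v‖_E < r}, and ρ = C·‖f(v)‖_F·‖df_v^{−1}‖². Then the sequence defined by x_0 = v and x_{i+1} = x_i − df_{x_i}^{−1}(f(x_i)) is well defined, stays in V, and converges to some x_∞ ∈ V with f(x_∞) = 0; the rate of convergence satisfies ‖x_i − x_∞‖_E ≤ r·ρ^{2^i} for all i; and x_∞ is the unique solution of f(x) = 0 in V. -/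
/-!
In an ultrametric space, perturbing an invertible operator `A` by less than `‖A⁻¹‖⁻¹` keeps it
invertible without increasing the norm of its inverse. Hence every `df x` with `x ∈ V` is invertible
with `‖df_x⁻¹‖ ≤ ‖df_v⁻¹‖`, and a Newton step squares the normalised residual `C‖df_v⁻¹‖²‖f x‖`
while moving by at most `r` times it, so the residual of `x_i` is at most `ρ^(2^i)`. The
ultrametric inequality turns these step lengths into the rate and keeps all iterates within `rρ`
of `v`. Two zeros `a, y` in `V` satisfy `‖y - a‖ ≤ C‖df_v⁻¹‖‖y - a‖²` with `C‖df_v⁻¹‖‖y - a‖ < 1`,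
which forces `y = a`.
-/

open Filter Topology Metric

section

variable {𝕜 E F : Type*} [NontriviallyNormedField 𝕜]
  [NormedAddCommGroup E] [NormedSpace 𝕜 E] [NormedAddCommGroup F] [NormedSpace 𝕜 F]
  {f : E → F} {df : E → E →L[𝕜] F} {C : ℝ}

theorem le_of_le_max_mul_of_lt_one {a k t : ℝ} (ha : 0 ≤ a) (hk : k < 1)
    (h : t ≤ max a (k * t)) : t ≤ a := by
  rcases le_max_iff.1 h with h | h
  · exact h
  · nlinarith

namespace ContinuousLinearMap

theorem IsInvertible.of_norm_inverse_mul_norm_sub_lt_one [CompleteSpace E] {A B : E →L[𝕜] F}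
    (hA : A.IsInvertible) (h : ‖A.inverse‖ * ‖B - A‖ < 1) : B.IsInvertible := by
  obtain ⟨e, rfl⟩ := hA
  rw [inverse_equiv] at h
  set N : E →L[𝕜] E := (e.symm : F →L[𝕜] E) ∘L (B - e)
  have hN : ‖-N‖ < 1 := (norm_neg N).trans_lt ((opNorm_comp_le _ _).trans_lt h)
  set u := Units.oneSub (-N) hN
  have hu : (u : E →L[𝕜] E).IsInvertible := ⟨ContinuousLinearEquiv.unitsEquiv 𝕜 E u, rfl⟩
  have hB : B = (e : E →L[𝕜] F) ∘L (u : E →L[𝕜] E) := by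
    ext x
    simp [u, N]
  exact hB ▸ (isInvertible_equiv (f := e)).comp hu

theorem norm_inverse_le_of_norm_inverse_mul_norm_sub_lt_one [IsUltrametricDist E]
    {A B : E →L[𝕜] F} (hA : A.IsInvertible) (hB : B.IsInvertible)
    (h : ‖A.inverse‖ * ‖B - A‖ < 1) : ‖B.inverse‖ ≤ ‖A.inverse‖ := by
  refine opNorm_le_bound _ (norm_nonneg _) fun y => ?_
  set x := B.inverse y
  have hy : y = B x := hB.inverse_apply_eq.1 rfl
  have hx : x = A.inverse y - A.inverse ((B - A) x) := by
    rw [← map_sub, hy, sub_apply, sub_sub_cancel, eq_comm, hA.inverse_apply_eq]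
  -- `x = A⁻¹ y - A⁻¹ (B - A) x`, and the second term is shorter than `x` unless `x = 0`.
  refine le_of_le_max_mul_of_lt_one (by positivity) h ?_
  calc ‖x‖ = ‖A.inverse y + -A.inverse ((B - A) x)‖ := by rw [← sub_eq_add_neg, ← hx]
    _ ≤ max ‖A.inverse y‖ ‖A.inverse ((B - A) x)‖ := by
        simpa only [norm_neg] using
          IsUltrametricDist.norm_add_le_max (A.inverse y) (-A.inverse ((B - A) x))
    _ ≤ max (‖A.inverse‖ * ‖y‖) (‖A.inverse‖ * ‖B - A‖ * ‖x‖) := by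
        gcongr
        · exact le_opNorm _ _
        · exact (le_opNorm _ _).trans (by rw [mul_assoc]; gcongr; exact le_opNorm _ _)

end ContinuousLinearMap

section Ultra

variable [IsUltrametricDist E]

theorem IsUltrametricDist.norm_sub_le_max_norm_sub (a b c : E) :
    ‖a - c‖ ≤ max ‖a - b‖ ‖b - c‖ := by
  simpa only [dist_eq_norm] using dist_triangle_max a b c

theorem IsUltrametricDist.norm_sub_le_of_norm_succ_sub_le {x : ℕ → E} {ε : ℕ → ℝ}
    (hε : Antitone ε) (hx : ∀ i, ‖x (i + 1) - x i‖ ≤ ε i) {i j : ℕ} (hij : i ≤ j) :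
    ‖x j - x i‖ ≤ ε i := by
  induction j, hij using Nat.le_induction with
  | base => simpa using (norm_nonneg _).trans (hx i)
  | succ j hij ih =>
    exact (norm_sub_le_max_norm_sub _ (x j) _).trans (max_le ((hx j).trans (hε hij)) ih)

theorem IsUltrametricDist.exists_tendsto_of_norm_succ_sub_le [CompleteSpace E] {x : ℕ → E}
    {ε : ℕ → ℝ} (hε : Antitone ε) (hε₀ : Tendsto ε atTop (𝓝 0))
    (hx : ∀ i, ‖x (i + 1) - x i‖ ≤ ε i) :
    ∃ a, Tendsto x atTop (𝓝 a) ∧ ∀ i, ‖x i - a‖ ≤ ε i := by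
  have hbound := fun {i j} => norm_sub_le_of_norm_succ_sub_le hε hx (i := i) (j := j)
  have hcauchy : CauchySeq x := by
    refine cauchySeq_of_le_tendsto_0 ε (fun n m N hn hm => ?_) hε₀
    refine (dist_triangle_max _ (x N) _).trans (max_le ?_ ?_)
    · rw [dist_eq_norm]; exact hbound hn
    · rw [dist_comm, dist_eq_norm]; exact hbound hm
  obtain ⟨a, ha⟩ := cauchySeq_tendsto_of_complete hcauchy
  refine ⟨a, ha, fun i => le_of_tendsto ((ha.const_sub (x i)).norm) ?_⟩
  filter_upwards [eventually_ge_atTop i] with j hj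
  rw [norm_sub_rev]
  exact hbound hj

end Ultra

theorem continuousWithinAt_of_norm_sub_sub_le
    (hf : ∀ x y : E, ‖x‖ ≤ 1 → ‖y‖ ≤ 1 → ‖f y - f x - df x (y - x)‖ ≤ C * ‖y - x‖ ^ 2)
    {a : E} (ha : ‖a‖ ≤ 1) : ContinuousWithinAt f (closedBall 0 1) a := by
  rw [ContinuousWithinAt, tendsto_iff_norm_sub_tendsto_zero]
  have hbound : Tendsto (fun y => C * ‖y - a‖ ^ 2 + ‖df a‖ * ‖y - a‖)
      (𝓝[closedBall 0 1] a) (𝓝 0) := by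
    have : Continuous fun y => C * ‖y - a‖ ^ 2 + ‖df a‖ * ‖y - a‖ := by fun_prop
    simpa using (this.tendsto a).mono_left nhdsWithin_le_nhds
  refine squeeze_zero' (Eventually.of_forall fun _ => norm_nonneg _) ?_ hbound
  filter_upwards [self_mem_nhdsWithin] with y hy
  calc ‖f y - f a‖ = ‖(f y - f a - df a (y - a)) + df a (y - a)‖ := by rw [sub_add_cancel]
    _ ≤ ‖f y - f a - df a (y - a)‖ + ‖df a (y - a)‖ := norm_add_le _ _
    _ ≤ C * ‖y - a‖ ^ 2 + ‖df a‖ * ‖y - a‖ :=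
        add_le_add (hf a y ha (by simpa using hy)) ((df a).le_opNorm _)

theorem apply_eq_zero_of_tendsto
    (hf : ∀ x y : E, ‖x‖ ≤ 1 → ‖y‖ ≤ 1 → ‖f y - f x - df x (y - x)‖ ≤ C * ‖y - x‖ ^ 2)
    {x : ℕ → E} {a : E} (hx : Tendsto x atTop (𝓝 a)) (hx₁ : ∀ i, ‖x i‖ ≤ 1) (ha : ‖a‖ ≤ 1)
    (hfx : ∀ i, ‖f (x (i + 1))‖ ≤ C * ‖x (i + 1) - x i‖ ^ 2) : f a = 0 := by
  have hx' : Tendsto (fun i => x (i + 1)) atTop (𝓝 a) := hx.comp (tendsto_add_atTop_nat 1)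
  have hlim : Tendsto (fun i => f (x (i + 1))) atTop (𝓝 (f a)) :=
    (continuousWithinAt_of_norm_sub_sub_le hf ha).tendsto.comp
      (tendsto_nhdsWithin_iff.2 ⟨hx', Eventually.of_forall fun i => by simpa using hx₁ (i + 1)⟩)
  have hstep : Tendsto (fun i => C * ‖x (i + 1) - x i‖ ^ 2) atTop (𝓝 0) := by
    simpa using (((hx'.sub hx).norm.pow 2).const_mul C)
  exact tendsto_nhds_unique hlim (squeeze_zero_norm hfx hstep)

theorem eq_of_apply_eq_of_isInvertible
    (hf : ∀ x y : E, ‖x‖ ≤ 1 → ‖y‖ ≤ 1 → ‖f y - f x - df x (y - x)‖ ≤ C * ‖y - x‖ ^ 2)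
    {a y : E} (ha : ‖a‖ ≤ 1) (hy : ‖y‖ ≤ 1) (hinv : (df a).IsInvertible) (hfy : f y = f a)
    (hya : C * ‖(df a).inverse‖ * ‖y - a‖ < 1) : y = a := by
  have hdf : ‖df a (y - a)‖ ≤ C * ‖y - a‖ ^ 2 := by
    simpa only [hfy, sub_self, zero_sub, norm_neg] using hf a y ha hy
  have hle : ‖y - a‖ ≤ ‖(df a).inverse‖ * (C * ‖y - a‖ ^ 2) :=
    calc ‖y - a‖ = ‖(df a).inverse (df a (y - a))‖ := by rw [hinv.inverse_apply_self]
      _ ≤ ‖(df a).inverse‖ * ‖df a (y - a)‖ := (df a).inverse.le_opNorm _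
      _ ≤ ‖(df a).inverse‖ * (C * ‖y - a‖ ^ 2) := by gcongr
  have : ‖y - a‖ = 0 := by nlinarith [norm_nonneg (y - a)]
  exact sub_eq_zero.1 (norm_eq_zero.1 this)

/-- `ContinuousLinearMap.inverse` is `0` at non-invertible maps, where this map is the identity. -/
noncomputable def newtonMap (f : E → F) (df : E → E →L[𝕜] F) (x : E) : E :=
  x - (df x).inverse (f x)

theorem norm_newtonMap_sub_le (x : E) :
    ‖newtonMap f df x - x‖ ≤ ‖(df x).inverse‖ * ‖f x‖ := by
  simpa [newtonMap] using (df x).inverse.le_opNorm (f x)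

theorem norm_apply_newtonMap_le
    (hf : ∀ x y : E, ‖x‖ ≤ 1 → ‖y‖ ≤ 1 → ‖f y - f x - df x (y - x)‖ ≤ C * ‖y - x‖ ^ 2)
    {x : E} (hinv : (df x).IsInvertible) (hx : ‖x‖ ≤ 1) (hx' : ‖newtonMap f df x‖ ≤ 1) :
    ‖f (newtonMap f df x)‖ ≤ C * ‖newtonMap f df x - x‖ ^ 2 := by
  have hdf : df x (newtonMap f df x - x) = -f x := by simp [newtonMap, hinv.self_apply_inverse]
  simpa [hdf] using hf x _ hx hx'

section Hensel

variable [CompleteSpace E] [IsUltrametricDist E] {v : E} {M : ℝ}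

theorem isInvertible_of_norm_sub_lt
    (hf : ∀ x y : E, ‖x‖ ≤ 1 → ‖y‖ ≤ 1 → ‖df y - df x‖ ≤ C * ‖y - x‖)
    (hv : ‖v‖ ≤ 1) (hdfv : (df v).IsInvertible) (hM : ‖(df v).inverse‖ ≤ M) (hC : 0 < C)
    (hCM : C⁻¹ ≤ M) {x : E} (hx : ‖x - v‖ < (C * M)⁻¹) :
    ‖x‖ ≤ 1 ∧ (df x).IsInvertible ∧ ‖(df x).inverse‖ ≤ M := by
  have hCM₁ : 1 ≤ C * M := (inv_le_iff_one_le_mul₀' hC).1 hCM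
  have hx₁ : ‖x‖ ≤ 1 := by
    simpa using (IsUltrametricDist.norm_add_le_max (x - v) v).trans
      (max_le (hx.le.trans (inv_le_one_of_one_le₀ hCM₁)) hv)
  have hsmall : ‖(df v).inverse‖ * ‖df x - df v‖ < 1 :=
    calc ‖(df v).inverse‖ * ‖df x - df v‖ ≤ M * (C * ‖x - v‖) := by
          gcongr
          · exact (norm_nonneg _).trans hM
          · exact hf v x hv hx₁
      _ < C * M * (C * M)⁻¹ := by rw [mul_left_comm, ← mul_assoc]; gcongr
      _ = 1 := mul_inv_cancel₀ (zero_lt_one.trans_le hCM₁).ne'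
  have hinv := hdfv.of_norm_inverse_mul_norm_sub_lt_one hsmall
  exact ⟨hx₁, hinv, (ContinuousLinearMap.norm_inverse_le_of_norm_inverse_mul_norm_sub_lt_one
    hdfv hinv hsmall).trans hM⟩

theorem newtonMap_step_bounds
    (hf₁ : ∀ x y : E, ‖x‖ ≤ 1 → ‖y‖ ≤ 1 → ‖f y - f x - df x (y - x)‖ ≤ C * ‖y - x‖ ^ 2)
    (hf₂ : ∀ x y : E, ‖x‖ ≤ 1 → ‖y‖ ≤ 1 → ‖df y - df x‖ ≤ C * ‖y - x‖)
    (hv : ‖v‖ ≤ 1) (hdfv : (df v).IsInvertible) (hM : ‖(df v).inverse‖ ≤ M) (hC : 0 < C)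
    (hCM : C⁻¹ ≤ M) {ρ s : ℝ} (hρ : ρ < 1) (hsρ : s ≤ ρ) {x : E}
    (hx : ‖x - v‖ ≤ (C * M)⁻¹ * ρ) (hfx : M * ‖f x‖ ≤ (C * M)⁻¹ * s) :
    ‖newtonMap f df x - x‖ ≤ (C * M)⁻¹ * s ∧ ‖newtonMap f df x - v‖ ≤ (C * M)⁻¹ * ρ ∧
      M * ‖f (newtonMap f df x)‖ ≤ (C * M)⁻¹ * s ^ 2 := by
  have hM₀ : 0 < M := (inv_pos.2 hC).trans_le hCM
  set r := (C * M)⁻¹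
  have hrρ : r * ρ < r := mul_lt_of_lt_one_right (by positivity) hρ
  obtain ⟨hx₁, hinv, hinvM⟩ :=
    isInvertible_of_norm_sub_lt hf₂ hv hdfv hM hC hCM (hx.trans_lt hrρ)
  have hstep : ‖newtonMap f df x - x‖ ≤ r * s :=
    (norm_newtonMap_sub_le x).trans ((mul_le_mul_of_nonneg_right hinvM (norm_nonneg _)).trans hfx)
  have hx'v : ‖newtonMap f df x - v‖ ≤ r * ρ :=
    (IsUltrametricDist.norm_sub_le_max_norm_sub _ x _).trans
      (max_le (hstep.trans (by gcongr)) hx)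
  have hx'₁ := (isInvertible_of_norm_sub_lt hf₂ hv hdfv hM hC hCM (hx'v.trans_lt hrρ)).1
  refine ⟨hstep, hx'v, ?_⟩
  calc M * ‖f (newtonMap f df x)‖ ≤ M * (C * ‖newtonMap f df x - x‖ ^ 2) := by
        gcongr; exact norm_apply_newtonMap_le hf₁ hinv hx₁ hx'₁
    _ ≤ M * (C * (r * s) ^ 2) := by gcongr
    _ = r * s ^ 2 := by simp only [r]; field_simp

theorem newtonMap_iterate_invariant
    (hf₁ : ∀ x y : E, ‖x‖ ≤ 1 → ‖y‖ ≤ 1 → ‖f y - f x - df x (y - x)‖ ≤ C * ‖y - x‖ ^ 2)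
    (hf₂ : ∀ x y : E, ‖x‖ ≤ 1 → ‖y‖ ≤ 1 → ‖df y - df x‖ ≤ C * ‖y - x‖)
    (hv : ‖v‖ ≤ 1) (hdfv : (df v).IsInvertible) (hM : ‖(df v).inverse‖ ≤ M) (hC : 0 < C)
    (hCM : C⁻¹ ≤ M) (hρ : C * ‖f v‖ * M ^ 2 < 1) (i : ℕ) :
    ‖(newtonMap f df)^[i] v - v‖ ≤ (C * M)⁻¹ * (C * ‖f v‖ * M ^ 2) ∧
      M * ‖f ((newtonMap f df)^[i] v)‖ ≤ (C * M)⁻¹ * (C * ‖f v‖ * M ^ 2) ^ 2 ^ i := by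
  have hM₀ : 0 < M := (inv_pos.2 hC).trans_le hCM
  induction i with
  | zero =>
    refine ⟨by simp; positivity, le_of_eq ?_⟩
    simp only [Function.iterate_zero_apply, pow_zero, pow_one]
    field_simp
  | succ i ih =>
    have hpow : (C * ‖f v‖ * M ^ 2) ^ 2 ^ i ≤ C * ‖f v‖ * M ^ 2 :=
      pow_le_of_le_one (by positivity) hρ.le (by positivity)
    obtain ⟨-, hv', hf'⟩ := newtonMap_step_bounds hf₁ hf₂ hv hdfv hM hC hCM hρ hpow ih.1 ih.2
    rw [Function.iterate_succ_apply', pow_succ 2 i, pow_mul]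
    exact ⟨hv', hf'⟩

theorem norm_newtonMap_iterate_succ_sub_le
    (hf₁ : ∀ x y : E, ‖x‖ ≤ 1 → ‖y‖ ≤ 1 → ‖f y - f x - df x (y - x)‖ ≤ C * ‖y - x‖ ^ 2)
    (hf₂ : ∀ x y : E, ‖x‖ ≤ 1 → ‖y‖ ≤ 1 → ‖df y - df x‖ ≤ C * ‖y - x‖)
    (hv : ‖v‖ ≤ 1) (hdfv : (df v).IsInvertible) (hM : ‖(df v).inverse‖ ≤ M) (hC : 0 < C)
    (hCM : C⁻¹ ≤ M) (hρ : C * ‖f v‖ * M ^ 2 < 1) (i : ℕ) :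
    ‖(newtonMap f df)^[i + 1] v - (newtonMap f df)^[i] v‖ ≤
      (C * M)⁻¹ * (C * ‖f v‖ * M ^ 2) ^ 2 ^ i := by
  have hM₀ : 0 < M := (inv_pos.2 hC).trans_le hCM
  obtain ⟨hx, hfx⟩ := newtonMap_iterate_invariant hf₁ hf₂ hv hdfv hM hC hCM hρ i
  rw [Function.iterate_succ_apply']
  exact (newtonMap_step_bounds hf₁ hf₂ hv hdfv hM hC hCM hρ
    (pow_le_of_le_one (by positivity) hρ.le (by positivity)) hx hfx).1

theorem exists_tendsto_newtonMap_iterate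
    (hf₁ : ∀ x y : E, ‖x‖ ≤ 1 → ‖y‖ ≤ 1 → ‖f y - f x - df x (y - x)‖ ≤ C * ‖y - x‖ ^ 2)
    (hf₂ : ∀ x y : E, ‖x‖ ≤ 1 → ‖y‖ ≤ 1 → ‖df y - df x‖ ≤ C * ‖y - x‖)
    (hv : ‖v‖ ≤ 1) (hdfv : (df v).IsInvertible) (hM : ‖(df v).inverse‖ ≤ M) (hC : 0 < C)
    (hCM : C⁻¹ ≤ M) (hρ : C * ‖f v‖ * M ^ 2 < 1) :
    ∃ a, Tendsto (fun i => (newtonMap f df)^[i] v) atTop (𝓝 a) ∧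
      ∀ i, ‖(newtonMap f df)^[i] v - a‖ ≤ (C * M)⁻¹ * (C * ‖f v‖ * M ^ 2) ^ 2 ^ i := by
  have hM₀ : 0 < M := (inv_pos.2 hC).trans_le hCM
  have hρ₀ : 0 ≤ C * ‖f v‖ * M ^ 2 := by positivity
  refine IsUltrametricDist.exists_tendsto_of_norm_succ_sub_le (fun i j hij => ?_) ?_
    (norm_newtonMap_iterate_succ_sub_le hf₁ hf₂ hv hdfv hM hC hCM hρ)
  · exact mul_le_mul_of_nonneg_left
      (pow_le_pow_of_le_one hρ₀ hρ.le (Nat.pow_le_pow_right two_pos hij)) (by positivity)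
  · simpa using ((tendsto_pow_atTop_nhds_zero_of_lt_one hρ₀ hρ).comp
      (tendsto_pow_atTop_atTop_of_one_lt (α := ℕ) one_lt_two)).const_mul (C * M)⁻¹

theorem newton_hensel
    (hf₁ : ∀ x y : E, ‖x‖ ≤ 1 → ‖y‖ ≤ 1 → ‖f y - f x - df x (y - x)‖ ≤ C * ‖y - x‖ ^ 2)
    (hf₂ : ∀ x y : E, ‖x‖ ≤ 1 → ‖y‖ ≤ 1 → ‖df y - df x‖ ≤ C * ‖y - x‖)
    (hv : ‖v‖ ≤ 1) (hdfv : (df v).IsInvertible) (hM : ‖(df v).inverse‖ ≤ M) (hC : 0 < C)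
    (hCM : C⁻¹ ≤ M) (hρ : C * ‖f v‖ * M ^ 2 < 1) :
    (∀ i, ‖(newtonMap f df)^[i] v - v‖ < (C * M)⁻¹ ∧ (df ((newtonMap f df)^[i] v)).IsInvertible) ∧
    ∃ a, ‖a - v‖ < (C * M)⁻¹ ∧ Tendsto (fun i => (newtonMap f df)^[i] v) atTop (𝓝 a) ∧
      f a = 0 ∧ (∀ i, ‖(newtonMap f df)^[i] v - a‖ ≤ (C * M)⁻¹ * (C * ‖f v‖ * M ^ 2) ^ 2 ^ i) ∧
      ∀ y, ‖y - v‖ < (C * M)⁻¹ → f y = 0 → y = a := by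
  have hM₀ : 0 < M := (inv_pos.2 hC).trans_le hCM
  set x := fun i => (newtonMap f df)^[i] v
  set r := (C * M)⁻¹
  have hrρ : r * (C * ‖f v‖ * M ^ 2) < r := mul_lt_of_lt_one_right (by positivity) hρ
  have hball := fun {y} => isInvertible_of_norm_sub_lt (x := y) hf₂ hv hdfv hM hC hCM
  have hV : ∀ i, ‖x i - v‖ < r := fun i =>
    (newtonMap_iterate_invariant hf₁ hf₂ hv hdfv hM hC hCM hρ i).1.trans_lt hrρ
  obtain ⟨a, hxa, hrate⟩ := exists_tendsto_newtonMap_iterate hf₁ hf₂ hv hdfv hM hC hCM hρ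
  have hav : ‖a - v‖ < r := by
    have h₀ := hrate 0
    simp only [Function.iterate_zero_apply, pow_zero, pow_one] at h₀
    exact norm_sub_rev a v ▸ h₀.trans_lt hrρ
  obtain ⟨ha₁, hdfa, hdfaM⟩ := hball hav
  have hfa : f a = 0 := by
    refine apply_eq_zero_of_tendsto hf₁ hxa (fun i => (hball (hV i)).1) ha₁ fun i => ?_
    have hx₁ := (hball (hV (i + 1))).1
    simp only [x, Function.iterate_succ_apply'] at hx₁ ⊢
    exact norm_apply_newtonMap_le hf₁ (hball (hV i)).2.1 (hball (hV i)).1 hx₁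
  refine ⟨fun i => ⟨hV i, (hball (hV i)).2.1⟩, a, hav, hxa, hfa, hrate, fun y hy hfy => ?_⟩
  refine eq_of_apply_eq_of_isInvertible hf₁ ha₁ (hball hy).1 hdfa (hfy.trans hfa.symm) ?_
  have hya : ‖y - a‖ < r := (IsUltrametricDist.norm_sub_le_max_norm_sub y v a).trans_lt
    (max_lt hy (by rwa [norm_sub_rev]))
  calc C * ‖(df a).inverse‖ * ‖y - a‖ ≤ C * M * ‖y - a‖ := by gcongr
    _ < C * M * r := by gcongr
    _ = 1 := mul_inv_cancel₀ (by positivity)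

end Hensel

end

theorem stmt17_general {p : ℕ} [Fact p.Prime]
    {E F : Type*} [NormedAddCommGroup E] [NormedSpace ℚ_[p] E] [FiniteDimensional ℚ_[p] E]
    [NormedAddCommGroup F] [NormedSpace ℚ_[p] F]
    (hEult : ∀ x y : E, ‖x + y‖ ≤ max ‖x‖ ‖y‖)
    (f : E → F) (df : E → (E →L[ℚ_[p]] F)) (C : ℝ) (hC : 0 < C)
    (hf1 : ∀ x y : E, ‖x‖ ≤ 1 → ‖y‖ ≤ 1 → ‖f y - f x - df x (y - x)‖ ≤ C * ‖y - x‖ ^ 2)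
    (hf2 : ∀ x y : E, ‖x‖ ≤ 1 → ‖y‖ ≤ 1 → ‖df y - df x‖ ≤ C * ‖y - x‖)
    (v : E) (hv : ‖v‖ ≤ 1)
    (T₀ : F →L[ℚ_[p]] E)
    (hT₀l : T₀.comp (df v) = ContinuousLinearMap.id ℚ_[p] E)
    (hT₀r : (df v).comp T₀ = ContinuousLinearMap.id ℚ_[p] F)
    (hmain : ‖f v‖ * ‖T₀‖ ^ 2 < C⁻¹) (hmain' : C⁻¹ ≤ ‖T₀‖) :
    ∃ x : ℕ → E, x 0 = v ∧
      (∀ i, ‖x i - v‖ < (C * ‖T₀‖)⁻¹ ∧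
        ∃ T : F →L[ℚ_[p]] E,
          T.comp (df (x i)) = ContinuousLinearMap.id ℚ_[p] E ∧
          (df (x i)).comp T = ContinuousLinearMap.id ℚ_[p] F ∧
          x (i + 1) = x i - T (f (x i))) ∧
      ∃ xlim : E, ‖xlim - v‖ < (C * ‖T₀‖)⁻¹ ∧
        Filter.Tendsto x Filter.atTop (nhds xlim) ∧
        f xlim = 0 ∧
        (∀ i, ‖x i - xlim‖ ≤ (C * ‖T₀‖)⁻¹ * (C * ‖f v‖ * ‖T₀‖ ^ 2) ^ (2 ^ i)) ∧
        (∀ y : E, ‖y - v‖ < (C * ‖T₀‖)⁻¹ → f y = 0 → y = xlim) := by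
  have : CompleteSpace E := FiniteDimensional.complete ℚ_[p] E
  have : IsUltrametricDist E := .isUltrametricDist_of_forall_norm_add_le_max_norm hEult
  have hT₀ : (df v).inverse = T₀ := ContinuousLinearMap.inverse_eq hT₀r hT₀l
  have hρ : C * ‖f v‖ * ‖T₀‖ ^ 2 < 1 := by
    simpa [mul_assoc, hC.ne'] using mul_lt_mul_of_pos_left hmain hC
  obtain ⟨hx, a, ha⟩ :=
    newton_hensel hf1 hf2 hv (.of_inverse hT₀r hT₀l) (congrArg norm hT₀).le hC hmain' hρ
  exact ⟨fun i => (newtonMap f df)^[i] v, rfl, fun i => ⟨(hx i).1, (df _).inverse,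
    (hx i).2.inverse_comp_self, (hx i).2.self_comp_inverse, Function.iterate_succ_apply' ..⟩, a, ha⟩

/-- Hensel's Lemma for functions of class `C²`: under the quadratic estimates with
constant `C` and the hypotheses `‖f(v)‖·‖df_v⁻¹‖² < C⁻¹ ≤ ‖df_v⁻¹‖`, the Newton
sequence `x_0 = v`, `x_{i+1} = x_i − df_{x_i}⁻¹(f(x_i))` is well defined, stays in
the ball `V` of centre `v` and radius `r = (C‖df_v⁻¹‖)⁻¹`, converges to the unique
zero `x_∞` of `f` in `V`, with `‖x_i − x_∞‖ ≤ r·ρ^{2^i}` where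
`ρ = C·‖f(v)‖·‖df_v⁻¹‖²`. -/
theorem stmt17 {p : ℕ} [Fact p.Prime]
    {E F : Type*} [NormedAddCommGroup E] [NormedSpace ℚ_[p] E] [FiniteDimensional ℚ_[p] E]
    [NormedAddCommGroup F] [NormedSpace ℚ_[p] F] [FiniteDimensional ℚ_[p] F]
    (hEult : ∀ x y : E, ‖x + y‖ ≤ max ‖x‖ ‖y‖)
    (hFult : ∀ x y : F, ‖x + y‖ ≤ max ‖x‖ ‖y‖)
    (hEhom : ∀ (c : ℚ_[p]) (x : E), ‖c • x‖ = ‖c‖ * ‖x‖)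
    (hFhom : ∀ (c : ℚ_[p]) (x : F), ‖c • x‖ = ‖c‖ * ‖x‖)
    (f : E → F) (df : E → (E →L[ℚ_[p]] F)) (C : ℝ) (hC : 0 < C)
    (hf1 : ∀ x y : E, ‖x‖ ≤ 1 → ‖y‖ ≤ 1 → ‖f y - f x - df x (y - x)‖ ≤ C * ‖y - x‖ ^ 2)
    (hf2 : ∀ x y : E, ‖x‖ ≤ 1 → ‖y‖ ≤ 1 → ‖df y - df x‖ ≤ C * ‖y - x‖)
    (v : E) (hv : ‖v‖ ≤ 1)
    (T₀ : F →L[ℚ_[p]] E)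
    (hT₀l : T₀.comp (df v) = ContinuousLinearMap.id ℚ_[p] E)
    (hT₀r : (df v).comp T₀ = ContinuousLinearMap.id ℚ_[p] F)
    (hmain : ‖f v‖ * ‖T₀‖ ^ 2 < C⁻¹) (hmain' : C⁻¹ ≤ ‖T₀‖) :
    ∃ x : ℕ → E, x 0 = v ∧
      (∀ i, ‖x i - v‖ < (C * ‖T₀‖)⁻¹ ∧
        ∃ T : F →L[ℚ_[p]] E,
          T.comp (df (x i)) = ContinuousLinearMap.id ℚ_[p] E ∧
          (df (x i)).comp T = ContinuousLinearMap.id ℚ_[p] F ∧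
          x (i + 1) = x i - T (f (x i))) ∧
      ∃ xlim : E, ‖xlim - v‖ < (C * ‖T₀‖)⁻¹ ∧
        Filter.Tendsto x Filter.atTop (nhds xlim) ∧
        f xlim = 0 ∧
        (∀ i, ‖x i - xlim‖ ≤ (C * ‖T₀‖)⁻¹ * (C * ‖f v‖ * ‖T₀‖ ^ 2) ^ (2 ^ i)) ∧
        (∀ y : E, ‖y - v‖ < (C * ‖T₀‖)⁻¹ → f y = 0 → y = xlim) :=
  stmt17_general hEult f df C hC hf1 hf2 v hv T₀ hT₀l hT₀r hmain hmain'
end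

section
/- Let (u_n)_{n≥1} be a sequence of elements of ℤ_p such that u_1, u_2, u_3, u_4 are units of ℤ_p and u_n·u_{n+4} = u_{n+1}·u_{n+3} + u_{n+2}² for all n ≥ 1 (a Somos 4 sequence with invertible initial values). Then for every i ≥ 1, at most one of the four consecutive terms u_i, u_{i+1}, u_{i+2}, u_{i+3} is not invertible in ℤ_p. -/
/-!
`ℤ_[p]` is a local ring, so if `x + y` is a nonunit then `x` is a unit iff `y` is. When `u (i + 4)`
is a nonunit, the recurrence makes `u (i + 1) * u (i + 3) + u (i + 2) ^ 2` a nonunit, so the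
nonunits among `u (i + 1), u (i + 2), u (i + 3)` number zero or at least two. Hence a window of
four consecutive terms with at most one nonunit slides to the next such window.
-/

theorem IsLocalRing.isUnit_iff_isUnit_of_not_isUnit_add {R : Type*} [Ring R] [IsLocalRing R]
    {a b : R} (h : ¬IsUnit (a + b)) : IsUnit a ↔ IsUnit b := by
  have key : ∀ {x y : R}, ¬IsUnit (x + y) → IsUnit x → IsUnit y := fun {x y} hxy hx => by
    by_contra hy
    have : IsUnit ((x + y) + -y) := by simpa using hx
    exact (isUnit_or_isUnit_of_isUnit_add this).elim hxy (by rwa [IsUnit.neg_iff])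
  exact ⟨key h, key (by rwa [add_comm])⟩

theorem IsLocalRing.isUnit_iff_of_not_isUnit_mul_add_sq {R : Type*} [CommRing R] [IsLocalRing R]
    {b c d : R} (h : ¬IsUnit (b * d + c ^ 2)) : IsUnit c ↔ IsUnit b ∧ IsUnit d := by
  rw [← IsUnit.mul_iff, ← isUnit_pow_iff two_ne_zero, isUnit_iff_isUnit_of_not_isUnit_add h]

def somosNonunitWindow {R : Type*} [Monoid R] (u : ℕ → R) (i : ℕ) : Set ℕ :=
  {j | j ∈ Finset.Ico i (i + 4) ∧ ¬IsUnit (u j)}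

section
variable {R : Type*} [CommRing R] [IsLocalRing R] {u : ℕ → R}

theorem somosNonunitWindow_succ_subsingleton {i : ℕ} (hW : (somosNonunitWindow u i).Subsingleton)
    (hrec : u i * u (i + 4) = u (i + 1) * u (i + 3) + u (i + 2) ^ 2) :
    (somosNonunitWindow u (i + 1)).Subsingleton := by
  by_cases hlast : IsUnit (u (i + 4))
  · refine hW.anti fun j ⟨hj, hju⟩ => ⟨?_, hju⟩
    have hj4 : j ≠ i + 4 := by rintro rfl; exact hju hlast
    simp only [Finset.mem_Ico] at hj ⊢; omega
  · have hsum : ¬IsUnit (u (i + 1) * u (i + 3) + u (i + 2) ^ 2) :=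
      hrec ▸ fun h => hlast (isUnit_of_mul_isUnit_right h)
    have hiff := IsLocalRing.isUnit_iff_of_not_isUnit_mul_add_sq hsum
    have isUnit_of_ne : ∀ j k, j ∈ Finset.Ico i (i + 4) → k ∈ Finset.Ico i (i + 4) → j ≠ k →
        ¬IsUnit (u k) → IsUnit (u j) := fun j k hj hk hjk hk' =>
      not_not.1 fun hj' => hjk (hW ⟨hj, hj'⟩ ⟨hk, hk'⟩)
    have h2 : IsUnit (u (i + 2)) := by
      by_contra h2
      rcases not_and_or.1 (mt hiff.2 h2) with h1 | h3
      · exact h1 (isUnit_of_ne _ _ (by simp) (by simp) (by omega) h2)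
      · exact h3 (isUnit_of_ne _ _ (by simp) (by simp) (by omega) h2)
    obtain ⟨h1, h3⟩ := hiff.1 h2
    refine Set.subsingleton_of_subset_singleton (a := i + 4) fun j ⟨hj, hju⟩ => ?_
    simp only [Finset.mem_Ico] at hj
    obtain rfl | rfl | rfl | rfl : j = i + 1 ∨ j = i + 2 ∨ j = i + 3 ∨ j = i + 4 := by omega
    all_goals first | rfl | contradiction

theorem somosNonunitWindow_subsingleton {m : ℕ} (hm : (somosNonunitWindow u m).Subsingleton)
    (hrec : ∀ n, m ≤ n → u n * u (n + 4) = u (n + 1) * u (n + 3) + u (n + 2) ^ 2) :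
    ∀ i, m ≤ i → (somosNonunitWindow u i).Subsingleton := by
  intro i hi
  induction i, hi using Nat.le_induction with
  | base => exact hm
  | succ i hi ih => exact somosNonunitWindow_succ_subsingleton ih (hrec i hi)

end

/-- In a `p`-adic Somos 4 sequence with invertible initial values, at most one of any
four consecutive terms is not invertible in `ℤ_p`. -/
theorem stmt19 {p : ℕ} [Fact p.Prime] (u : ℕ → ℤ_[p])
    (h1 : IsUnit (u 1)) (h2 : IsUnit (u 2)) (h3 : IsUnit (u 3)) (h4 : IsUnit (u 4))
    (hrec : ∀ n, 1 ≤ n → u n * u (n + 4) = u (n + 1) * u (n + 3) + u (n + 2) ^ 2) :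
    ∀ i, 1 ≤ i → ∀ j k, j ∈ Finset.Ico i (i + 4) → k ∈ Finset.Ico i (i + 4) →
      ¬ IsUnit (u j) → ¬ IsUnit (u k) → j = k := by
  have hinit : somosNonunitWindow u 1 = ∅ := by
    refine Set.eq_empty_of_forall_notMem fun j ⟨hj, hju⟩ => hju ?_
    obtain rfl | rfl | rfl | rfl : j = 1 ∨ j = 2 ∨ j = 3 ∨ j = 4 := by
      simp only [Finset.mem_Ico] at hj; omega
    exacts [h1, h2, h3, h4]
  intro i hi j k hj hk hju hku
  exact somosNonunitWindow_subsingleton (hinit ▸ Set.subsingleton_empty) hrec i hi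
    ⟨hj, hju⟩ ⟨hk, hku⟩
end
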